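/- arXiv:2503.12371 — 6 statements merged into one kernel-verified Lean document; each statement's English description precedes it below -/
import Mathlib

section
/- Assume condition (h1) holds and that (h4) there exists C₂ > 0 with |E''(u)(u, u)| ≥ C₂ for all u ∈ 𝒩. Let u ∈ 𝒩 (so that s(u) = 1), let v ∈ H, and let ε > 0 be such that u + tv ∈ K for all t ∈ [0, ε]. Then the one-sided limit lim_{t→0⁺} (s(u + tv) − s(u))/t exists and equals −(E''(u)(u, v) + (E'(u), v)_H) / E''(u)(u, u). -/
open Filter Set
open scoped RealInnerProductSpace

set_option maxHeartbeats 2000000 in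
/-- One-sided differentiability of the Nehari projection map `s`
along admissible directions in the cone. -/
theorem nehari_s_right_derivative
    {H : Type*} [NormedAddCommGroup H] [InnerProductSpace ℝ H] [CompleteSpace H]
    (E : H → ℝ) (E' : H → H) (E'' : H → H → H → ℝ)
    (hE : ContDiff ℝ 2 E)
    (hgrad : ∀ u, HasGradientAt E (E' u) u)
    (hE'' : ∀ u z y, Tendsto (fun t : ℝ => (1 / t) * ⟪E' (u + t • y) - E' u, z⟫)
      (nhdsWithin 0 (Ioi 0)) (nhds (E'' u z y)))
    (K : Set H) (hKne : (K \ {0}).Nonempty) (hKclosed : IsClosed K)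
    (hKsmul : ∀ c : ℝ, 0 ≤ c → ∀ u ∈ K, c • u ∈ K)
    (hKadd : ∀ u ∈ K, ∀ v ∈ K, u + v ∈ K)
    (hN : ∀ u ∈ K, u - E' u ∈ K)
    (r R : ℝ) (hr : 0 < r) (hrR : r < R)
    (s : H → ℝ)
    (h1 : ∀ u ∈ K \ {0}, s u ∈ Ioo (r / ‖u‖) (R / ‖u‖) ∧
      (∀ τ ∈ Ico (r / ‖u‖) (s u), 0 < ⟪E' (τ • u), u⟫) ∧
      (∀ τ ∈ Ioc (s u) (R / ‖u‖), ⟪E' (τ • u), u⟫ < 0))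
    (𝒩 : Set H) (h𝒩 : 𝒩 = {w | ∃ u ∈ K \ {0}, w = s u • u})
    -- (h4)
    (C₂ : ℝ) (hC₂ : 0 < C₂)
    (h4 : ∀ u ∈ 𝒩, C₂ ≤ |E'' u u u|)
    -- the data of the lemma
    (u : H) (hu : u ∈ 𝒩) (hsu : s u = 1)
    (v : H) (ε : ℝ) (hε : 0 < ε)
    (hadm : ∀ t ∈ Icc (0 : ℝ) ε, u + t • v ∈ K) :
    Tendsto (fun t : ℝ => (s (u + t • v) - s u) / t) (nhdsWithin 0 (Ioi 0))
      (nhds (-(E'' u u v + ⟪E' u, v⟫) / E'' u u u)) := by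
  classical
  -- regularity of E'
  have hE'c1 : ContDiff ℝ 1 E' := by
    have h1' : ∀ x, fderiv ℝ E x = InnerProductSpace.toDual ℝ H (E' x) := fun x =>
      (hasGradientAt_iff_hasFDerivAt.mp (hgrad x)).fderiv
    have h2 : ContDiff ℝ 1 (fderiv ℝ E) := hE.fderiv_right (by norm_num)
    have heq : E' = fun x => (InnerProductSpace.toDual ℝ H).symm (fderiv ℝ E x) := by
      funext x; rw [h1']; simp
    rw [heq]
    exact (InnerProductSpace.toDual ℝ H).symm.contDiff.comp h2
  have hE'c : Continuous E' := hE'c1.continuous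
  set D := fderiv ℝ E' u with hDdef
  have hD : HasFDerivAt E' D u := ((hE'c1.differentiable one_ne_zero) u).hasFDerivAt
  -- identification of E'' at u
  have hEid : ∀ z y : H, E'' u z y = ⟪D y, z⟫ := by
    intro z y
    have line : HasDerivAt (fun t : ℝ => u + t • y) y 0 := by
      simpa using ((hasDerivAt_id (0:ℝ)).smul_const y).const_add u
    have hD' : HasFDerivAt E' D (u + (0:ℝ) • y) := by simpa using hD
    have hcomp : HasDerivAt (fun t : ℝ => E' (u + t • y)) (D y) 0 := hD'.comp_hasDerivAt 0 line
    have hslope := hasDerivAt_iff_tendsto_slope.mp hcomp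
    have h3 : Tendsto (fun t : ℝ => ⟪slope (fun t : ℝ => E' (u + t • y)) 0 t, z⟫)
        (nhdsWithin (0:ℝ) {(0:ℝ)}ᶜ) (nhds ⟪D y, z⟫) :=
      (Continuous.inner continuous_id continuous_const).continuousAt.tendsto.comp hslope
    have h4' := h3.mono_left (nhdsWithin_mono _ (fun t ht => (Set.mem_Ioi.mp ht).ne'))
    refine tendsto_nhds_unique (hE'' u z y) (h4'.congr fun t => ?_)
    simp [slope, real_inner_smul_left, one_div]
  -- the zero property on the Nehari manifold
  have key : ∀ w ∈ K \ {0}, ⟪E' (s w • w), w⟫ = 0 := by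
    intro w hw
    obtain ⟨hmem, hpos, hneg⟩ := h1 w hw
    set g : ℝ → ℝ := fun τ => ⟪E' (τ • w), w⟫ with hg
    have gcont : Continuous g :=
      Continuous.inner (hE'c.comp (continuous_id.smul continuous_const)) continuous_const
    have hge : (0:ℝ) ≤ g (s w) := by
      have ht : Tendsto g (nhdsWithin (s w) (Iio (s w))) (nhds (g (s w))) :=
        (gcont.tendsto (s w)).mono_left nhdsWithin_le_nhds
      refine ge_of_tendsto ht ?_
      filter_upwards [Ioo_mem_nhdsLT_of_mem ⟨hmem.1, le_refl (s w)⟩] with τ hτ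
      exact (hpos τ ⟨hτ.1.le, hτ.2⟩).le
    have hle : g (s w) ≤ 0 := by
      have ht : Tendsto g (nhdsWithin (s w) (Ioi (s w))) (nhds (g (s w))) :=
        (gcont.tendsto (s w)).mono_left nhdsWithin_le_nhds
      refine le_of_tendsto ht ?_
      filter_upwards [Ioo_mem_nhdsGT_of_mem ⟨le_refl (s w), hmem.2⟩] with τ hτ
      exact (hneg τ ⟨hτ.1, hτ.2.le⟩).le
    linarith
  -- u belongs to the cone minus zero
  have huK : u ∈ K \ {0} := by
    rw [h𝒩] at hu
    obtain ⟨w₀, hw₀, hueq⟩ := hu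
    have hw₀ne : w₀ ≠ 0 := by simpa using hw₀.2
    have hw₀norm : 0 < ‖w₀‖ := norm_pos_iff.mpr hw₀ne
    have hs₀ : 0 < s w₀ := lt_trans (div_pos hr hw₀norm) (h1 w₀ hw₀).1.1
    constructor
    · rw [hueq]; exact hKsmul _ hs₀.le _ hw₀.1
    · simp only [mem_singleton_iff]
      rw [hueq]
      exact smul_ne_zero hs₀.ne' hw₀ne
  have hune : u ≠ 0 := by simpa using huK.2
  have hunorm : 0 < ‖u‖ := norm_pos_iff.mpr hune
  obtain ⟨hmem_u, hpos_u, hneg_u⟩ := h1 u huK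
  rw [hsu] at hmem_u hpos_u hneg_u
  have hrlt : r / ‖u‖ < 1 := hmem_u.1
  have hRgt : 1 < R / ‖u‖ := hmem_u.2
  have hrltu : r < ‖u‖ := (div_lt_one hunorm).mp hrlt
  -- notation
  obtain ⟨a, hadef⟩ : ∃ a : ℝ, a = ⟪D u, u⟫ := ⟨_, rfl⟩
  obtain ⟨b, hbdef⟩ : ∃ b : ℝ, b = ⟪D v, u⟫ := ⟨_, rfl⟩
  have ha_ne : a ≠ 0 := by
    intro h
    have h4u := h4 u hu
    rw [hEid u u, ← hadef, h] at h4u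
    simp at h4u
    linarith
  have hapos : 0 < |a| := abs_pos.mpr ha_ne
  have hEu_u : ⟪E' u, u⟫ = 0 := by
    have := key u huK; rwa [hsu, one_smul] at this
  set l := nhdsWithin (0:ℝ) (Ioi 0) with hl
  set w : ℝ → H := fun t => u + t • v with hwdef
  have hwcont : Continuous w := continuous_const.add (continuous_id.smul continuous_const)
  have hw0 : Tendsto w l (nhds u) := by
    have h := hwcont.tendsto 0
    simp only [hwdef, zero_smul, add_zero] at h
    exact h.mono_left nhdsWithin_le_nhds
  have hwnorm : Tendsto (fun t => ‖w t‖) l (nhds ‖u‖) := hw0.norm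
  have evt_pos : ∀ᶠ t in l, 0 < t := eventually_mem_nhdsWithin
  have evt_le : ∀ᶠ t in l, t ≤ ε :=
    ((eventually_lt_nhds hε).filter_mono nhdsWithin_le_nhds).mono fun t ht => ht.le
  have ev_r : ∀ᶠ t in l, r < ‖w t‖ := hwnorm.eventually (eventually_gt_nhds hrltu)
  have evK0 : ∀ᶠ t in l, w t ∈ K \ {0} := by
    filter_upwards [evt_pos, evt_le, ev_r] with t ht hte hr2
    refine ⟨hadm t ⟨ht.le, hte⟩, ?_⟩
    simp only [mem_singleton_iff]
    intro h
    rw [h] at hr2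
    simp at hr2
    linarith
  set S : ℝ → ℝ := fun t => s (w t) with hSdef
  -- continuity of S at 0⁺
  have hScont : Tendsto S l (nhds 1) := by
    rw [Metric.tendsto_nhds]
    intro δ hδ
    set δ' := min (δ/2) (min ((1 - r/‖u‖)/2) ((R/‖u‖ - 1)/2)) with hδ'def
    have hδ'pos : 0 < δ' := by
      refine lt_min (by linarith) (lt_min (by linarith) (by linarith))
    have hδ'lt : δ' ≤ δ/2 := min_le_left _ _
    have hmin0 : δ' ≤ (1 - r/‖u‖)/2 ⊓ (R/‖u‖ - 1)/2 := min_le_right _ _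
    have h1δ : r/‖u‖ < 1 - δ' := by
      have h : δ' ≤ (1 - r/‖u‖)/2 := le_trans hmin0 (min_le_left _ _)
      linarith
    have h2δ : 1 + δ' < R/‖u‖ := by
      have h : δ' ≤ (R/‖u‖ - 1)/2 := le_trans hmin0 (min_le_right _ _)
      linarith
    have Fcont : ∀ c : ℝ, Continuous (fun x : H => (⟪E' (c • x), x⟫ : ℝ)) := fun c =>
      Continuous.inner (hE'c.comp (continuous_const.smul continuous_id)) continuous_id
    have hA0 : 0 < ⟪E' ((1-δ') • u), u⟫ := hpos_u _ ⟨h1δ.le, by linarith⟩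
    have hB0 : ⟪E' ((1+δ') • u), u⟫ < 0 := hneg_u _ ⟨by linarith, h2δ.le⟩
    have evA : ∀ᶠ t in l, 0 < ⟪E' ((1-δ') • w t), w t⟫ :=
      (((Fcont (1-δ')).tendsto u).comp hw0).eventually (eventually_gt_nhds hA0)
    have evB : ∀ᶠ t in l, ⟪E' ((1+δ') • w t), w t⟫ < 0 :=
      (((Fcont (1+δ')).tendsto u).comp hw0).eventually (eventually_lt_nhds hB0)
    have evC : ∀ᶠ t in l, r / ‖w t‖ < 1 - δ' :=
      (tendsto_const_nhds.div hwnorm hunorm.ne').eventually (eventually_lt_nhds h1δ)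
    have evD2 : ∀ᶠ t in l, 1 + δ' < R / ‖w t‖ :=
      (tendsto_const_nhds.div hwnorm hunorm.ne').eventually (eventually_gt_nhds h2δ)
    filter_upwards [evA, evB, evC, evD2, evK0] with t hA hB hC hD2 hK0
    obtain ⟨hm, hp, hn⟩ := h1 (w t) hK0
    have hzero := key (w t) hK0
    have hlow : 1 - δ' < s (w t) := by
      rcases lt_trichotomy (s (w t)) (1 - δ') with h | h | h
      · have := hn (1-δ') ⟨h, by linarith⟩
        linarith
      · rw [h] at hzero; linarith
      · exact h
    have hhigh : s (w t) < 1 + δ' := by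
      rcases lt_trichotomy (s (w t)) (1 + δ') with h | h | h
      · exact h
      · rw [h] at hzero; linarith
      · have := hp (1+δ') ⟨by linarith, h⟩
        linarith
    rw [Real.dist_eq, abs_lt]
    constructor
    · simp only [hSdef]; linarith
    · simp only [hSdef]; linarith
  -- limit of S t • w t
  have hx : Tendsto (fun t => S t • w t) l (nhds u) := by
    have h := hScont.smul hw0
    rwa [one_smul] at h
  -- auxiliary maps
  set P : ℝ → ℝ := fun t => ⟪D u, w t⟫ with hPdef
  set V : ℝ → ℝ := fun t => ⟪D v, w t⟫ with hVdef
  obtain ⟨d, hddef⟩ : ∃ d : ℝ, d = ⟪E' u, v⟫ := ⟨_, rfl⟩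
  have hP : Tendsto P l (nhds a) := by
    rw [hadef]
    exact ((Continuous.inner continuous_const continuous_id).tendsto u).comp hw0
  have hV : Tendsto V l (nhds b) := by
    rw [hbdef]
    exact ((Continuous.inner continuous_const continuous_id).tendsto u).comp hw0
  set ρ : ℝ → ℝ := fun t => ⟪E' (S t • w t) - E' u - D (S t • w t - u), w t⟫ with hρdef
  have hsmul_eq : ∀ t : ℝ, S t • w t - u = (S t - 1) • u + (t * S t) • v := by
    intro t
    simp only [hwdef, smul_add, smul_smul, sub_smul, one_smul]
    module
  -- the fundamental equation
  have eveq : ∀ᶠ t in l, (S t - 1) * P t + t * (S t * V t + d) + ρ t = 0 := by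
    filter_upwards [evK0] with t hK0
    have h0 := key (w t) hK0
    have hDh : (D (S t • w t - u) : H) = (S t - 1) • D u + (t * S t) • D v := by
      rw [hsmul_eq t, map_add, map_smul, map_smul]
    have hEuw : (⟪E' u, w t⟫ : ℝ) = t * d := by
      simp only [hwdef, inner_add_right, real_inner_smul_right, hEu_u, ← hddef]
      ring
    have hinner : (⟪E' (S t • w t), w t⟫ : ℝ)
        = ρ t + ((S t - 1) * P t + (t * S t) * V t) + ⟪E' u, w t⟫ := by
      simp only [hρdef, inner_sub_left, hDh, inner_add_left, real_inner_smul_left,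
        hPdef, hVdef]
      ring
    have hfin : (0:ℝ) = ρ t + ((S t - 1) * P t + (t * S t) * V t) + t * d := by
      rw [← hEuw, ← hinner]
      exact h0.symm
    linear_combination -hfin
  -- constants
  obtain ⟨M, hMdef⟩ : ∃ M : ℝ, M = ‖u‖ + 1 := ⟨_, rfl⟩
  have hM0 : 0 < M := by rw [hMdef]; positivity
  have huM : ‖u‖ ≤ M := by rw [hMdef]; linarith
  obtain ⟨η₀, hη₀def⟩ : ∃ x : ℝ, x = |a| / (4 * M * M) := ⟨_, rfl⟩
  have hη₀pos : 0 < η₀ := by rw [hη₀def]; positivity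
  have hη₀M : η₀ * M * ‖u‖ ≤ |a| / 4 := by
    have h1' : η₀ * M * ‖u‖ ≤ η₀ * M * M := by
      apply mul_le_mul_of_nonneg_left huM (by positivity)
    have h2' : η₀ * M * M = |a| / 4 := by
      rw [hη₀def]; field_simp
    linarith
  obtain ⟨C₀, hC₀def⟩ : ∃ x : ℝ, x = 2 * (‖D v‖ * M) + |d| := ⟨_, rfl⟩
  have hC₀0 : 0 ≤ C₀ := by rw [hC₀def]; positivity
  obtain ⟨Q, hQdef⟩ : ∃ x : ℝ, x = (C₀ + 2 * η₀ * M * ‖v‖) / (|a| / 4) := ⟨_, rfl⟩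
  have hQ0 : 0 ≤ Q := by
    rw [hQdef]
    apply div_nonneg _ (by positivity)
    positivity
  obtain ⟨B, hBdef⟩ : ∃ x : ℝ, x = Q * ‖u‖ + 2 * ‖v‖ := ⟨_, rfl⟩
  have hB0 : 0 ≤ B := by rw [hBdef]; positivity
  -- little-o control
  have evlittle : ∀ η : ℝ, 0 < η → ∀ᶠ t in l,
      ‖E' (S t • w t) - E' u - D (S t • w t - u)‖ ≤ η * ‖S t • w t - u‖ := by
    intro η hη
    exact hx.eventually (hD.isLittleO.def hη)
  have evM : ∀ᶠ t in l, ‖w t‖ ≤ M := by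
    rw [hMdef]
    exact (hwnorm.eventually (eventually_lt_nhds (lt_add_one ‖u‖))).mono fun t ht => ht.le
  have evS2 : ∀ᶠ t in l, 0 ≤ S t ∧ S t ≤ 2 := by
    have h := Metric.tendsto_nhds.mp hScont 1 one_pos
    filter_upwards [h] with t ht
    rw [Real.dist_eq, abs_lt] at ht
    constructor <;> linarith
  have evP : ∀ᶠ t in l, |a| / 2 ≤ |P t| := by
    have h := Metric.tendsto_nhds.mp hP (|a|/2) (by positivity)
    filter_upwards [h] with t ht
    rw [Real.dist_eq] at ht
    have h2 := abs_sub_abs_le_abs_sub a (P t)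
    rw [abs_sub_comm] at h2
    linarith
  have evV : ∀ᶠ t in l, |V t| ≤ ‖D v‖ * M := by
    filter_upwards [evM] with t ht
    calc |V t| ≤ ‖(D v : H)‖ * ‖w t‖ := abs_real_inner_le_norm _ _
      _ ≤ ‖(D v : H)‖ * M := by
          exact mul_le_mul_of_nonneg_left ht (norm_nonneg _)
  -- norm bound on the increment
  have evh : ∀ᶠ t in l, ‖S t • w t - u‖ ≤ |S t - 1| * ‖u‖ + 2 * t * ‖v‖ := by
    filter_upwards [evS2, evt_pos] with t hs2 ht
    rw [hsmul_eq t]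
    calc ‖(S t - 1) • u + (t * S t) • v‖
        ≤ ‖(S t - 1) • u‖ + ‖(t * S t) • v‖ := norm_add_le _ _
      _ = |S t - 1| * ‖u‖ + |t * S t| * ‖v‖ := by
          rw [norm_smul, norm_smul, Real.norm_eq_abs, Real.norm_eq_abs]
      _ ≤ |S t - 1| * ‖u‖ + 2 * t * ‖v‖ := by
          have habs : |t * S t| = t * S t := abs_of_nonneg (mul_nonneg ht.le hs2.1)
          have h2t : t * S t ≤ 2 * t := by nlinarith [hs2.2]
          rw [habs]
          have h3t := mul_le_mul_of_nonneg_right h2t (norm_nonneg v)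
          linarith
  -- bootstrap bound on the difference quotient
  have hq_bound : ∀ᶠ t in l, |S t - 1| ≤ Q * t := by
    filter_upwards [eveq, evlittle η₀ hη₀pos, evM, evS2, evP, evV, evh, evt_pos]
      with t he hlit hM2 hs2 hPt hVt hht ht
    have hρb : |ρ t| ≤ η₀ * (|S t - 1| * ‖u‖ + 2 * t * ‖v‖) * M := by
      calc |ρ t| ≤ ‖E' (S t • w t) - E' u - D (S t • w t - u)‖ * ‖w t‖ :=
            abs_real_inner_le_norm _ _
        _ ≤ (η₀ * ‖S t • w t - u‖) * M := by
            apply mul_le_mul hlit hM2 (norm_nonneg _) (by positivity)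
        _ ≤ η₀ * (|S t - 1| * ‖u‖ + 2 * t * ‖v‖) * M := by
            have := mul_le_mul_of_nonneg_left hht hη₀pos.le
            nlinarith [hM0]
    have he1 : |S t - 1| * |P t| ≤ t * C₀ + |ρ t| := by
      have heq2 : (S t - 1) * P t = -(t * (S t * V t + d) + ρ t) := by linarith
      calc |S t - 1| * |P t| = |(S t - 1) * P t| := (abs_mul _ _).symm
        _ = |t * (S t * V t + d) + ρ t| := by rw [heq2, abs_neg]
        _ ≤ |t * (S t * V t + d)| + |ρ t| := abs_add_le _ _
        _ ≤ t * C₀ + |ρ t| := by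
            have h3 : |t * (S t * V t + d)| = t * |S t * V t + d| := by
              rw [abs_mul, abs_of_pos ht]
            have h4' : |S t * V t + d| ≤ C₀ := by
              calc |S t * V t + d| ≤ |S t * V t| + |d| := abs_add_le _ _
                _ ≤ 2 * (‖D v‖ * M) + |d| := by
                    rw [abs_mul]
                    have : |S t| ≤ 2 := abs_le.mpr ⟨by linarith [hs2.1], hs2.2⟩
                    nlinarith [abs_nonneg (V t), hVt, abs_nonneg (S t)]
                _ = C₀ := hC₀def.symm
            nlinarith [ht]
    -- combine
    have hcomb : |S t - 1| * (|a| / 4) ≤ t * (C₀ + 2 * η₀ * M * ‖v‖) := by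
      have h5 : η₀ * (|S t - 1| * ‖u‖) * M ≤ |S t - 1| * (|a| / 4) := by
        have := mul_le_mul_of_nonneg_left hη₀M (abs_nonneg (S t - 1))
        nlinarith [abs_nonneg (S t - 1)]
      have h6 : |S t - 1| * (|a| / 2) ≤ |S t - 1| * |P t| :=
        mul_le_mul_of_nonneg_left hPt (abs_nonneg _)
      nlinarith [hρb, he1]
    have h7 : |S t - 1| ≤ (t * (C₀ + 2 * η₀ * M * ‖v‖)) / (|a| / 4) := by
      rw [le_div_iff₀ (by positivity)]
      linarith
    calc |S t - 1| ≤ (t * (C₀ + 2 * η₀ * M * ‖v‖)) / (|a| / 4) := h7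
      _ = Q * t := by rw [hQdef]; ring
  -- the remainder term divided by t tends to zero
  have hρ0 : Tendsto (fun t => ρ t / t) l (nhds 0) := by
    rw [Metric.tendsto_nhds]
    intro η hη
    obtain ⟨η₁, hη₁def⟩ : ∃ x : ℝ, x = η / (2 * (B * M + 1)) := ⟨_, rfl⟩
    have hBM1 : 0 < B * M + 1 := by nlinarith [hB0, hM0]
    have hη₁pos : 0 < η₁ := by rw [hη₁def]; positivity
    filter_upwards [hq_bound, evlittle η₁ hη₁pos, evM, evh, evt_pos]
      with t hq hlit hM2 hht ht
    have hhb : ‖S t • w t - u‖ ≤ t * B := by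
      calc ‖S t • w t - u‖ ≤ |S t - 1| * ‖u‖ + 2 * t * ‖v‖ := hht
        _ ≤ Q * t * ‖u‖ + 2 * t * ‖v‖ := by nlinarith [norm_nonneg u]
        _ = t * B := by rw [hBdef]; ring
    have hρb : |ρ t| ≤ η₁ * (t * B) * M := by
      calc |ρ t| ≤ ‖E' (S t • w t) - E' u - D (S t • w t - u)‖ * ‖w t‖ :=
            abs_real_inner_le_norm _ _
        _ ≤ (η₁ * ‖S t • w t - u‖) * M := by
            apply mul_le_mul hlit hM2 (norm_nonneg _) (by positivity)
        _ ≤ η₁ * (t * B) * M :=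
            mul_le_mul_of_nonneg_right
              (mul_le_mul_of_nonneg_left hhb hη₁pos.le) hM0.le
    rw [Real.dist_eq, sub_zero, abs_div, abs_of_pos ht]
    rw [div_lt_iff₀ ht]
    have hkey : η₁ * (B * M) < η := by
      rw [hη₁def]
      rw [div_mul_eq_mul_div, div_lt_iff₀ (by positivity)]
      nlinarith [hB0, hM0.le, hη]
    nlinarith [hρb, ht]
  -- eventual nonvanishing of P
  have evPne : ∀ᶠ t in l, P t ≠ 0 := hP.eventually_ne ha_ne
  -- conclusion
  have hfinal : Tendsto (fun t => -(ρ t / t + S t * V t + d) / P t) l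
      (nhds (-(0 + 1 * b + d) / a)) :=
    Tendsto.div (((hρ0.add (hScont.mul hV)).add tendsto_const_nhds).neg) hP ha_ne
  have hqlim : Tendsto (fun t => (S t - 1) / t) l (nhds (-(b + d) / a)) := by
    have hval : -(0 + 1 * b + d) / a = -(b + d) / a := by ring
    rw [hval] at hfinal
    refine hfinal.congr' ?_
    filter_upwards [eveq, evt_pos, evPne] with t he ht hPne
    have heq2 : (S t - 1) * P t = -(ρ t + t * (S t * V t + d)) := by linarith
    rw [div_eq_div_iff hPne ht.ne']
    have h8 : ρ t / t * t = ρ t := div_mul_cancel₀ _ ht.ne'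
    calc -(ρ t / t + S t * V t + d) * t
        = -(ρ t / t * t + (S t * V t + d) * t) := by ring
      _ = -(ρ t + t * (S t * V t + d)) := by rw [h8]; ring
      _ = (S t - 1) * P t := heq2.symm
  -- identify the limit and the function
  have hEv : E'' u u v = b := by rw [hbdef]; exact hEid u v
  have hEa : E'' u u u = a := by rw [hadef]; exact hEid u u
  rw [hEv, hEa, hsu, ← hddef]
  exact hqlim
end

section
/- Assume condition (h1) holds, together with: (h2) E is bounded from below on 𝒩; (h3) there exists C₁ > 0 such that |E''(u)(w₁, w₂)| ≤ C₁ for all u ∈ 𝒩 and all w₁, w₂ ∈ H with |w₁|_H = |w₂|_H = 1; (h4) there exists C₂ > 0 such that |E''(u)(u, u)| ≥ C₂ for all u ∈ 𝒩; assume 𝒩 is closed in H, and that the operator N is completely continuous, i.e. N is continuous and maps bounded subsets of H into relatively compact sets. Then there exists u* ∈ 𝒩 such that E(u*) = inf_{𝒩} E and E'(u*) = 0. -/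
open Filter Set Topology

theorem my_ekeland {X : Type*} [MetricSpace X] [CompleteSpace X]
    (F : X → ℝ) (hF : Continuous F) (m : ℝ) (hm : ∀ x, m ≤ F x)
    (lam : ℝ) (hlam : 0 < lam) (x₀ : X) :
    ∃ x : X, F x ≤ F x₀ ∧ ∀ y : X, F x ≤ F y + lam * dist y x := by
  classical
  set S : X → Set X := fun x => {y | F y + lam * dist y x ≤ F x} with hS
  have hxS : ∀ x, x ∈ S x := by intro x; simp [hS]
  have hbdd : ∀ x, BddBelow (F '' S x) := fun x => ⟨m, by rintro z ⟨y, _, rfl⟩; exact hm y⟩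
  have hne : ∀ x, (F '' S x).Nonempty := fun x => ⟨F x, x, hxS x, rfl⟩
  set m' : X → ℝ := fun x => sInf (F '' S x) with hm'
  have hpick : ∀ x (n : ℕ), ∃ y, y ∈ S x ∧ F y ≤ m' x + (1/2)^n := by
    intro x n
    have h : m' x < m' x + (1/2)^n := by
      have : (0:ℝ) < (1/2)^n := by positivity
      linarith
    obtain ⟨z, ⟨y, hy, rfl⟩, hz⟩ := exists_lt_of_csInf_lt (hne x) h
    exact ⟨y, hy, le_of_lt hz⟩
  choose pick hpick1 hpick2 using hpick
  set seq : ℕ → X := fun n => Nat.rec x₀ (fun n x => pick x n) n with hseq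
  have hseq0 : seq 0 = x₀ := rfl
  have hstep : ∀ n, seq (n+1) ∈ S (seq n) := fun n => hpick1 (seq n) n
  -- transitivity of S
  have htrans : ∀ x x' y, x' ∈ S x → y ∈ S x' → y ∈ S x := by
    intro x x' y hx' hy
    simp only [hS, Set.mem_setOf_eq] at *
    have := dist_triangle y x' x
    nlinarith [dist_nonneg (x := y) (y := x')]
  have hchain : ∀ n k, seq (n+k) ∈ S (seq n) := by
    intro n k
    induction k with
    | zero => exact hxS _
    | succ k ih => exact htrans _ _ _ ih (hstep (n+k))
  have hchain' : ∀ n k, n ≤ k → seq k ∈ S (seq n) := by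
    intro n k hk
    obtain ⟨j, rfl⟩ := Nat.exists_eq_add_of_le hk
    exact hchain n j
  have hFanti : ∀ n k, n ≤ k → F (seq k) ≤ F (seq n) := by
    intro n k hk
    have := hchain' n k hk
    simp only [hS, Set.mem_setOf_eq] at this
    nlinarith [dist_nonneg (x := seq k) (y := seq n)]
  have hdistle : ∀ n k, n ≤ k → lam * dist (seq k) (seq n) ≤ F (seq n) - F (seq k) := by
    intro n k hk
    have := hchain' n k hk
    simp only [hS, Set.mem_setOf_eq] at this
    linarith
  -- the limit l of F (seq n)
  have hbddrange : BddBelow (Set.range (fun n => F (seq n))) := ⟨m, by rintro z ⟨n, rfl⟩; exact hm _⟩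
  set l : ℝ := ⨅ n, F (seq n) with hl
  have hFtendsto : Tendsto (fun n => F (seq n)) atTop (𝓝 l) :=
    tendsto_atTop_ciInf (fun a b hab => hFanti a b hab) hbddrange
  have hlle : ∀ n, l ≤ F (seq n) := fun n => ciInf_le hbddrange n
  -- Cauchy
  have key : ∀ a b N, N ≤ a → a ≤ b → dist (seq a) (seq b) ≤ (F (seq N) - l)/lam := by
    intro a b N hNa hab
    rw [dist_comm, le_div_iff₀ hlam]
    have h1 := hdistle a b hab
    have h2 := hFanti N a hNa
    have h3 := hlle b
    nlinarith [mul_comm lam (dist (seq b) (seq a))]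
  have hcauchy : CauchySeq seq := by
    apply cauchySeq_of_le_tendsto_0 (fun N => (F (seq N) - l) / lam)
    · intro n k N hn hk
      rcases le_total n k with h | h
      · exact key n k N hn h
      · rw [dist_comm]; exact key k n N hk h
    · have : Tendsto (fun N => (F (seq N) - l)/lam) atTop (𝓝 ((l - l)/lam)) :=
        (hFtendsto.sub tendsto_const_nhds).div_const lam
      simpa using this
  obtain ⟨xbar, hxbar⟩ := cauchySeq_tendsto_of_complete hcauchy
  -- xbar ∈ S (seq n) for all n
  have hSclosed : ∀ x, IsClosed (S x) :=
    fun x => isClosed_le (by continuity) continuous_const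
  have hxbarS : ∀ n, xbar ∈ S (seq n) := by
    intro n
    have : ∀ᶠ k in atTop, seq k ∈ S (seq n) :=
      eventually_atTop.2 ⟨n, fun k hk => hchain' n k hk⟩
    exact (hSclosed (seq n)).mem_of_tendsto hxbar this
  have hFxbar : Tendsto (fun n => F (seq n)) atTop (𝓝 (F xbar)) :=
    (hF.tendsto xbar).comp hxbar
  refine ⟨xbar, ?_, ?_⟩
  · have := hxbarS 0
    simp only [hS, Set.mem_setOf_eq, hseq0] at this
    nlinarith [dist_nonneg (x := xbar) (y := x₀)]
  · intro y
    by_contra hy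
    push_neg at hy
    -- y ∈ S (seq n) for all n
    have hyS : ∀ n, y ∈ S (seq n) := by
      intro n
      have h1 := hxbarS n
      simp only [hS, Set.mem_setOf_eq] at h1 ⊢
      have := dist_triangle y xbar (seq n)
      nlinarith [dist_nonneg (x := y) (y := xbar), dist_nonneg (x := xbar) (y := seq n)]
    have hFy : ∀ n, m' (seq n) ≤ F y := fun n => csInf_le (hbdd _) ⟨y, hyS n, rfl⟩
    have hge : ∀ n, F (seq (n+1)) - (1/2)^n ≤ F y := by
      intro n
      have := hpick2 (seq n) n
      have h2 := hFy n
      linarith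
    have hlim : Tendsto (fun n => F (seq (n+1)) - (1/2:ℝ)^n) atTop (𝓝 (F xbar - 0)) := by
      exact ((hFxbar.comp (tendsto_add_atTop_nat 1)).sub
        (tendsto_pow_atTop_nhds_zero_of_lt_one (by norm_num) (by norm_num)))
    have : F xbar - 0 ≤ F y := le_of_tendsto hlim (Eventually.of_forall hge)
    nlinarith [dist_nonneg (x := y) (y := xbar)]
open scoped RealInnerProductSpace

theorem grad_contDiff {H : Type*} [NormedAddCommGroup H] [InnerProductSpace ℝ H] [CompleteSpace H]
    (E : H → ℝ) (E' : H → H) (hE : ContDiff ℝ 2 E)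
    (hgrad : ∀ u, HasGradientAt E (E' u) u) : ContDiff ℝ 1 E' := by
  have h1 : ContDiff ℝ 1 (fderiv ℝ E) := hE.fderiv_right (by norm_num)
  have h2 : ∀ u, E' u = (InnerProductSpace.toDual ℝ H).symm (fderiv ℝ E u) := by
    intro u
    have := (hgrad u).hasFDerivAt.fderiv
    rw [this]
    simp
  have : E' = fun u => (InnerProductSpace.toDual ℝ H).symm (fderiv ℝ E u) := funext h2
  rw [this]
  exact ((InnerProductSpace.toDual ℝ H).symm.contDiff).comp h1

theorem Epp_eq {H : Type*} [NormedAddCommGroup H] [InnerProductSpace ℝ H]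
    (E' : H → H) (E'' : H → H → H → ℝ) (u z y : H) (D : H →L[ℝ] H)
    (hDu : HasFDerivAt E' D u)
    (hE'' : Tendsto (fun t : ℝ => (1 / t) * ⟪E' (u + t • y) - E' u, z⟫)
      (nhdsWithin 0 (Ioi 0)) (nhds (E'' u z y))) :
    E'' u z y = ⟪D y, z⟫ := by
  -- the curve t ↦ u + t • y
  have hc : HasDerivAt (fun t : ℝ => u + t • y) y 0 := by
    simpa using ((hasDerivAt_id (0:ℝ)).smul_const y).const_add u
  have hcomp : HasDerivAt (fun t : ℝ => E' (u + t • y)) (D y) 0 := by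
    have hDu' : HasFDerivAt E' D (u + (0:ℝ) • y) := by simpa using hDu
    simpa [Function.comp_def] using hDu'.comp_hasDerivAt 0 hc
  have hinner : HasDerivAt (fun t : ℝ => ⟪E' (u + t • y) - E' u, z⟫) ⟪D y, z⟫ 0 := by
    have := (hcomp.sub_const (E' u)).inner ℝ (hasDerivAt_const (0:ℝ) z)
    simpa using this
  have hslope : Tendsto (fun t : ℝ => (1 / t) * ⟪E' (u + t • y) - E' u, z⟫)
      (𝓝[>] (0:ℝ)) (𝓝 ⟪D y, z⟫) := by
    have h0 : (fun t : ℝ => ⟪E' (u + t • y) - E' u, z⟫) 0 = 0 := by simp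
    have := hasDerivAt_iff_tendsto_slope.1 hinner
    have h2 : Tendsto (slope (fun t : ℝ => ⟪E' (u + t • y) - E' u, z⟫) 0) (𝓝[>] (0:ℝ))
        (𝓝 ⟪D y, z⟫) := this.mono_left (nhdsWithin_mono _ (fun t ht => ne_of_gt ht))
    apply h2.congr
    intro t
    simp [slope, h0, div_eq_inv_mul, one_div]
  exact tendsto_nhds_unique hE'' hslope
open scoped RealInnerProductSpace

set_option maxHeartbeats 1000000 in
theorem key_estimate {H : Type*} [NormedAddCommGroup H] [InnerProductSpace ℝ H] [CompleteSpace H]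
    (E : H → ℝ) (E' : H → H) (hE'cont : Continuous E')
    (K : Set H)
    (hKsmul : ∀ c : ℝ, 0 ≤ c → ∀ u ∈ K, c • u ∈ K)
    (hKadd : ∀ u ∈ K, ∀ v ∈ K, u + v ∈ K)
    (r R : ℝ) (hr : 0 < r) (hrR : r < R)
    (s : H → ℝ)
    (h1 : ∀ u ∈ K \ {0}, s u ∈ Ioo (r / ‖u‖) (R / ‖u‖) ∧
      (∀ τ ∈ Ico (r / ‖u‖) (s u), 0 < ⟪E' (τ • u), u⟫) ∧
      (∀ τ ∈ Ioc (s u) (R / ‖u‖), ⟪E' (τ • u), u⟫ < 0))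
    (𝒩 : Set H) (h𝒩 : 𝒩 = {w | ∃ u ∈ K \ {0}, w = s u • u})
    (hzero : ∀ x ∈ K \ {0}, ⟪E' (s x • x), x⟫ = 0)
    (u : H) (huK : u ∈ K) (hune : u ≠ 0) (hsu : s u = 1) (hur : r < ‖u‖) (huR : ‖u‖ < R)
    (hgradu : HasGradientAt E (E' u) u)
    (D : H →L[ℝ] H) (hDu : HasFDerivAt E' D u)
    (C₂ : ℝ) (hC₂ : 0 < C₂) (hA : C₂ ≤ |⟪D u, u⟫|)
    (hEu : ⟪E' u, u⟫ = 0)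
    (v : H) (hvK : v ∈ K)
    (Cb : ℝ) (hCb0 : 0 ≤ Cb) (hCb : |⟪D v, u⟫ + ⟪E' u, v⟫| ≤ Cb * ‖v‖)
    (lam : ℝ) (hlam : 0 < lam)
    (hEk : ∀ w ∈ 𝒩, E u ≤ E w + lam * ‖w - u‖) :
    -(lam * ((2 * Cb * ‖v‖ / C₂ + 1) * R + 2 * ‖v‖)) ≤ ⟪E' u, v⟫ := by
  have hR : (0:ℝ) < R := hr.trans hrR
  have hu0 : (0:ℝ) < ‖u‖ := hr.trans hur
  set x : ℝ → H := fun t => u + t • v with hx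
  set st : ℝ → ℝ := fun t => s (x t) with hst
  set C₆ : ℝ := 2 * Cb * ‖v‖ / C₂ + 1 with hC₆
  set C₇ : ℝ := C₆ * R + 2 * ‖v‖ with hC₇
  have hC₆1 : (1:ℝ) ≤ C₆ := by
    have : 0 ≤ 2 * Cb * ‖v‖ / C₂ := by positivity
    simp only [hC₆]; linarith
  have hC₇pos : (0:ℝ) < C₇ := by
    have hv0 : (0:ℝ) ≤ ‖v‖ := norm_nonneg v
    nlinarith
  -- basic continuity facts
  have hxcont : Continuous x := continuous_const.add (continuous_id.smul continuous_const)
  have hxtend : Tendsto x (𝓝[>] (0:ℝ)) (𝓝 u) := by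
    have := (hxcont.tendsto 0).mono_left (nhdsWithin_le_nhds (s := Ioi (0:ℝ)))
    simpa [hx] using this
  have hxnorm : Tendsto (fun t => ‖x t‖) (𝓝[>] (0:ℝ)) (𝓝 ‖u‖) :=
    (continuous_norm.tendsto u).comp hxtend
  -- eventually x t ∈ K \ {0}
  have hev_r : ∀ᶠ t in 𝓝[>] (0:ℝ), r < ‖x t‖ := hxnorm.eventually_const_lt hur
  have hev_pos : ∀ᶠ t in 𝓝[>] (0:ℝ), 0 < t := self_mem_nhdsWithin
  have hxK : ∀ᶠ t in 𝓝[>] (0:ℝ), x t ∈ K \ {0} := by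
    filter_upwards [hev_r, hev_pos] with t h1t h2t
    refine ⟨hKadd u huK _ (hKsmul t h2t.le v hvK), ?_⟩
    simp only [Set.mem_singleton_iff]
    intro h0
    rw [h0] at h1t
    simp only [norm_zero] at h1t
    linarith
  -- continuity of the constrained inner products
  have hGc : ∀ c : ℝ, Tendsto (fun t : ℝ => ⟪E' (c • x t), x t⟫) (𝓝[>] (0:ℝ))
      (𝓝 ⟪E' (c • u), u⟫) := by
    intro c
    exact ((hE'cont.tendsto _).comp
      (((continuous_const_smul c).tendsto u).comp hxtend)).inner hxtend
  -- Step D1 : st t → 1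
  have hst1 : Tendsto st (𝓝[>] (0:ℝ)) (𝓝 1) := by
    rw [Metric.tendsto_nhds]
    intro ε hε
    set δ : ℝ := min (ε/2) (min ((1 - r/‖u‖)/2) ((R/‖u‖ - 1)/2)) with hδ
    have hru1 : r/‖u‖ < 1 := (div_lt_one hu0).2 hur
    have hRu1 : 1 < R/‖u‖ := (one_lt_div hu0).2 huR
    have hδpos : 0 < δ := lt_min (by linarith) (lt_min (by linarith) (by linarith))
    have hδε : δ < ε := lt_of_le_of_lt (min_le_left _ _) (by linarith)
    have hδr : r/‖u‖ < 1 - δ := by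
      have h2 : δ ≤ (1 - r/‖u‖)/2 := le_trans (min_le_right _ _) (min_le_left _ _)
      linarith
    have hδR : 1 + δ < R/‖u‖ := by
      have h2 : δ ≤ (R/‖u‖ - 1)/2 := le_trans (min_le_right _ _) (min_le_right _ _)
      linarith
    have h1u := h1 u ⟨huK, by simp [hune]⟩
    have hGm : 0 < ⟪E' ((1-δ) • u), u⟫ := by
      apply h1u.2.1
      exact ⟨by linarith, by rw [hsu]; linarith⟩
    have hGp : ⟪E' ((1+δ) • u), u⟫ < 0 := by
      apply h1u.2.2
      exact ⟨by rw [hsu]; linarith, by linarith⟩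
    have hevGm : ∀ᶠ t in 𝓝[>] (0:ℝ), 0 < ⟪E' ((1-δ) • x t), x t⟫ :=
      (hGc (1-δ)).eventually_const_lt hGm
    have hevGp : ∀ᶠ t in 𝓝[>] (0:ℝ), ⟪E' ((1+δ) • x t), x t⟫ < 0 :=
      (hGc (1+δ)).eventually_lt_const hGp
    have hrx : Tendsto (fun t => r/‖x t‖) (𝓝[>] (0:ℝ)) (𝓝 (r/‖u‖)) :=
      tendsto_const_nhds.div hxnorm (ne_of_gt hu0)
    have hRx : Tendsto (fun t => R/‖x t‖) (𝓝[>] (0:ℝ)) (𝓝 (R/‖u‖)) :=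
      tendsto_const_nhds.div hxnorm (ne_of_gt hu0)
    have hev1 : ∀ᶠ t in 𝓝[>] (0:ℝ), r/‖x t‖ < 1 - δ := hrx.eventually_lt_const hδr
    have hev2 : ∀ᶠ t in 𝓝[>] (0:ℝ), 1 + δ < R/‖x t‖ := hRx.eventually_const_lt hδR
    filter_upwards [hevGm, hevGp, hev1, hev2, hxK] with t hm hp h1t h2t hxKt
    have h1x := h1 (x t) hxKt
    rw [Real.dist_eq]
    have hub : st t ≤ 1 + δ := by
      by_contra hcon
      push_neg at hcon
      have : 0 < ⟪E' ((1+δ) • x t), x t⟫ := h1x.2.1 _ ⟨by linarith, hcon⟩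
      linarith
    have hlb : 1 - δ ≤ st t := by
      by_contra hcon
      push_neg at hcon
      have : ⟪E' ((1-δ) • x t), x t⟫ < 0 := h1x.2.2 _ ⟨hcon, by linarith⟩
      linarith
    have : |st t - 1| ≤ δ := abs_le.2 ⟨by linarith, by linarith⟩
    linarith
  -- Step D2 : |st t - 1| ≤ C₆ t eventually
  have hD2 : ∀ᶠ t in 𝓝[>] (0:ℝ), |st t - 1| ≤ C₆ * t := by
    set g : ℝ × ℝ → ℝ := fun p => ⟪E' (p.1 • (u + p.2 • v)), u + p.2 • v⟫ with hg
    have hf : HasFDerivAt (fun p : ℝ × ℝ => u + p.2 • v)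
        ((ContinuousLinearMap.snd ℝ ℝ ℝ).smulRight v) ((1:ℝ), (0:ℝ)) :=
      ((hasFDerivAt_snd).smul_const v).const_add u
    have hm : HasFDerivAt (fun p : ℝ × ℝ => p.1 • (u + p.2 • v))
        ((1:ℝ) • ((ContinuousLinearMap.snd ℝ ℝ ℝ).smulRight v) +
          (ContinuousLinearMap.fst ℝ ℝ ℝ).smulRight (u + (0:ℝ) • v)) ((1:ℝ), (0:ℝ)) :=
      (hasFDerivAt_fst).smul hf
    have hDu' : HasFDerivAt E' D ((fun p : ℝ × ℝ => p.1 • (u + p.2 • v)) ((1:ℝ), (0:ℝ))) := by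
      simpa using hDu
    have hEm : HasFDerivAt (fun p : ℝ × ℝ => E' (p.1 • (u + p.2 • v)))
        (D.comp ((1:ℝ) • ((ContinuousLinearMap.snd ℝ ℝ ℝ).smulRight v) +
          (ContinuousLinearMap.fst ℝ ℝ ℝ).smulRight (u + (0:ℝ) • v))) ((1:ℝ), (0:ℝ)) := by
      have := HasFDerivAt.comp (x := ((1:ℝ),(0:ℝ))) hDu' hm
      simpa [Function.comp_def] using this
    have hgD := hEm.inner ℝ hf
    set L := (fderivInnerCLM ℝ (((fun p : ℝ × ℝ => E' (p.1 • (u + p.2 • v))) ((1:ℝ),(0:ℝ))),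
        ((fun p : ℝ × ℝ => u + p.2 • v) ((1:ℝ),(0:ℝ))))).comp
        ((D.comp ((1:ℝ) • ((ContinuousLinearMap.snd ℝ ℝ ℝ).smulRight v) +
          (ContinuousLinearMap.fst ℝ ℝ ℝ).smulRight (u + (0:ℝ) • v))).prod
          ((ContinuousLinearMap.snd ℝ ℝ ℝ).smulRight v)) with hL
    have hgD' : HasFDerivAt g L ((1:ℝ), (0:ℝ)) := hgD
    have hLval : ∀ a b : ℝ, L (a, b) = a * ⟪D u, u⟫ + b * (⟪D v, u⟫ + ⟪E' u, v⟫) := by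
      intro a b
      simp only [hL, ContinuousLinearMap.comp_apply, ContinuousLinearMap.prod_apply,
        fderivInnerCLM_apply, ContinuousLinearMap.add_apply, ContinuousLinearMap.smul_apply,
        ContinuousLinearMap.smulRight_apply, ContinuousLinearMap.coe_fst',
        ContinuousLinearMap.coe_snd']
      simp only [zero_smul, add_zero, one_smul, smul_eq_mul, one_mul]
      rw [map_add, map_smul, map_smul]
      simp only [inner_add_left, inner_add_right, real_inner_smul_left, real_inner_smul_right,
        inner_smul_left, RCLike.conj_to_real]
      ring
    have hφ : Tendsto (fun t : ℝ => ((st t, t) : ℝ × ℝ)) (𝓝[>] (0:ℝ)) (𝓝 ((1:ℝ), (0:ℝ))) :=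
      hst1.prodMk_nhds (tendsto_id.mono_left nhdsWithin_le_nhds)
    have hLO := (hgD'.isLittleO.comp_tendsto hφ).def (show (0:ℝ) < C₂/2 by linarith)
    have hg10 : g ((1:ℝ), (0:ℝ)) = 0 := by
      simpa [hg] using hEu
    filter_upwards [hLO, hxK, hev_pos] with t hLOt hxKt htpos
    have hgval : g (st t, t) = 0 := by
      have := hzero (x t) hxKt
      simpa [hg, hx, hst] using this
    simp only [Function.comp] at hLOt
    rw [hgval, hg10] at hLOt
    have hsub : ((st t, t) - ((1:ℝ), (0:ℝ))) = ((st t - 1, t) : ℝ × ℝ) := by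
      simp [Prod.ext_iff]
    rw [hsub, hLval] at hLOt
    have hnorm : ‖((st t - 1, t) : ℝ × ℝ)‖ ≤ |st t - 1| + t := by
      rw [Prod.norm_def]
      simp only [Real.norm_eq_abs]
      rw [abs_of_pos htpos]
      exact max_le (le_add_of_nonneg_right htpos.le) (le_add_of_nonneg_left (abs_nonneg _))
    simp only [Real.norm_eq_abs, zero_sub, abs_neg, sub_zero] at hLOt
    -- now extract the bound
    have hB : |⟪D v, u⟫ + ⟪E' u, v⟫| ≤ Cb * ‖v‖ := hCb
    have habs1 : |(st t - 1) * ⟪D u, u⟫| = |st t - 1| * |⟪D u, u⟫| := abs_mul _ _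
    have habs2 : |t * (⟪D v, u⟫ + ⟪E' u, v⟫)| = t * |⟪D v, u⟫ + ⟪E' u, v⟫| := by
      rw [abs_mul, abs_of_pos htpos]
    have key1 : C₂ * |st t - 1| ≤ |(st t - 1) * ⟪D u, u⟫| := by
      rw [habs1, mul_comm C₂ _]
      exact mul_le_mul_of_nonneg_left hA (abs_nonneg _)
    have key2 : |(st t - 1) * ⟪D u, u⟫| ≤
        |(st t - 1) * ⟪D u, u⟫ + t * (⟪D v, u⟫ + ⟪E' u, v⟫)| + t * (Cb * ‖v‖) := by
      have h3 : |t * (⟪D v, u⟫ + ⟪E' u, v⟫)| ≤ t * (Cb * ‖v‖) := by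
        rw [habs2]
        exact mul_le_mul_of_nonneg_left hB htpos.le
      have h5 : |(st t - 1) * ⟪D u, u⟫| ≤
          |(st t - 1) * ⟪D u, u⟫ + t * (⟪D v, u⟫ + ⟪E' u, v⟫)| +
          |t * (⟪D v, u⟫ + ⟪E' u, v⟫)| := by
        have := abs_sub ((st t - 1) * ⟪D u, u⟫ + t * (⟪D v, u⟫ + ⟪E' u, v⟫))
          (t * (⟪D v, u⟫ + ⟪E' u, v⟫))
        rw [add_sub_cancel_right] at this
        exact this
      linarith
    have key3 : |(st t - 1) * ⟪D u, u⟫ + t * (⟪D v, u⟫ + ⟪E' u, v⟫)| ≤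
        C₂/2 * (|st t - 1| + t) := by
      calc |(st t - 1) * ⟪D u, u⟫ + t * (⟪D v, u⟫ + ⟪E' u, v⟫)| ≤
          C₂/2 * ‖((st t - 1, t) : ℝ × ℝ)‖ := hLOt
        _ ≤ C₂/2 * (|st t - 1| + t) := by
            exact mul_le_mul_of_nonneg_left hnorm (by linarith)
    have hdiv : 2 * Cb * ‖v‖ / C₂ * C₂ = 2 * Cb * ‖v‖ := div_mul_cancel₀ _ (ne_of_gt hC₂)
    have : C₂ * |st t - 1| ≤ C₂/2 * (|st t - 1| + t) + t * (Cb * ‖v‖) := by linarith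
    rw [hC₆]
    nlinarith [abs_nonneg (st t - 1)]
  -- eventual bounds on st
  have hstbnd : ∀ᶠ t in 𝓝[>] (0:ℝ), st t ≤ 2 ∧ 1/2 ≤ st t := by
    have := Metric.tendsto_nhds.mp hst1 (1/2) (by norm_num)
    filter_upwards [this] with t ht
    rw [Real.dist_eq, abs_lt] at ht
    constructor <;> linarith [ht.1, ht.2]
  -- the curve in 𝒩
  have hwt𝒩 : ∀ᶠ t in 𝓝[>] (0:ℝ), st t • x t ∈ 𝒩 := by
    filter_upwards [hxK] with t hxKt
    rw [h𝒩]
    exact ⟨x t, hxKt, rfl⟩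
  have hwtend : Tendsto (fun t => st t • x t) (𝓝[>] (0:ℝ)) (𝓝 u) := by
    have := hst1.smul hxtend
    simpa using this
  have hwsub : ∀ t, st t • x t - u = (st t - 1) • u + (st t * t) • v := by
    intro t
    simp only [hx, smul_add, smul_smul]
    module
  have hwnorm : ∀ᶠ t in 𝓝[>] (0:ℝ), ‖st t • x t - u‖ ≤ C₇ * t := by
    filter_upwards [hD2, hstbnd, hev_pos] with t h2 h3 htpos
    rw [hwsub]
    calc ‖(st t - 1) • u + (st t * t) • v‖ ≤ ‖(st t - 1) • u‖ + ‖(st t * t) • v‖ :=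
        norm_add_le _ _
      _ = |st t - 1| * ‖u‖ + |st t * t| * ‖v‖ := by rw [norm_smul, norm_smul]; simp [abs_mul]
      _ ≤ (C₆ * t) * R + (2 * t) * ‖v‖ := by
          have h5 : |st t * t| = st t * t := abs_of_nonneg (by nlinarith [h3.2])
          have h6 : st t * t ≤ 2 * t := by nlinarith [h3.1]
          have h7 : |st t - 1| * ‖u‖ ≤ (C₆ * t) * ‖u‖ :=
            mul_le_mul_of_nonneg_right h2 (norm_nonneg u)
          have h8 : (C₆ * t) * ‖u‖ ≤ (C₆ * t) * R := by
            apply mul_le_mul_of_nonneg_left huR.le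
            positivity
          have h9 : |st t * t| * ‖v‖ ≤ (2*t) * ‖v‖ := by
            rw [h5]; exact mul_le_mul_of_nonneg_right h6 (norm_nonneg v)
          linarith
      _ = C₇ * t := by rw [hC₇]; ring
  -- the inner product along the curve
  have hIP : ∀ t, ⟪E' u, st t • x t - u⟫ = (st t * t) * ⟪E' u, v⟫ := by
    intro t
    rw [hwsub]
    rw [inner_add_right, real_inner_smul_right, real_inner_smul_right, hEu]
    ring
  -- main claim with ε'
  have hclaim : ∀ ε' : ℝ, 0 < ε' → -((lam + ε') * C₇) ≤ ⟪E' u, v⟫ := by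
    intro ε' hε'
    have hTay := (hgradu.hasFDerivAt.isLittleO.comp_tendsto hwtend).def hε'
    have hev : ∀ᶠ t in 𝓝[>] (0:ℝ),
        -((lam + ε') * C₇) ≤ st t * ⟪E' u, v⟫ := by
      filter_upwards [hTay, hwt𝒩, hwnorm, hev_pos] with t hTt hN𝒩 hwn htpos
      simp only [Function.comp] at hTt
      rw [InnerProductSpace.toDual_apply_apply] at hTt
      have hEkt := hEk _ hN𝒩
      set w := st t • x t
      set n := ‖w - u‖
      have hn0 : 0 ≤ n := norm_nonneg _
      have hTt' : |E w - E u - ⟪E' u, w - u⟫| ≤ ε' * n := by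
        simpa [Real.norm_eq_abs] using hTt
      rw [hIP t] at hTt'
      have h2t : E u - E w ≤ lam * n := by linarith [hEkt]
      have h3t : -((lam + ε') * (C₇ * t)) ≤ (st t * t) * ⟪E' u, v⟫ := by
        have habs := abs_le.1 hTt'
        have hnle : n ≤ C₇ * t := hwn
        nlinarith [habs.1, habs.2]
      have hgoal : -((lam + ε') * C₇) * t ≤ (st t * ⟪E' u, v⟫) * t := by
        calc -((lam + ε') * C₇) * t = -((lam + ε') * (C₇ * t)) := by ring
          _ ≤ (st t * t) * ⟪E' u, v⟫ := h3t
          _ = (st t * ⟪E' u, v⟫) * t := by ring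
      exact le_of_mul_le_mul_right hgoal htpos
    have htendX : Tendsto (fun t => st t * ⟪E' u, v⟫) (𝓝[>] (0:ℝ)) (𝓝 ⟪E' u, v⟫) := by
      have := hst1.mul_const (⟪E' u, v⟫)
      simpa using this
    exact ge_of_tendsto htendX hev
  -- conclude
  by_contra hcon
  push_neg at hcon
  set X := ⟪E' u, v⟫
  set ε' : ℝ := (-(lam * C₇) - X) / (2 * C₇) with hε'def
  have hε'pos : 0 < ε' := by
    apply div_pos
    · linarith
    · linarith
  have := hclaim ε' hε'pos
  have hmul : ε' * C₇ = (-(lam * C₇) - X)/2 := by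
    rw [hε'def]
    field_simp
  nlinarith

open scoped RealInnerProductSpace

set_option maxHeartbeats 1000000 in
/-- Existence of a ground state on the Nehari-type set when the
operator `N(u) = u - E'(u)` is completely continuous. -/
theorem nehari_ground_state
    {H : Type*} [NormedAddCommGroup H] [InnerProductSpace ℝ H] [CompleteSpace H]
    (E : H → ℝ) (E' : H → H) (E'' : H → H → H → ℝ)
    (hE : ContDiff ℝ 2 E)
    (hgrad : ∀ u, HasGradientAt E (E' u) u)
    (hE'' : ∀ u z y, Tendsto (fun t : ℝ => (1 / t) * ⟪E' (u + t • y) - E' u, z⟫)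
      (nhdsWithin 0 (Ioi 0)) (nhds (E'' u z y)))
    (K : Set H) (hKne : (K \ {0}).Nonempty) (hKclosed : IsClosed K)
    (hKsmul : ∀ c : ℝ, 0 ≤ c → ∀ u ∈ K, c • u ∈ K)
    (hKadd : ∀ u ∈ K, ∀ v ∈ K, u + v ∈ K)
    (hN : ∀ u ∈ K, u - E' u ∈ K)
    (r R : ℝ) (hr : 0 < r) (hrR : r < R)
    (s : H → ℝ)
    (h1 : ∀ u ∈ K \ {0}, s u ∈ Ioo (r / ‖u‖) (R / ‖u‖) ∧
      (∀ τ ∈ Ico (r / ‖u‖) (s u), 0 < ⟪E' (τ • u), u⟫) ∧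
      (∀ τ ∈ Ioc (s u) (R / ‖u‖), ⟪E' (τ • u), u⟫ < 0))
    (𝒩 : Set H) (h𝒩 : 𝒩 = {w | ∃ u ∈ K \ {0}, w = s u • u})
    (h𝒩closed : IsClosed 𝒩)
    -- (h2)
    (h2 : BddBelow (E '' 𝒩))
    -- (h3)
    (C₁ : ℝ) (hC₁ : 0 < C₁)
    (h3 : ∀ u ∈ 𝒩, ∀ w₁ w₂ : H, ‖w₁‖ = 1 → ‖w₂‖ = 1 → |E'' u w₁ w₂| ≤ C₁)
    -- (h4)
    (C₂ : ℝ) (hC₂ : 0 < C₂)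
    (h4 : ∀ u ∈ 𝒩, C₂ ≤ |E'' u u u|)
    -- N is completely continuous
    (hNcont : Continuous (fun u : H => u - E' u))
    (hNcompact : ∀ B : Set H, Bornology.IsBounded B →
      IsCompact (closure ((fun u : H => u - E' u) '' B))) :
    ∃ u : H, u ∈ 𝒩 ∧ E u = sInf (E '' 𝒩) ∧ E' u = 0 := by
  classical
  have hR : (0:ℝ) < R := hr.trans hrR
  -- continuity of E'
  have hE'cont : Continuous E' := by
    have : E' = fun u => u - (u - E' u) := by funext u; abel
    rw [this]
    exact continuous_id.sub hNcont
  -- E' is C¹ ; its derivative D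
  have hE'cd : ContDiff ℝ 1 E' := grad_contDiff E E' hE hgrad
  set D : H → H →L[ℝ] H := fun u => fderiv ℝ E' u with hD
  have hDu : ∀ u, HasFDerivAt E' (D u) u :=
    fun u => (hE'cd.differentiable one_ne_zero u).hasFDerivAt
  have hEpp : ∀ u z y, E'' u z y = ⟪(D u) y, z⟫ :=
    fun u z y => Epp_eq E' E'' u z y (D u) (hDu u) (hE'' u z y)
  -- the Nehari identity : G (s x) x = 0
  have hGcont : ∀ u : H, Continuous fun τ : ℝ => ⟪E' (τ • u), u⟫ := by
    intro u
    exact (hE'cont.comp (continuous_id.smul continuous_const)).inner continuous_const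
  have hzero : ∀ x ∈ K \ {0}, ⟪E' (s x • x), x⟫ = 0 := by
    intro x hx
    have hxne : x ≠ 0 := by simpa using hx.2
    have h0x : 0 < ‖x‖ := norm_pos_iff.2 hxne
    have h1x := h1 x hx
    have hcont : ContinuousAt (fun τ : ℝ => ⟪E' (τ • x), x⟫) (s x) := (hGcont x).continuousAt
    have hle : 0 ≤ ⟪E' (s x • x), x⟫ := by
      have htd : Tendsto (fun τ : ℝ => ⟪E' (τ • x), x⟫) (𝓝[<] (s x)) (𝓝 ⟪E' (s x • x), x⟫) :=
        hcont.continuousWithinAt.tendsto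
      have hmem : Ioo (r / ‖x‖) (s x) ∈ 𝓝[<] (s x) := Ioo_mem_nhdsLT h1x.1.1
      refine ge_of_tendsto htd ?_
      filter_upwards [hmem] with τ hτ
      exact (h1x.2.1 τ ⟨hτ.1.le, hτ.2⟩).le
    have hge : ⟪E' (s x • x), x⟫ ≤ 0 := by
      have htd : Tendsto (fun τ : ℝ => ⟪E' (τ • x), x⟫) (𝓝[>] (s x)) (𝓝 ⟪E' (s x • x), x⟫) :=
        hcont.continuousWithinAt.tendsto
      have hmem : Ioo (s x) (R / ‖x‖) ∈ 𝓝[>] (s x) := Ioo_mem_nhdsGT h1x.1.2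
      refine le_of_tendsto htd ?_
      filter_upwards [hmem] with τ hτ
      exact (h1x.2.2 τ ⟨hτ.1, hτ.2.le⟩).le
    linarith
  -- basic facts about points of 𝒩
  have h𝒩fact : ∀ w ∈ 𝒩, w ∈ K ∧ w ≠ 0 ∧ r < ‖w‖ ∧ ‖w‖ < R ∧ s w = 1 ∧ ⟪E' w, w⟫ = 0 := by
    intro w hw
    rw [h𝒩] at hw
    obtain ⟨u, hu, rfl⟩ := hw
    have hune : u ≠ 0 := by simpa using hu.2
    have h0u : 0 < ‖u‖ := norm_pos_iff.2 hune
    have h1u := h1 u hu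
    have hspos : 0 < s u := lt_trans (by positivity) h1u.1.1
    have hnorm : ‖s u • u‖ = s u * ‖u‖ := by
      rw [norm_smul, Real.norm_eq_abs, abs_of_pos hspos]
    have hwr : r < ‖s u • u‖ := by
      rw [hnorm]
      have := h1u.1.1
      rw [div_lt_iff₀ h0u] at this
      linarith
    have hwR : ‖s u • u‖ < R := by
      rw [hnorm]
      have := h1u.1.2
      rw [lt_div_iff₀ h0u] at this
      linarith
    have hwK : s u • u ∈ K := hKsmul (s u) hspos.le u hu.1
    have hwne : s u • u ≠ 0 := by
      intro h0
      rw [h0, norm_zero] at hwr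
      linarith
    have hwinner : ⟪E' (s u • u), s u • u⟫ = 0 := by
      rw [real_inner_smul_right, hzero u hu, mul_zero]
    refine ⟨hwK, hwne, hwr, hwR, ?_, hwinner⟩
    -- s w = 1
    have h1w := h1 (s u • u) ⟨hwK, by simpa using hwne⟩
    have hG1 : ⟪E' ((1:ℝ) • (s u • u)), s u • u⟫ = 0 := by
      rw [one_smul]; exact hwinner
    have h0w : 0 < ‖s u • u‖ := norm_pos_iff.2 hwne
    rcases lt_trichotomy (s (s u • u)) 1 with hlt | heq | hgt
    · exfalso
      have := h1w.2.2 1 ⟨hlt, by rw [le_div_iff₀ h0w]; linarith⟩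
      rw [hG1] at this
      exact lt_irrefl 0 this
    · exact heq
    · exfalso
      have := h1w.2.1 1 ⟨by rw [div_le_one h0w]; linarith, hgt⟩
      rw [hG1] at this
      exact lt_irrefl 0 this
  -- 𝒩 is nonempty
  obtain ⟨u₀, hu₀⟩ := hKne
  have h𝒩ne : 𝒩.Nonempty := ⟨s u₀ • u₀, by rw [h𝒩]; exact ⟨u₀, hu₀, rfl⟩⟩
  -- bilinear bound from (h3)
  have hD3 : ∀ w ∈ 𝒩, ∀ y z : H, |⟪(D w) y, z⟫| ≤ C₁ * ‖y‖ * ‖z‖ := by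
    intro w hw y z
    rcases eq_or_ne y 0 with rfl | hy
    · simp
    rcases eq_or_ne z 0 with rfl | hz
    · simp
    have hy0 : 0 < ‖y‖ := norm_pos_iff.2 hy
    have hz0 : 0 < ‖z‖ := norm_pos_iff.2 hz
    have hyn : ‖(‖y‖⁻¹ • y)‖ = 1 := by
      rw [norm_smul, Real.norm_eq_abs, abs_of_pos (by positivity)]
      field_simp
    have hzn : ‖(‖z‖⁻¹ • z)‖ = 1 := by
      rw [norm_smul, Real.norm_eq_abs, abs_of_pos (by positivity)]
      field_simp
    have := h3 w hw (‖z‖⁻¹ • z) (‖y‖⁻¹ • y) hzn hyn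
    rw [hEpp] at this
    rw [map_smul] at this
    rw [real_inner_smul_left, real_inner_smul_right] at this
    rw [abs_mul, abs_mul, abs_of_pos (show (0:ℝ) < ‖y‖⁻¹ by positivity),
      abs_of_pos (show (0:ℝ) < ‖z‖⁻¹ by positivity)] at this
    calc |⟪(D w) y, z⟫| = (‖y‖ * ‖z‖) * (‖y‖⁻¹ * (‖z‖⁻¹ * |⟪(D w) y, z⟫|)) := by
          field_simp
      _ ≤ (‖y‖ * ‖z‖) * C₁ := mul_le_mul_of_nonneg_left this (by positivity)
      _ = C₁ * ‖y‖ * ‖z‖ := by ring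
  have hD4 : ∀ w ∈ 𝒩, C₂ ≤ |⟪(D w) w, w⟫| := by
    intro w hw
    have := h4 w hw
    rwa [hEpp] at this
  -- 𝒩 is bounded, so N(𝒩) has compact closure, hence is norm bounded
  have h𝒩bdd : Bornology.IsBounded 𝒩 := by
    apply (Metric.isBounded_closedBall (x := (0:H)) (r := R)).subset
    intro w hw
    rw [Metric.mem_closedBall, dist_zero_right]
    exact (h𝒩fact w hw).2.2.2.1.le
  obtain ⟨M, hM⟩ := ((hNcompact 𝒩 h𝒩bdd).isBounded.subset subset_closure).subset_closedBall 0
  have hMbd : ∀ w ∈ 𝒩, ‖w - E' w‖ ≤ M := by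
    intro w hw
    have := hM ⟨w, hw, rfl⟩
    rwa [Metric.mem_closedBall, dist_zero_right] at this
  have hM0 : 0 ≤ M := by
    obtain ⟨w, hw⟩ := h𝒩ne
    exact (norm_nonneg _).trans (hMbd w hw)
  have hE'bd : ∀ w ∈ 𝒩, ‖E' w‖ ≤ R + M := by
    intro w hw
    have h1w : E' w = w - (w - E' w) := by abel
    rw [h1w]
    calc ‖w - (w - E' w)‖ ≤ ‖w‖ + ‖w - E' w‖ := norm_sub_le _ _
      _ ≤ R + M := add_le_add (h𝒩fact w hw).2.2.2.1.le (hMbd w hw)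
  -- the constant Cb and the final constant K₀
  set Cb : ℝ := C₁ * R + (R + M) with hCbdef
  have hCb0 : 0 ≤ Cb := by positivity
  have hCbbd : ∀ w ∈ 𝒩, ∀ v : H, |⟪(D w) v, w⟫ + ⟪E' w, v⟫| ≤ Cb * ‖v‖ := by
    intro w hw v
    have h1v := hD3 w hw v w
    have h2v : |⟪E' w, v⟫| ≤ (R + M) * ‖v‖ := by
      calc |⟪E' w, v⟫| ≤ ‖E' w‖ * ‖v‖ := abs_real_inner_le_norm _ _
        _ ≤ (R + M) * ‖v‖ := mul_le_mul_of_nonneg_right (hE'bd w hw) (norm_nonneg v)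
    have h3v : C₁ * ‖v‖ * ‖w‖ ≤ C₁ * R * ‖v‖ := by
      have h := mul_le_mul_of_nonneg_left (h𝒩fact w hw).2.2.2.1.le
        (show (0:ℝ) ≤ C₁ * ‖v‖ by positivity)
      calc C₁ * ‖v‖ * ‖w‖ ≤ C₁ * ‖v‖ * R := h
        _ = C₁ * R * ‖v‖ := by ring
    calc |⟪(D w) v, w⟫ + ⟪E' w, v⟫| ≤ |⟪(D w) v, w⟫| + |⟪E' w, v⟫| := abs_add_le _ _
      _ ≤ C₁ * R * ‖v‖ + (R + M) * ‖v‖ := add_le_add (h1v.trans h3v) h2v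
      _ = Cb * ‖v‖ := by rw [hCbdef]; ring
  set K₀ : ℝ := (2 * Cb * M / C₂ + 1) * R + 2 * M with hK₀def
  have hK₀0 : 0 < K₀ := by positivity
  -- the infimum
  set d : ℝ := sInf (E '' 𝒩) with hd
  have hdle : ∀ w ∈ 𝒩, d ≤ E w := fun w hw => csInf_le h2 ⟨w, hw, rfl⟩
  -- Ekeland step
  have hstep : ∀ n : ℕ, ∃ u ∈ 𝒩, E u ≤ d + 1/(n+1) ∧ ‖E' u‖^2 ≤ (1/(n+1)) * K₀ := by
    intro n
    set lam : ℝ := 1/(n+1) with hlamdef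
    have hlam : 0 < lam := by positivity
    -- starting point
    have hlt : d < d + lam := by linarith
    obtain ⟨y, ⟨x₀, hx₀𝒩, rfl⟩, hx₀⟩ := exists_lt_of_csInf_lt (h𝒩ne.image E) hlt
    -- Ekeland on the subtype
    haveI : CompleteSpace ↥𝒩 := h𝒩closed.completeSpace_coe
    obtain ⟨u, huF, huEk⟩ := my_ekeland (fun p : ↥𝒩 => E p.1)
      (hE.continuous.comp continuous_subtype_val) d (fun p => hdle p.1 p.2)
      lam hlam ⟨x₀, hx₀𝒩⟩
    have hu𝒩 : (u : H) ∈ 𝒩 := u.2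
    have hEk : ∀ w ∈ 𝒩, E u ≤ E w + lam * ‖w - (u:H)‖ := by
      intro w hw
      have := huEk ⟨w, hw⟩
      rwa [Subtype.dist_eq, dist_eq_norm] at this
    obtain ⟨huK, hune, hur, huR, hsu, hEu⟩ := h𝒩fact u hu𝒩
    -- apply the key estimate with v = N u
    set v : H := (u : H) - E' u with hvdef
    have hvK : v ∈ K := hN u huK
    have hvM : ‖v‖ ≤ M := hMbd u hu𝒩
    have hkey := key_estimate E E' hE'cont K hKsmul hKadd r R hr hrR s h1 𝒩 h𝒩 hzero
      u huK hune hsu hur huR (hgrad u) (D u) (hDu u) C₂ hC₂ (hD4 u hu𝒩) hEu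
      v hvK Cb hCb0 (hCbbd u hu𝒩 v) lam hlam hEk
    have hinner : ⟪E' (u:H), v⟫ = -‖E' (u:H)‖^2 := by
      rw [hvdef, inner_sub_right, hEu, real_inner_self_eq_norm_sq]
      ring
    rw [hinner] at hkey
    refine ⟨u, hu𝒩, le_trans huF hx₀.le, ?_⟩
    -- monotonicity in ‖v‖ ≤ M
    have hmono : (2 * Cb * ‖v‖ / C₂ + 1) * R + 2 * ‖v‖ ≤ K₀ := by
      rw [hK₀def]
      have h1m : 2 * Cb * ‖v‖ / C₂ ≤ 2 * Cb * M / C₂ := by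
        apply (div_le_div_iff_of_pos_right hC₂).mpr
        exact mul_le_mul_of_nonneg_left hvM (by positivity)
      have h2m : 2 * ‖v‖ ≤ 2 * M := by linarith
      nlinarith
    have hfin := mul_le_mul_of_nonneg_left hmono hlam.le
    have h9 : ‖E' (u:H)‖^2 ≤ lam * ((2 * Cb * ‖v‖ / C₂ + 1) * R + 2 * ‖v‖) := by
      have := neg_le_neg_iff.mp hkey
      linarith
    exact h9.trans hfin
  -- minimizing sequence
  choose useq h𝒩seq hEseq hE'seq using hstep
  -- E' (useq n) → 0
  have hE'lim : Tendsto (fun n => E' (useq n)) atTop (𝓝 0) := by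
    rw [tendsto_zero_iff_norm_tendsto_zero]
    have hb : ∀ n : ℕ, ‖E' (useq n)‖ ≤ Real.sqrt ((1/(n+1)) * K₀) := by
      intro n
      rw [show ‖E' (useq n)‖ = Real.sqrt (‖E' (useq n)‖^2) by
        rw [Real.sqrt_sq (norm_nonneg _)]]
      exact Real.sqrt_le_sqrt (hE'seq n)
    apply squeeze_zero (fun n => norm_nonneg _) hb
    have h0 : Tendsto (fun n : ℕ => (1/((n:ℝ)+1)) * K₀) atTop (𝓝 0) := by
      have := tendsto_one_div_add_atTop_nhds_zero_nat.mul_const K₀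
      simpa using this
    have := (Real.continuous_sqrt.tendsto 0).comp h0
    simpa [Function.comp_def] using this
  -- extract a convergent subsequence of N (useq n)
  have hmemcl : ∀ n, (useq n) - E' (useq n) ∈ closure ((fun u : H => u - E' u) '' 𝒩) :=
    fun n => subset_closure ⟨useq n, h𝒩seq n, rfl⟩
  obtain ⟨z, hzcl, φ, hφmono, hφlim⟩ := (hNcompact 𝒩 h𝒩bdd).tendsto_subseq hmemcl
  have hφat : Tendsto φ atTop atTop := hφmono.tendsto_atTop
  -- useq (φ k) → z
  have hulim : Tendsto (fun k => useq (φ k)) atTop (𝓝 z) := by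
    have hsum : Tendsto (fun k => (useq (φ k) - E' (useq (φ k))) + E' (useq (φ k)))
        atTop (𝓝 (z + 0)) := hφlim.add ((hE'lim.comp hφat))
    simpa using hsum
  have hz𝒩 : z ∈ 𝒩 := h𝒩closed.mem_of_tendsto hulim (Eventually.of_forall fun k => h𝒩seq (φ k))
  -- E z = d
  have hEzd : E z = d := by
    have h1z : Tendsto (fun k => E (useq (φ k))) atTop (𝓝 (E z)) :=
      (hE.continuous.tendsto z).comp hulim
    have h2z : Tendsto (fun k => E (useq (φ k))) atTop (𝓝 d) := by
      rw [Metric.tendsto_atTop]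
      intro ε hε
      obtain ⟨N0, hN0⟩ := exists_nat_gt (1/ε)
      refine ⟨N0, fun k hk => ?_⟩
      rw [Real.dist_eq, abs_lt]
      have hφk : (N0:ℝ) ≤ (φ k : ℝ) := by
        exact_mod_cast le_trans hk (hφmono.le_apply)
      have hup : E (useq (φ k)) ≤ d + 1/((φ k : ℝ)+1) := hEseq (φ k)
      have hlow : d ≤ E (useq (φ k)) := hdle _ (h𝒩seq (φ k))
      have hsmall : 1/((φ k : ℝ)+1) < ε := by
        rw [div_lt_iff₀ (by positivity)]
        rw [div_lt_iff₀ hε] at hN0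
        nlinarith
      constructor <;> linarith
    exact tendsto_nhds_unique h1z h2z
  -- E' z = 0
  have hE'z : E' z = 0 := by
    have h1z : Tendsto (fun k => E' (useq (φ k))) atTop (𝓝 (E' z)) :=
      (hE'cont.tendsto z).comp hulim
    have h2z : Tendsto (fun k => E' (useq (φ k))) atTop (𝓝 0) := hE'lim.comp hφat
    exact tendsto_nhds_unique h1z h2z
  exact ⟨z, hz𝒩, hEzd, hE'z⟩
end

section
/- Let {rᵢ}₁≤ᵢ≤ₘ and {Rᵢ}₁≤ᵢ≤ₘ be positive reals with 0 < r₁ < R₁ < r₂ < R₂ < … < r_m < R_m < ∞. Suppose that for each pair (rᵢ, Rᵢ) condition (h1) holds with map sᵢ, that conditions (h2)–(h4) hold for each Nehari set 𝒩ᵢ = { sᵢ(u)u : u ∈ K \ {0} } (each 𝒩ᵢ being closed in H), and that the operator N is completely continuous, i.e. continuous and mapping bounded sets into relatively compact sets. Then for each i = 1, …, m there exists uᵢ* ∈ 𝒩ᵢ such that E(uᵢ*) = inf_{𝒩ᵢ} E and E'(uᵢ*) = 0; in particular rᵢ ≤ |uᵢ*|_H ≤ Rᵢ, so the critical points u₁*,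 …, u_m* are pairwise distinct. -/
open Filter Set
open scoped RealInnerProductSpace

section aux
variable {H : Type*} [NormedAddCommGroup H] [InnerProductSpace ℝ H] [CompleteSpace H]


theorem ekeland_aux {S : Set H} (hS : IsClosed S) (f : H → ℝ) (hf : Continuous f)
    (hbdd : BddBelow (f '' S)) {ε : ℝ} (hε : 0 < ε) {u₀ : H} (hu₀ : u₀ ∈ S) :
    ∃ v ∈ S, f v ≤ f u₀ ∧ ∀ w ∈ S, f v - ε * ‖w - v‖ ≤ f w := by
  classical
  set T : H → Set H := fun x => {w ∈ S | f w + ε * ‖w - x‖ ≤ f x} with hT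
  have hTself : ∀ x ∈ S, x ∈ T x := by intro x hx; simp [hT, hx]
  have hTsub : ∀ x, T x ⊆ S := fun x w hw => hw.1
  have hTbdd : ∀ x, BddBelow (f '' T x) := fun x =>
    hbdd.mono (image_mono (f := f) (hTsub x))
  have hnext : ∀ k : ℕ, ∀ x ∈ S, ∃ y, y ∈ T x ∧ f y < sInf (f '' T x) + (1/2)^k := by
    intro k x hx
    have hne : (f '' T x).Nonempty := ⟨f x, mem_image_of_mem f (hTself x hx)⟩
    obtain ⟨z, hz, hlt⟩ := exists_lt_of_csInf_lt hne
      (lt_add_of_pos_right _ (by positivity : (0:ℝ) < (1/2)^k))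
    obtain ⟨y, hyT, rfl⟩ := hz
    exact ⟨y, hyT, hlt⟩
  choose next hnextT hnextlt using hnext
  let u : ℕ → H := fun k => Nat.rec u₀ (fun k x => if hx : x ∈ S then next k x hx else x) k
  have huS : ∀ k, u k ∈ S := by
    intro k; induction k with
    | zero => exact hu₀
    | succ k ih =>
      show (if hx : u k ∈ S then next k (u k) hx else u k) ∈ S
      rw [dif_pos ih]; exact hTsub _ (hnextT k (u k) ih)
  have husucc : ∀ k, u (k+1) ∈ T (u k) ∧ f (u (k+1)) < sInf (f '' T (u k)) + (1/2)^k := by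
    intro k
    have : u (k+1) = next k (u k) (huS k) := by
      show (if hx : u k ∈ S then next k (u k) hx else u k) = _
      rw [dif_pos (huS k)]
    rw [this]
    exact ⟨hnextT k (u k) (huS k), hnextlt k (u k) (huS k)⟩
  have htrans : ∀ x, ∀ y ∈ T x, T y ⊆ T x := by
    intro x y hy w hw
    refine ⟨hw.1, ?_⟩
    have h1 : f w + ε * ‖w - y‖ ≤ f y := hw.2
    have h2 : f y + ε * ‖y - x‖ ≤ f x := hy.2
    have htri : ‖w - x‖ ≤ ‖w - y‖ + ‖y - x‖ := by
      have := dist_triangle w y x; simpa [dist_eq_norm] using this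
    nlinarith [hε.le]
  have hchain : ∀ k l, k ≤ l → u l ∈ T (u k) := by
    intro k l hkl
    induction l with
    | zero => rw [Nat.le_zero.mp hkl]; exact hTself _ (huS 0)
    | succ l ih =>
      rcases Nat.lt_or_ge k (l+1) with h | h
      · have hkl' : k ≤ l := Nat.lt_succ_iff.mp h
        exact htrans (u k) (u l) (ih hkl') (husucc l).1
      · have : k = l + 1 := le_antisymm hkl h
        rw [this]; exact hTself _ (huS (l+1))
  -- f (u k) decreasing, bounded below
  have hmono : ∀ k l, k ≤ l → f (u l) + ε * ‖u l - u k‖ ≤ f (u k) := fun k l h => (hchain k l h).2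
  have hlb : ∀ k, sInf (f '' S) ≤ f (u k) := fun k =>
    csInf_le hbdd (mem_image_of_mem f (huS k))
  have hfmono : Antitone fun k => f (u k) := by
    refine antitone_nat_of_succ_le fun k => ?_
    have := hmono k (k+1) (Nat.le_succ k)
    nlinarith [norm_nonneg (u (k+1) - u k), hε.le]
  have hfconv : ∃ a, Tendsto (fun k => f (u k)) atTop (nhds a) := by
    refine ⟨_, tendsto_atTop_ciInf hfmono ⟨sInf (f '' S), ?_⟩⟩
    rintro x ⟨k, rfl⟩; exact hlb k
  obtain ⟨a, ha⟩ := hfconv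
  have hfcauchy : CauchySeq fun k => f (u k) := ha.cauchySeq
  have hucauchy : CauchySeq u := by
    rw [Metric.cauchySeq_iff'] at hfcauchy ⊢
    intro δ hδ
    obtain ⟨N, hN⟩ := hfcauchy (ε * δ) (by positivity)
    refine ⟨N, fun n hn => ?_⟩
    have h1 := hmono N n hn
    have h2 := hN n hn
    rw [Real.dist_eq] at h2
    have h3 : |f (u n) - f (u N)| < ε * δ := h2
    have h4 : ε * ‖u n - u N‖ ≤ f (u N) - f (u n) := by linarith
    rw [dist_eq_norm]
    have h5 : f (u N) - f (u n) < ε * δ := by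
      cases abs_lt.mp h3 with
      | intro hl hr => linarith
    have := lt_of_le_of_lt h4 h5
    exact lt_of_mul_lt_mul_left (by linarith) hε.le
  obtain ⟨v, hv⟩ := cauchySeq_tendsto_of_complete hucauchy
  have hvS : S ∈ (nhds v : Filter H) → v ∈ S := fun _ => hS.mem_of_tendsto hv (Eventually.of_forall huS)
  have hvS' : v ∈ S := hS.mem_of_tendsto hv (Eventually.of_forall huS)
  have hfv : Tendsto (fun k => f (u k)) atTop (nhds (f v)) := (hf.continuousAt.tendsto.comp hv)
  have hfva : f v = a := tendsto_nhds_unique hfv ha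
  -- v ∈ T (u k) for all k
  have hvT : ∀ k, v ∈ T (u k) := by
    intro k
    have hclosed : IsClosed (T (u k)) := by
      have : T (u k) = S ∩ {w | f w + ε * ‖w - u k‖ ≤ f (u k)} := rfl
      rw [this]
      exact hS.inter (isClosed_le (by continuity) continuous_const)
    refine hclosed.mem_of_tendsto (hv.comp (tendsto_add_atTop_nat k)) (Eventually.of_forall fun l => ?_)
    exact hchain k (l + k) (Nat.le_add_left k l)
  refine ⟨v, hvS', ?_, ?_⟩
  · have := (hvT 0).2
    have h0 : u 0 = u₀ := rfl
    rw [h0] at this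
    nlinarith [norm_nonneg (v - u₀), hε.le]
  · intro w hwS
    by_contra hcon
    push_neg at hcon
    -- w ∈ T v, and w ∈ T (u k) for all k
    have hwTk : ∀ k, w ∈ T (u k) := by
      intro k
      refine htrans (u k) v (hvT k) ⟨hwS, ?_⟩
      linarith
    have hwge : ∀ k, sInf (f '' T (u k)) ≤ f w := fun k =>
      csInf_le (hTbdd (u k)) (mem_image_of_mem f (hwTk k))
    have hge : ∀ k, f (u (k+1)) - (1/2)^k ≤ f w := by
      intro k
      have := (husucc k).2
      have := hwge k
      linarith
    have hlim : Tendsto (fun k => f (u (k+1)) - (1/2:ℝ)^k) atTop (nhds (a - 0)) := by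
      exact ((ha.comp (tendsto_add_atTop_nat 1)).sub
        (tendsto_pow_atTop_nhds_zero_of_lt_one (by norm_num) (by norm_num)))
    have hfwa : a - 0 ≤ f w := le_of_tendsto hlim (Eventually.of_forall hge)
    have : f v ≤ f w := by rw [hfva]; linarith
    have hpos : 0 ≤ ε * ‖w - v‖ := by positivity
    linarith


set_option maxHeartbeats 1600000 in
theorem nehari_single
    (E : H → ℝ) (E' : H → H) (E'' : H → H → H → ℝ)
    (hE : ContDiff ℝ 2 E)
    (hgrad : ∀ u, HasGradientAt E (E' u) u)
    (hE''def : ∀ u z y, Tendsto (fun t : ℝ => (1 / t) * ⟪E' (u + t • y) - E' u, z⟫)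
      (nhdsWithin 0 (Ioi 0)) (nhds (E'' u z y)))
    (K : Set H) (hKne : (K \ {0}).Nonempty)
    (hKsmul : ∀ c : ℝ, 0 ≤ c → ∀ u ∈ K, c • u ∈ K)
    (hKadd : ∀ u ∈ K, ∀ v ∈ K, u + v ∈ K)
    (hN : ∀ u ∈ K, u - E' u ∈ K)
    (r R : ℝ) (hr : 0 < r) (hrR : r < R)
    (s : H → ℝ)
    (h1 : ∀ u ∈ K \ {0}, s u ∈ Ioo (r / ‖u‖) (R / ‖u‖) ∧
      (∀ τ ∈ Ico (r / ‖u‖) (s u), 0 < ⟪E' (τ • u), u⟫) ∧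
      (∀ τ ∈ Ioc (s u) (R / ‖u‖), ⟪E' (τ • u), u⟫ < 0))
    (𝒩 : Set H)
    (h𝒩 : 𝒩 = {w | ∃ u ∈ K \ {0}, w = s u • u})
    (h𝒩closed : IsClosed 𝒩)
    (h2 : BddBelow (E '' 𝒩))
    (C₁ : ℝ) (hC₁ : 0 < C₁)
    (h3 : ∀ u ∈ 𝒩, ∀ w₁ w₂ : H, ‖w₁‖ = 1 → ‖w₂‖ = 1 → |E'' u w₁ w₂| ≤ C₁)
    (C₂ : ℝ) (hC₂ : 0 < C₂)
    (h4 : ∀ u ∈ 𝒩, C₂ ≤ |E'' u u u|)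
    (hNcompact : ∀ B : Set H, Bornology.IsBounded B →
      IsCompact (closure ((fun u : H => u - E' u) '' B))) :
    ∃ v ∈ 𝒩, E v = sInf (E '' 𝒩) ∧ E' v = 0 ∧ r ≤ ‖v‖ ∧ ‖v‖ ≤ R := by
  classical
  -- ======= regularity facts =======
  have hE'c : ContDiff ℝ 1 E' := by
    have h1' : ∀ u, E' u = (InnerProductSpace.toDual ℝ H).symm (fderiv ℝ E u) := by
      intro u; rw [(hgrad u).hasFDerivAt.fderiv]; simp
    have h2' : ContDiff ℝ 1 (fderiv ℝ E) := hE.fderiv_right (by norm_num)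
    rw [funext h1']
    exact (InnerProductSpace.toDual ℝ H).symm.contDiff.comp h2'
  have hE'cont : Continuous E' := hE'c.continuous
  have hEcont : Continuous E := hE.continuous
  have hBcont : Continuous (fderiv ℝ E') := (hE'c.fderiv_right (by norm_num : (0:WithTop ℕ∞) + 1 ≤ 1)).continuous
  have hEE'' : ∀ w z y : H, E'' w z y = ⟪fderiv ℝ E' w y, z⟫ := by
    intro w z y
    have hd : HasFDerivAt E' (fderiv ℝ E' w) (w + (0:ℝ) • y) := by
      simpa using (hE'c.differentiable one_ne_zero w).hasFDerivAt
    have hp : HasDerivAt (fun t : ℝ => w + t • y) y 0 := by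
      simpa using ((hasDerivAt_id (0:ℝ)).smul_const y).const_add w
    have hpath : HasDerivAt (fun t : ℝ => E' (w + t • y)) (fderiv ℝ E' w y) 0 := by
      simpa [Function.comp_def] using hd.comp_hasDerivAt (x := (0:ℝ)) hp
    have hslope := hasDerivAt_iff_tendsto_slope.mp hpath
    have hlim : Tendsto (fun t : ℝ => (1 / t) • (E' (w + t • y) - E' w))
        (nhdsWithin 0 (Ioi 0)) (nhds (fderiv ℝ E' w y)) := by
      have hsub : Ioi (0:ℝ) ⊆ {x | x ≠ 0} := fun x hx => ne_of_gt hx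
      have h' := hslope.mono_left (nhdsWithin_mono 0 hsub)
      refine h'.congr (fun t => ?_)
      simp [slope, one_div, vsub_eq_sub]
    have hlim2 : Tendsto (fun t : ℝ => (1 / t) * ⟪E' (w + t • y) - E' w, z⟫)
        (nhdsWithin 0 (Ioi 0)) (nhds ⟪fderiv ℝ E' w y, z⟫) := by
      have hcont : Continuous fun v : H => ⟪v, z⟫ := continuous_id.inner continuous_const
      have := (hcont.continuousAt (x := fderiv ℝ E' w y)).tendsto.comp hlim
      refine this.congr (fun t => ?_)
      simp [real_inner_smul_left]
    exact tendsto_nhds_unique (hE''def w z y) hlim2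
  -- bilinear bound on 𝒩
  have hbb : ∀ w ∈ 𝒩, ∀ y z : H, |⟪fderiv ℝ E' w y, z⟫| ≤ C₁ * ‖y‖ * ‖z‖ := by
    intro w hw y z
    rcases eq_or_ne y 0 with rfl | hy
    · simp
    rcases eq_or_ne z 0 with rfl | hz
    · simp
    have hyn : 0 < ‖y‖ := norm_pos_iff.mpr hy
    have hzn : 0 < ‖z‖ := norm_pos_iff.mpr hz
    set yh : H := ‖y‖⁻¹ • y with hyh
    set zh : H := ‖z‖⁻¹ • z with hzh
    have hyu : ‖yh‖ = 1 := norm_smul_inv_norm hy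
    have hzu : ‖zh‖ = 1 := norm_smul_inv_norm hz
    have hunit : |⟪fderiv ℝ E' w yh, zh⟫| ≤ C₁ := by
      rw [← hEE'']
      exact h3 w hw zh yh hzu hyu
    have hexp : ⟪fderiv ℝ E' w y, z⟫ = ‖y‖ * (‖z‖ * ⟪fderiv ℝ E' w yh, zh⟫) := by
      have hyy : y = ‖y‖ • yh := by rw [hyh, smul_smul, mul_inv_cancel₀ (ne_of_gt hyn), one_smul]
      have hzz : z = ‖z‖ • zh := by rw [hzh, smul_smul, mul_inv_cancel₀ (ne_of_gt hzn), one_smul]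
      calc ⟪fderiv ℝ E' w y, z⟫ = ⟪fderiv ℝ E' w (‖y‖ • yh), ‖z‖ • zh⟫ := by rw [← hyy, ← hzz]
        _ = ‖y‖ * (‖z‖ * ⟪fderiv ℝ E' w yh, zh⟫) := by
            rw [map_smul, real_inner_smul_left, real_inner_smul_right]
    rw [hexp, abs_mul, abs_mul, abs_of_pos hyn, abs_of_pos hzn]
    calc ‖y‖ * (‖z‖ * |⟪fderiv ℝ E' w yh, zh⟫|) ≤ ‖y‖ * (‖z‖ * C₁) := by
          apply mul_le_mul_of_nonneg_left _ hyn.le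
          exact mul_le_mul_of_nonneg_left hunit hzn.le
      _ = C₁ * ‖y‖ * ‖z‖ := by ring
  -- ======= Nehari set facts =======
  -- zero of the fibre map
  have hzero : ∀ u ∈ K \ {0}, ⟪E' (s u • u), u⟫ = 0 := by
    intro u hu
    obtain ⟨hIoo, hpos, hneg⟩ := h1 u hu
    set φ : ℝ → ℝ := fun τ => ⟪E' (τ • u), u⟫ with hφ
    have hφcont : Continuous φ := by
      apply Continuous.inner _ continuous_const
      exact hE'cont.comp (continuous_id.smul continuous_const)
    have hge : 0 ≤ φ (s u) := by
      have htend : Tendsto φ (nhdsWithin (s u) (Iio (s u))) (nhds (φ (s u))) :=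
        (hφcont.tendsto (s u)).mono_left nhdsWithin_le_nhds
      refine ge_of_tendsto htend ?_
      filter_upwards [Ioo_mem_nhdsLT_of_mem (⟨hIoo.1, le_refl _⟩ : s u ∈ Ioc (r / ‖u‖) (s u))]
        with τ hτ
      exact (hpos τ ⟨hτ.1.le, hτ.2⟩).le
    have hle : φ (s u) ≤ 0 := by
      have htend : Tendsto φ (nhdsWithin (s u) (Ioi (s u))) (nhds (φ (s u))) :=
        (hφcont.tendsto (s u)).mono_left nhdsWithin_le_nhds
      refine le_of_tendsto htend ?_
      filter_upwards [Ioo_mem_nhdsGT_of_mem (⟨le_refl _, hIoo.2⟩ : s u ∈ Ico (s u) (R / ‖u‖))]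
        with τ hτ
      exact (hneg τ ⟨hτ.1, hτ.2.le⟩).le
    exact le_antisymm hle hge
  have hmem𝒩 : ∀ u ∈ K \ {0}, s u • u ∈ 𝒩 := by
    intro u hu; rw [h𝒩]; exact ⟨u, hu, rfl⟩
  have h𝒩facts : ∀ w ∈ 𝒩, w ∈ K \ {0} ∧ r < ‖w‖ ∧ ‖w‖ < R ∧ ⟪E' w, w⟫ = 0 := by
    intro w hw
    rw [h𝒩] at hw
    obtain ⟨u, hu, rfl⟩ := hw
    obtain ⟨hIoo, hpos, hneg⟩ := h1 u hu
    have hune : u ≠ 0 := by simpa using hu.2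
    have hun : 0 < ‖u‖ := norm_pos_iff.mpr hune
    have hspos : 0 < s u := lt_trans (div_pos hr hun) hIoo.1
    have hnorm : ‖s u • u‖ = s u * ‖u‖ := by
      rw [norm_smul, Real.norm_eq_abs, abs_of_pos hspos]
    have hrlt : r < ‖s u • u‖ := by
      rw [hnorm]; exact (div_lt_iff₀ hun).mp hIoo.1
    have hltR : ‖s u • u‖ < R := by
      rw [hnorm]; exact (lt_div_iff₀ hun).mp hIoo.2
    have hKmem : s u • u ∈ K := hKsmul (s u) hspos.le u hu.1
    have hne0 : s u • u ≠ 0 := by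
      intro h0
      rw [h0, norm_zero] at hrlt
      exact absurd hrlt (not_lt.mpr hr.le)
    refine ⟨⟨hKmem, by simpa using hne0⟩, hrlt, hltR, ?_⟩
    rw [real_inner_smul_right]
    rw [hzero u hu, mul_zero]
  have hsone : ∀ w ∈ 𝒩, s w = 1 := by
    intro w hw
    obtain ⟨hwK, hrw, hwR, hinner⟩ := h𝒩facts w hw
    have hwn : 0 < ‖w‖ := lt_trans hr hrw
    obtain ⟨hIoo, hpos, hneg⟩ := h1 w hwK
    have hlt1 : r / ‖w‖ < 1 := (div_lt_one hwn).mpr hrw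
    have hgt1 : 1 < R / ‖w‖ := (one_lt_div hwn).mpr hwR
    rcases lt_trichotomy (s w) 1 with h | h | h
    · have := hneg 1 ⟨h, hgt1.le⟩
      rw [one_smul, hinner] at this
      exact absurd this (lt_irrefl 0)
    · exact h
    · have := hpos 1 ⟨hlt1.le, h⟩
      rw [one_smul, hinner] at this
      exact absurd this (lt_irrefl 0)
  have h𝒩ne : 𝒩.Nonempty := by
    obtain ⟨u, hu⟩ := hKne
    exact ⟨s u • u, hmem𝒩 u hu⟩
  -- ======= bound on E' over the ball =======
  obtain ⟨M, hM⟩ : ∃ M : ℝ, R < M ∧ ∀ x : H, ‖x‖ ≤ R + r → ‖E' x‖ ≤ M := by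
    have hb : Bornology.IsBounded (Metric.closedBall (0:H) (R + r)) :=
      Metric.isBounded_closedBall
    have hcpt := hNcompact _ hb
    obtain ⟨C, hC⟩ := isBounded_iff_forall_norm_le.mp hcpt.isBounded
    refine ⟨R + r + max C 0 + 1, by have := le_max_right C 0; linarith, fun x hx => ?_⟩
    have hmem : x - E' x ∈ closure ((fun u : H => u - E' u) '' Metric.closedBall 0 (R + r)) := by
      apply subset_closure
      exact mem_image_of_mem _ (by simpa [Metric.mem_closedBall, dist_eq_norm] using hx)
    have h1'' := hC _ hmem
    have h2'' : ‖E' x‖ ≤ ‖x‖ + ‖x - E' x‖ := by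
      have := norm_sub_le x (x - E' x)
      simpa [sub_sub_cancel] using this
    have := le_max_left C 0
    linarith
  obtain ⟨hMR, hMbound⟩ := hM
  have hMpos : 0 < M := lt_trans (lt_trans hr hrR) hMR
  -- ======= the key estimate =======
  set ψmax : ℝ := 2 * R / r with hψmax
  set A : ℝ := ψmax * (C₁ * M * (R + r)) + M * M with hA
  set L : ℝ := A * ψmax ^ 2 / C₂ with hL
  set c₅ : ℝ := L * R + ψmax * M with hc₅
  have hRpos : 0 < R := hr.trans hrR
  have hψmaxpos : 0 < ψmax := by rw [hψmax]; exact div_pos (by linarith) hr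
  have hApos : 0 < A := by
    rw [hA]
    have : 0 < C₁ * M * (R + r) := by
      apply mul_pos (mul_pos hC₁ hMpos); linarith
    nlinarith [hMpos]
  have hLpos : 0 < L := by
    rw [hL]
    apply div_pos _ hC₂
    exact mul_pos hApos (by positivity)
  have hc₅pos : 0 < c₅ := by
    rw [hc₅]
    have := mul_pos hLpos hRpos
    have := mul_pos hψmaxpos hMpos
    linarith
  have key : ∀ u ∈ 𝒩, ∀ ε : ℝ, 0 < ε → (∀ w ∈ 𝒩, E u - ε * ‖w - u‖ ≤ E w) →
      ‖E' u‖ ^ 2 ≤ 4 * c₅ * ε := by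
    intro u hu ε hε hmin
    obtain ⟨huK, hru, huR, hiuu⟩ := h𝒩facts u hu
    rcases eq_or_ne (E' u) 0 with h0 | h0
    · rw [h0, norm_zero]; nlinarith [hc₅pos]
    set h : H := -(E' u) with hh
    have hhM : ‖h‖ ≤ M := by
      rw [hh, norm_neg]; exact hMbound u (by linarith)
    set δ₀ : ℝ := min 1 (r / (2 * M)) with hδ₀
    have hδ₀pos : 0 < δ₀ := lt_min one_pos (by positivity)
    have hδ₀le1 : δ₀ ≤ 1 := min_le_left _ _
    have hδ₀leM : δ₀ * M ≤ r / 2 := by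
      have h1' : δ₀ ≤ r / (2 * M) := min_le_right _ _
      calc δ₀ * M ≤ (r / (2*M)) * M := by nlinarith [hMpos]
        _ = r / 2 := by
            have hM0 : M ≠ 0 := ne_of_gt hMpos
            field_simp
    set I : Set ℝ := Icc (0:ℝ) δ₀ with hIdef
    set vv : ℝ → H := fun δ => u + δ • h with hvv
    have hvnorm : ∀ δ ∈ I, r/2 ≤ ‖vv δ‖ ∧ ‖vv δ‖ ≤ R + r/2 := by
      intro δ hδ
      obtain ⟨hδ0, hδδ₀⟩ := hδ
      have hn : ‖δ • h‖ ≤ r/2 := by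
        rw [norm_smul, Real.norm_eq_abs, abs_of_nonneg hδ0]
        calc δ * ‖h‖ ≤ δ₀ * M := by nlinarith [norm_nonneg h, hMpos]
          _ ≤ r/2 := hδ₀leM
      constructor
      · have hueq : ‖u‖ ≤ ‖vv δ‖ + ‖δ • h‖ := by
          calc ‖u‖ = ‖vv δ - δ • h‖ := by rw [hvv]; simp
            _ ≤ ‖vv δ‖ + ‖δ • h‖ := norm_sub_le _ _
        linarith
      · calc ‖vv δ‖ ≤ ‖u‖ + ‖δ • h‖ := norm_add_le _ _
          _ ≤ R + r/2 := by linarith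
    have hvK : ∀ δ ∈ I, vv δ ∈ K \ {0} := by
      intro δ hδ
      obtain ⟨hδ0, hδδ₀⟩ := hδ
      constructor
      · have heq : vv δ = (1 - δ) • u + δ • (u - E' u) := by
          rw [hvv, hh]; module
        rw [heq]
        exact hKadd _ (hKsmul _ (by linarith) u huK.1) _ (hKsmul _ hδ0 _ (hN u huK.1))
      · intro h0'
        have hge := (hvnorm δ ⟨hδ0, hδδ₀⟩).1
        rw [mem_singleton_iff] at h0'
        rw [h0', norm_zero] at hge; linarith
    set ψ : ℝ → ℝ := fun δ => s (vv δ) with hψ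
    set ww : ℝ → H := fun δ => ψ δ • vv δ with hww
    have hw𝒩 : ∀ δ ∈ I, ww δ ∈ 𝒩 := fun δ hδ => hmem𝒩 _ (hvK δ hδ)
    have hψIoo : ∀ δ ∈ I, ψ δ ∈ Ioo (r / ‖vv δ‖) (R / ‖vv δ‖) := fun δ hδ => (h1 _ (hvK δ hδ)).1
    have hψpos : ∀ δ ∈ I, 0 < ψ δ := by
      intro δ hδ
      have h1' := (hψIoo δ hδ).1
      have hvpos : 0 < ‖vv δ‖ := lt_of_lt_of_le (by positivity) (hvnorm δ hδ).1
      exact lt_trans (div_pos hr hvpos) h1'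
    have hψlt : ∀ δ ∈ I, ψ δ < ψmax := by
      intro δ hδ
      have h2' := (hψIoo δ hδ).2
      have hv2 := (hvnorm δ hδ).1
      have hrh : (0:ℝ) < r/2 := by positivity
      calc ψ δ < R / ‖vv δ‖ := h2'
        _ ≤ R / (r/2) := by
            apply div_le_div_of_nonneg_left hRpos.le hrh hv2
        _ = ψmax := by rw [hψmax]; field_simp
    have hψ0 : ψ 0 = 1 := by
      have hveq : vv 0 = u := by
        simp only [hvv]
        simp
      simp only [hψ, hveq]
      exact hsone u hu
    set Φf : ℝ → ℝ → ℝ := fun δ τ => ⟪E' (τ • vv δ), vv δ⟫ with hΦf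
    set Pf : ℝ → ℝ → ℝ := fun δ τ => ⟪(fderiv ℝ E' (τ • vv δ)) (vv δ), vv δ⟫ with hPf
    set Qf : ℝ → ℝ → ℝ := fun δ τ =>
      τ * ⟪(fderiv ℝ E' (τ • vv δ)) h, vv δ⟫ + ⟪E' (τ • vv δ), h⟫ with hQf
    have hvvc : Continuous vv := continuous_const.add (continuous_id.smul continuous_const)
    have hvvc2 : Continuous (fun p : ℝ × ℝ => vv p.1) := hvvc.comp continuous_fst
    have hac : Continuous (fun p : ℝ × ℝ => p.2 • vv p.1) := continuous_snd.smul hvvc2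
    have hΦc : Continuous (fun p : ℝ × ℝ => Φf p.1 p.2) := by
      simp only [hΦf]
      exact (hE'cont.comp hac).inner hvvc2
    have hPc : Continuous (fun p : ℝ × ℝ => Pf p.1 p.2) := by
      simp only [hPf]
      exact ((hBcont.comp hac).clm_apply hvvc2).inner hvvc2
    have hQc : Continuous (fun p : ℝ × ℝ => Qf p.1 p.2) := by
      simp only [hQf]
      apply Continuous.add
      · exact continuous_snd.mul (((hBcont.comp hac).clm_apply continuous_const).inner hvvc2)
      · exact (hE'cont.comp hac).inner continuous_const
    have hΦzero : ∀ δ ∈ I, Φf δ (ψ δ) = 0 := fun δ hδ => hzero _ (hvK δ hδ)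
    have hΦpos : ∀ δ ∈ I, ∀ τ ∈ Ico (r/‖vv δ‖) (ψ δ), 0 < Φf δ τ :=
      fun δ hδ => (h1 _ (hvK δ hδ)).2.1
    have hΦneg : ∀ δ ∈ I, ∀ τ ∈ Ioc (ψ δ) (R/‖vv δ‖), Φf δ τ < 0 :=
      fun δ hδ => (h1 _ (hvK δ hδ)).2.2
    -- bounds on the branch
    have hPbranch : ∀ δ ∈ I, C₂ / ψmax^2 ≤ |Pf δ (ψ δ)| := by
      intro δ hδ
      have h4' := h4 _ (hw𝒩 δ hδ)
      rw [hEE''] at h4'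
      have hexp : ⟪(fderiv ℝ E' (ww δ)) (ww δ), ww δ⟫ = ψ δ^2 * Pf δ (ψ δ) := by
        show ⟪(fderiv ℝ E' (ψ δ • vv δ)) (ψ δ • vv δ), ψ δ • vv δ⟫ = _
        rw [map_smul, real_inner_smul_left, real_inner_smul_right, hPf]
        ring
      rw [hexp] at h4'
      have hψp := hψpos δ hδ
      have hψl := hψlt δ hδ
      rw [abs_mul, abs_of_pos (by positivity : (0:ℝ) < ψ δ^2)] at h4'
      rw [div_le_iff₀ (by positivity)]
      have hle2 : ψ δ^2 * |Pf δ (ψ δ)| ≤ ψmax^2 * |Pf δ (ψ δ)| := by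
        apply mul_le_mul_of_nonneg_right _ (abs_nonneg _)
        nlinarith
      nlinarith
    have hPne : ∀ δ ∈ I, Pf δ (ψ δ) ≠ 0 := by
      intro δ hδ h0'
      have hb' := hPbranch δ hδ
      rw [h0', abs_zero] at hb'
      have hq : (0:ℝ) < C₂ / ψmax^2 := div_pos hC₂ (by positivity)
      linarith
    have hQbranch : ∀ δ ∈ I, |Qf δ (ψ δ)| ≤ A := by
      intro δ hδ
      have hψp := hψpos δ hδ
      have hψl := hψlt δ hδ
      have hQ1 : |⟪(fderiv ℝ E' (ψ δ • vv δ)) h, vv δ⟫| ≤ C₁ * M * (R + r) := by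
        have hb' := hbb _ (hw𝒩 δ hδ) h (vv δ)
        simp only [hww] at hb'
        have hv2 := (hvnorm δ hδ).2
        calc |⟪(fderiv ℝ E' (ψ δ • vv δ)) h, vv δ⟫| ≤ C₁ * ‖h‖ * ‖vv δ‖ := hb'
          _ ≤ C₁ * M * (R + r) := by
              apply mul_le_mul _ (by linarith) (norm_nonneg _) (by positivity)
              exact mul_le_mul_of_nonneg_left hhM hC₁.le
      have hQ2 : |⟪E' (ψ δ • vv δ), h⟫| ≤ M * M := by
        have hcs := abs_real_inner_le_norm (E' (ψ δ • vv δ)) h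
        have hwwR : ‖ww δ‖ < R := (h𝒩facts _ (hw𝒩 δ hδ)).2.2.1
        have hEw : ‖E' (ψ δ • vv δ)‖ ≤ M := by
          apply hMbound
          calc ‖ψ δ • vv δ‖ = ‖ww δ‖ := rfl
            _ ≤ R + r := by linarith
        have := norm_nonneg h
        have := norm_nonneg (E' (ψ δ • vv δ))
        nlinarith
      have habs : |Qf δ (ψ δ)| ≤ ψ δ * |⟪(fderiv ℝ E' (ψ δ • vv δ)) h, vv δ⟫|
          + |⟪E' (ψ δ • vv δ), h⟫| := by
        rw [hQf]
        calc |ψ δ * ⟪(fderiv ℝ E' (ψ δ • vv δ)) h, vv δ⟫ + ⟪E' (ψ δ • vv δ), h⟫|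
            ≤ |ψ δ * ⟪(fderiv ℝ E' (ψ δ • vv δ)) h, vv δ⟫| + |⟪E' (ψ δ • vv δ), h⟫| :=
              abs_add_le _ _
          _ = ψ δ * |⟪(fderiv ℝ E' (ψ δ • vv δ)) h, vv δ⟫| + |⟪E' (ψ δ • vv δ), h⟫| := by
              rw [abs_mul, abs_of_pos hψp]
      rw [hA]
      have hCnn : (0:ℝ) ≤ C₁ * M * (R + r) := by positivity
      have h5 : ψ δ * |⟪(fderiv ℝ E' (ψ δ • vv δ)) h, vv δ⟫| ≤ ψmax * (C₁ * M * (R + r)) := by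
        apply mul_le_mul hψl.le hQ1 (abs_nonneg _) hψmaxpos.le
      linarith
    set Dd : ℝ → ℝ := fun δ => -(Qf δ (ψ δ)) / (Pf δ (ψ δ)) with hDd
    have hDbound : ∀ δ ∈ I, |Dd δ| ≤ L := by
      intro δ hδ
      have hP := hPbranch δ hδ
      have hQ := hQbranch δ hδ
      have hposd : (0:ℝ) < C₂/ψmax^2 := div_pos hC₂ (by positivity)
      have h5 : |Dd δ| = |Qf δ (ψ δ)| / |Pf δ (ψ δ)| := by
        rw [hDd, abs_div, abs_neg]
      rw [h5]
      calc |Qf δ (ψ δ)| / |Pf δ (ψ δ)| ≤ A / (C₂/ψmax^2) :=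
            div_le_div₀ hApos.le hQ hposd hP
        _ = A * ψmax^2 / C₂ := div_div_eq_mul_div A C₂ (ψmax^2)
        _ = L := by rw [hL]
    -- derivative of the fibre map along segments
    have hDeriv : ∀ (δa dδ τa dτ t : ℝ),
        HasDerivAt (fun t' => Φf (δa + t'*dδ) (τa + t'*dτ))
          (Qf (δa + t*dδ) (τa + t*dτ) * dδ + Pf (δa + t*dδ) (τa + t*dτ) * dτ) t := by
      intro δa dδ τa dτ t
      have hδfun : HasDerivAt (fun t' : ℝ => δa + t'*dδ) dδ t := by
        simpa using ((hasDerivAt_id t).mul_const dδ).const_add δa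
      have hτfun : HasDerivAt (fun t' : ℝ => τa + t'*dτ) dτ t := by
        simpa using ((hasDerivAt_id t).mul_const dτ).const_add τa
      have hvfun : HasDerivAt (fun t' : ℝ => vv (δa + t'*dδ)) (dδ • h) t := by
        have hv1 := (hδfun.smul_const h).const_add u
        simpa [hvv] using hv1
      have hafun : HasDerivAt (fun t' : ℝ => (τa + t'*dτ) • vv (δa + t'*dδ))
          ((τa + t*dτ) • (dδ • h) + dτ • vv (δa + t*dδ)) t := hτfun.smul hvfun
      have hEfd : HasFDerivAt E' (fderiv ℝ E' ((τa + t*dτ) • vv (δa + t*dδ)))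
          ((τa + t*dτ) • vv (δa + t*dδ)) := (hE'c.differentiable one_ne_zero _).hasFDerivAt
      have hEafun : HasDerivAt (fun t' : ℝ => E' ((τa + t'*dτ) • vv (δa + t'*dδ)))
          ((fderiv ℝ E' ((τa + t*dτ) • vv (δa + t*dδ)))
            ((τa + t*dτ) • (dδ • h) + dτ • vv (δa + t*dδ))) t :=
        hEfd.comp_hasDerivAt t hafun
      have hfull := (hEafun.inner ℝ hvfun)
      have heq : (⟪E' ((τa + t*dτ) • vv (δa + t*dδ)), dδ • h⟫
          + ⟪(fderiv ℝ E' ((τa + t*dτ) • vv (δa + t*dδ)))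
              ((τa + t*dτ) • (dδ • h) + dτ • vv (δa + t*dδ)), vv (δa + t*dδ)⟫)
          = Qf (δa + t*dδ) (τa + t*dτ) * dδ + Pf (δa + t*dδ) (τa + t*dτ) * dτ := by
        simp only [hQf, hPf, map_add, map_smul, inner_add_left, real_inner_smul_left,
          real_inner_smul_right, smul_smul]
        ring
      rw [← heq]
      exact hfull
    -- continuity of ψ within I
    have hψcontI : ∀ δ ∈ I, Tendsto ψ (nhdsWithin δ I) (nhds (ψ δ)) := by
      intro δ hδ
      have hvpos : (0:ℝ) < ‖vv δ‖ := lt_of_lt_of_le (by positivity) (hvnorm δ hδ).1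
      have hIoo := hψIoo δ hδ
      rw [Metric.tendsto_nhds]
      intro ε' hε'
      set e : ℝ := min (ε'/2) (min ((ψ δ - r/‖vv δ‖)/2) ((R/‖vv δ‖ - ψ δ)/2)) with hedef
      have hIoo1 := hIoo.1
      have hIoo2 := hIoo.2
      have hepos : 0 < e :=
        lt_min (by linarith) (lt_min (by linarith) (by linarith))
      have hele : e ≤ (ψ δ - r/‖vv δ‖)/2 := le_trans (min_le_right _ _) (min_le_left _ _)
      have hele2 : e ≤ (R/‖vv δ‖ - ψ δ)/2 := le_trans (min_le_right _ _) (min_le_right _ _)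
      have heε : e ≤ ε'/2 := min_le_left _ _
      have he1 : r/‖vv δ‖ < ψ δ - e := by linarith
      have he2 : ψ δ + e < R/‖vv δ‖ := by linarith
      have hsgn1 : 0 < Φf δ (ψ δ - e) := hΦpos δ hδ _ ⟨he1.le, by linarith⟩
      have hsgn2 : Φf δ (ψ δ + e) < 0 := hΦneg δ hδ _ ⟨by linarith, he2.le⟩
      have hc1 : ContinuousAt (fun δ' => Φf δ' (ψ δ - e)) δ :=
        (hΦc.comp (continuous_id.prodMk continuous_const)).continuousAt
      have hc2 : ContinuousAt (fun δ' => Φf δ' (ψ δ + e)) δ :=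
        (hΦc.comp (continuous_id.prodMk continuous_const)).continuousAt
      have hc3 : ContinuousAt (fun δ' => r / ‖vv δ'‖) δ :=
        continuousAt_const.div (hvvc.norm.continuousAt) hvpos.ne'
      have hc4 : ContinuousAt (fun δ' => R / ‖vv δ'‖) δ :=
        continuousAt_const.div (hvvc.norm.continuousAt) hvpos.ne'
      have ev1 : ∀ᶠ δ' in nhds δ, 0 < Φf δ' (ψ δ - e) :=
        hc1.eventually (eventually_gt_nhds hsgn1)
      have ev2 : ∀ᶠ δ' in nhds δ, Φf δ' (ψ δ + e) < 0 :=
        hc2.eventually (eventually_lt_nhds hsgn2)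
      have ev3 : ∀ᶠ δ' in nhds δ, r / ‖vv δ'‖ < ψ δ - e :=
        hc3.eventually (eventually_lt_nhds he1)
      have ev4 : ∀ᶠ δ' in nhds δ, ψ δ + e < R / ‖vv δ'‖ :=
        hc4.eventually (eventually_gt_nhds he2)
      filter_upwards [mem_nhdsWithin_of_mem_nhds ev1, mem_nhdsWithin_of_mem_nhds ev2,
        mem_nhdsWithin_of_mem_nhds ev3, mem_nhdsWithin_of_mem_nhds ev4,
        self_mem_nhdsWithin] with δ' h1' h2' h3' h4' hδ'I
      obtain ⟨hIoo', hpos', hneg'⟩ := h1 (vv δ') (hvK δ' hδ'I)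
      have hz' : Φf δ' (ψ δ') = 0 := hΦzero δ' hδ'I
      have hlow : ψ δ - e < ψ δ' := by
        by_contra hcon
        push_neg at hcon
        rcases eq_or_lt_of_le hcon with heq | hlt
        · rw [heq] at hz'; linarith
        · have := hneg' (ψ δ - e) ⟨hlt, by linarith⟩
          linarith
      have hhigh : ψ δ' < ψ δ + e := by
        by_contra hcon
        push_neg at hcon
        rcases eq_or_lt_of_le hcon with heq | hlt
        · rw [← heq] at hz'; linarith
        · have := hpos' (ψ δ + e) ⟨by linarith, hlt⟩
          linarith
      rw [Real.dist_eq, abs_lt]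
      constructor <;> linarith
    -- differentiability of ψ within I
    have hψderivI : ∀ δ ∈ I, HasDerivWithinAt ψ (Dd δ) I δ := by
      intro δ hδ
      rw [hasDerivWithinAt_iff_tendsto_slope, Metric.tendsto_nhds]
      intro ε' hε'
      have hPneδ : Pf δ (ψ δ) ≠ 0 := hPne δ hδ
      have hPcc : ContinuousAt (fun p : ℝ×ℝ => Pf p.1 p.2) (δ, ψ δ) := hPc.continuousAt
      have hQcc : ContinuousAt (fun p : ℝ×ℝ => Qf p.1 p.2) (δ, ψ δ) := hQc.continuousAt
      have hratio : ContinuousAt (fun p : ℝ×ℝ => -(Qf p.1 p.2) / (Pf p.1 p.2)) (δ, ψ δ) :=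
        (hQcc.neg).div hPcc hPneδ
      have hev : ∀ᶠ p : ℝ×ℝ in nhds (δ, ψ δ),
          Pf p.1 p.2 ≠ 0 ∧ dist (-(Qf p.1 p.2) / (Pf p.1 p.2)) (Dd δ) < ε' := by
        have hDeq0 : Dd δ = -(Qf δ (ψ δ)) / (Pf δ (ψ δ)) := by simp only [hDd]
        refine (hPcc.eventually_ne hPneδ).and ?_
        have hDeq : Dd δ = -(Qf δ (ψ δ)) / (Pf δ (ψ δ)) := by simp only [hDd]
        rw [hDeq]
        have h6 := Metric.tendsto_nhds.mp hratio ε' hε'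
        simpa using h6
      obtain ⟨η, hηpos, hη⟩ := Metric.eventually_nhds_iff.mp hev
      have hclose1 : ∀ᶠ δ' in nhdsWithin δ (I \ {δ}), |δ' - δ| < η/2 := by
        apply mem_nhdsWithin_of_mem_nhds
        have hb : Metric.ball δ (η/2) ∈ nhds δ := Metric.ball_mem_nhds δ (by positivity)
        filter_upwards [hb] with x hx
        rw [Metric.mem_ball, Real.dist_eq] at hx; exact hx
      have hclose2 : ∀ᶠ δ' in nhdsWithin δ (I \ {δ}), |ψ δ' - ψ δ| < η/2 := by
        have ht := (Metric.tendsto_nhds.mp (hψcontI δ hδ)) (η/2) (by positivity)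
        have ht2 : ∀ᶠ x in nhdsWithin δ (I \ {δ}), dist (ψ x) (ψ δ) < η/2 :=
          ht.filter_mono (nhdsWithin_mono δ (Set.diff_subset : I \ {δ} ⊆ I))
        filter_upwards [ht2] with x hx
        rw [Real.dist_eq] at hx; exact hx
      filter_upwards [hclose1, hclose2, self_mem_nhdsWithin] with δ' hcl1 hcl2 hmem'
      obtain ⟨hδ'I, hδ'ne⟩ := hmem'
      have hδ'neδ : δ' ≠ δ := by simpa using hδ'ne
      set F : ℝ → ℝ := fun t => Φf (δ + t*(δ' - δ)) (ψ δ + t*(ψ δ' - ψ δ)) with hF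
      have hFderiv : ∀ t : ℝ, HasDerivAt F
          (Qf (δ + t*(δ'-δ)) (ψ δ + t*(ψ δ' - ψ δ)) * (δ'-δ)
            + Pf (δ + t*(δ'-δ)) (ψ δ + t*(ψ δ' - ψ δ)) * (ψ δ' - ψ δ)) t :=
        fun t => hDeriv δ (δ'-δ) (ψ δ) (ψ δ' - ψ δ) t
      have hF0 : F 0 = 0 := by
        have : δ + 0*(δ' - δ) = δ := by ring
        have h2' : ψ δ + 0*(ψ δ' - ψ δ) = ψ δ := by ring
        rw [hF]; simp only [this, h2']
        exact hΦzero δ hδ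
      have hF1 : F 1 = 0 := by
        have : δ + 1*(δ' - δ) = δ' := by ring
        have h2' : ψ δ + 1*(ψ δ' - ψ δ) = ψ δ' := by ring
        rw [hF]; simp only [this, h2']
        exact hΦzero δ' hδ'I
      obtain ⟨θ, hθmem, hθeq⟩ := exists_hasDerivAt_eq_slope F _ zero_lt_one
        (fun t _ => (hFderiv t).continuousAt.continuousWithinAt) (fun t _ => hFderiv t)
      rw [hF1, hF0] at hθeq
      norm_num at hθeq
      set p : ℝ×ℝ := (δ + θ*(δ'-δ), ψ δ + θ*(ψ δ' - ψ δ)) with hp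
      have hθ1 : 0 < θ := hθmem.1
      have hθ2 : θ < 1 := hθmem.2
      have hpdist : dist p (δ, ψ δ) < η := by
        rw [hp, Prod.dist_eq]
        apply max_lt
        · rw [Real.dist_eq]
          have : |δ + θ*(δ'-δ) - δ| = θ * |δ' - δ| := by
            rw [show δ + θ*(δ'-δ) - δ = θ * (δ' - δ) by ring, abs_mul, abs_of_pos hθ1]
          rw [this]
          calc θ * |δ' - δ| ≤ 1 * |δ' - δ| := by
                apply mul_le_mul_of_nonneg_right hθ2.le (abs_nonneg _)
            _ = |δ' - δ| := one_mul _
            _ < η/2 := hcl1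
            _ < η := by linarith
        · rw [Real.dist_eq]
          have : |ψ δ + θ*(ψ δ' - ψ δ) - ψ δ| = θ * |ψ δ' - ψ δ| := by
            rw [show ψ δ + θ*(ψ δ' - ψ δ) - ψ δ = θ * (ψ δ' - ψ δ) by ring, abs_mul,
              abs_of_pos hθ1]
          rw [this]
          calc θ * |ψ δ' - ψ δ| ≤ 1 * |ψ δ' - ψ δ| := by
                apply mul_le_mul_of_nonneg_right hθ2.le (abs_nonneg _)
            _ = |ψ δ' - ψ δ| := one_mul _
            _ < η/2 := hcl2
            _ < η := by linarith
      obtain ⟨hPp, hDp⟩ := hη hpdist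
      have hslope : slope ψ δ δ' = -(Qf p.1 p.2)/(Pf p.1 p.2) := by
        have hsub : δ' - δ ≠ 0 := sub_ne_zero.mpr hδ'neδ
        rw [slope_def_field]
        rw [div_eq_div_iff hsub hPp]
        have hp1 : p.1 = δ + θ*(δ'-δ) := rfl
        have hp2 : p.2 = ψ δ + θ*(ψ δ' - ψ δ) := rfl
        rw [hp1, hp2]
        linarith [hθeq]
      have hDeq : Dd δ = -(Qf δ (ψ δ)) / (Pf δ (ψ δ)) := by simp only [hDd]
      rw [hslope]
      exact hDp
    -- Lipschitz bound
    have hLip : ∀ δ ∈ I, |ψ δ - 1| ≤ L * δ := by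
      intro δ hδ
      have hseg := norm_image_sub_le_of_norm_deriv_le_segment'
        (f := ψ) (f' := Dd) (a := (0:ℝ)) (b := δ₀) (C := L)
        (fun x hx => hψderivI x hx)
        (fun x hx => by rw [Real.norm_eq_abs]; exact hDbound x ⟨hx.1, hx.2.le⟩)
        δ hδ
      rw [hψ0] at hseg
      rw [Real.norm_eq_abs] at hseg
      simpa using hseg
    -- Taylor estimate at u
    obtain ⟨ρ, hρpos, hρ⟩ : ∃ ρ > 0, ∀ x : H, dist x u < ρ →
        |E x - E u - ⟪E' u, x - u⟫| ≤ ε * ‖x - u‖ := by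
      have hfd := (hgrad u).hasFDerivAt
      have hlo := hfd.isLittleO
      have hev := hlo.def hε
      rw [Metric.eventually_nhds_iff] at hev
      obtain ⟨ρ, hρpos, hρ⟩ := hev
      refine ⟨ρ, hρpos, fun x hx => ?_⟩
      have := hρ hx
      rw [Real.norm_eq_abs] at this
      rw [InnerProductSpace.toDual_apply_apply] at this
      exact this
    set δ : ℝ := min δ₀ (min (1/(2*L)) (ρ/(2*c₅))) with hδdef
    have hδpos : 0 < δ := lt_min hδ₀pos (lt_min (by positivity) (by positivity))
    have hδI : δ ∈ I := ⟨hδpos.le, min_le_left _ _⟩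
    have hδL : L * δ ≤ 1/2 := by
      have h5 : δ ≤ 1/(2*L) := le_trans (min_le_right _ _) (min_le_left _ _)
      calc L * δ ≤ L * (1/(2*L)) := mul_le_mul_of_nonneg_left h5 hLpos.le
        _ = 1/2 := by
            have hL0 : L ≠ 0 := ne_of_gt hLpos
            field_simp
    have hδρ : c₅ * δ < ρ := by
      have h5 : δ ≤ ρ/(2*c₅) := le_trans (min_le_right _ _) (min_le_right _ _)
      calc c₅ * δ ≤ c₅ * (ρ/(2*c₅)) := mul_le_mul_of_nonneg_left h5 hc₅pos.le
        _ = ρ/2 := by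
            have hc0 : c₅ ≠ 0 := ne_of_gt hc₅pos
            field_simp
        _ < ρ := by linarith
    have hLipδ := hLip δ hδI
    have hψδpos := hψpos δ hδI
    have hψhalf : 1/2 ≤ ψ δ := by
      have habs' := abs_le.mp hLipδ
      linarith [habs'.1]
    have hdiff : ww δ - u = (ψ δ - 1) • u + (ψ δ * δ) • h := by
      rw [hww, hvv]
      simp only []
      module
    have hnd : ‖ww δ - u‖ ≤ c₅ * δ := by
      rw [hdiff]
      have h6 : |ψ δ - 1| * ‖u‖ ≤ (L*δ)*R :=
        mul_le_mul hLipδ huR.le (norm_nonneg u) (by nlinarith)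
      have h7 : |ψ δ * δ| * ‖h‖ ≤ (ψmax * δ) * M := by
        rw [abs_of_nonneg (by nlinarith : (0:ℝ) ≤ ψ δ * δ)]
        apply mul_le_mul _ hhM (norm_nonneg h) (by nlinarith [hψmaxpos])
        nlinarith [hψlt δ hδI]
      calc ‖(ψ δ - 1) • u + (ψ δ * δ) • h‖ ≤ ‖(ψ δ - 1) • u‖ + ‖(ψ δ * δ) • h‖ :=
            norm_add_le _ _
        _ = |ψ δ - 1| * ‖u‖ + |ψ δ * δ| * ‖h‖ := by
            rw [norm_smul, norm_smul, Real.norm_eq_abs, Real.norm_eq_abs]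
        _ ≤ (L*δ)*R + (ψmax * δ) * M := by linarith
        _ = c₅ * δ := by rw [hc₅]; ring
    have hinner2 : ⟪E' u, ww δ - u⟫ = -(ψ δ * δ) * ‖E' u‖^2 := by
      rw [hdiff, inner_add_right, real_inner_smul_right, real_inner_smul_right, hiuu, hh,
        inner_neg_right, real_inner_self_eq_norm_sq]
      ring
    have hT := hρ (ww δ) (by rw [dist_eq_norm]; linarith)
    have hEk := hmin (ww δ) (hw𝒩 δ hδI)
    have habs2 := abs_le.mp hT
    have hfinal : ψ δ * δ * ‖E' u‖^2 ≤ 2 * ε * (c₅ * δ) := by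
      have h8 : ε * ‖ww δ - u‖ ≤ ε * (c₅ * δ) := mul_le_mul_of_nonneg_left hnd hε.le
      have h10 : -(⟪E' u, ww δ - u⟫) ≤ 2 * (ε * ‖ww δ - u‖) := by
        linarith [habs2.1, habs2.2, hEk]
      have h11 : ψ δ * δ * ‖E' u‖^2 = -(⟪E' u, ww δ - u⟫) := by
        rw [hinner2]; ring
      linarith [h10, h8, h11]
    have h9 : δ * ‖E' u‖^2 ≤ δ * (4*c₅*ε) := by
      have hprod : (0:ℝ) ≤ (ψ δ - 1/2) * (δ * ‖E' u‖^2) :=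
        mul_nonneg (by linarith) (mul_nonneg hδpos.le (sq_nonneg _))
      nlinarith [hfinal]
    have := (mul_le_mul_iff_right₀ hδpos).mp h9
    linarith
  -- ======= minimization =======
  set c : ℝ := sInf (E '' 𝒩) with hc
  have hcle : ∀ w ∈ 𝒩, c ≤ E w := fun w hw => csInf_le h2 (mem_image_of_mem E hw)
  have hseq : ∀ n : ℕ, ∃ v ∈ 𝒩, E v ≤ c + 1/(n+1) ∧ ‖E' v‖^2 ≤ 4 * c₅ * (1/(n+1)) := by
    intro n
    have hεpos : (0:ℝ) < 1/(n+1) := by positivity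
    obtain ⟨y, hy, hylt⟩ := exists_lt_of_csInf_lt (h𝒩ne.image E) (lt_add_of_pos_right c hεpos)
    obtain ⟨u₀, hu₀, rfl⟩ := hy
    obtain ⟨w, hw𝒩, hwle, hwmin⟩ := ekeland_aux h𝒩closed E hEcont h2 hεpos hu₀
    exact ⟨w, hw𝒩, le_trans hwle hylt.le, key w hw𝒩 _ hεpos hwmin⟩
  choose v hv𝒩 hvE hvE' using hseq
  have hvball : ∀ n, v n ∈ Metric.closedBall (0:H) R := by
    intro n
    obtain ⟨-, -, hnR, -⟩ := h𝒩facts (v n) (hv𝒩 n)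
    simpa [Metric.mem_closedBall, dist_eq_norm] using hnR.le
  have hcpt := hNcompact _ (Metric.isBounded_closedBall (x := (0:H)) (r := R))
  have hmemN : ∀ n, (fun u : H => u - E' u) (v n) ∈
      closure ((fun u : H => u - E' u) '' Metric.closedBall 0 R) := fun n =>
    subset_closure (mem_image_of_mem _ (hvball n))
  obtain ⟨x, hxmem, φ, hφmono, hφtend⟩ := hcpt.tendsto_subseq hmemN
  -- E'(v n) → 0
  have hE'sq : Tendsto (fun n => ‖E' (v n)‖) atTop (nhds 0) := by
    have hb : ∀ n : ℕ, ‖E' (v n)‖ ≤ Real.sqrt (4 * c₅ * (1/(n+1))) := by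
      intro n
      have hBnn : (0:ℝ) ≤ 4 * c₅ * (1/(n+1)) := by
        have h1n : (0:ℝ) < 1/(n+1) := by positivity
        nlinarith [hc₅pos]
      nlinarith [Real.sq_sqrt hBnn, Real.sqrt_nonneg (4 * c₅ * (1/(n+1):ℝ)),
        norm_nonneg (E' (v n)), hvE' n]
    have hlim : Tendsto (fun n : ℕ => Real.sqrt (4 * c₅ * (1/(n+1)))) atTop (nhds 0) := by
      have h0 : Tendsto (fun n : ℕ => 4 * c₅ * (1/(n+1) : ℝ)) atTop (nhds 0) := by
        have := tendsto_one_div_add_atTop_nhds_zero_nat (𝕜 := ℝ)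
        have h' := this.const_mul (4 * c₅)
        simpa [mul_comm] using h'
      have := (Real.continuous_sqrt.tendsto 0).comp h0
      simpa [Function.comp_def] using this
    exact squeeze_zero (fun n => norm_nonneg _) hb hlim
  have hE'0 : Tendsto (fun n => E' (v n)) atTop (nhds 0) := by
    rw [tendsto_zero_iff_norm_tendsto_zero]
    exact hE'sq
  -- v ∘ φ → x
  have hvtend : Tendsto (fun k => v (φ k)) atTop (nhds x) := by
    have : ∀ k, v (φ k) = (fun u : H => u - E' u) (v (φ k)) + E' (v (φ k)) := by
      intro k; simp
    have htend : Tendsto (fun k => (fun u : H => u - E' u) (v (φ k)) + E' (v (φ k)))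
        atTop (nhds (x + 0)) := hφtend.add (hE'0.comp hφmono.tendsto_atTop)
    rw [add_zero] at htend
    exact htend.congr (fun k => (this k).symm)
  have hx𝒩 : x ∈ 𝒩 := h𝒩closed.mem_of_tendsto hvtend (Eventually.of_forall fun k => hv𝒩 (φ k))
  have hExc : E x = c := by
    have hEx : Tendsto (fun k => E (v (φ k))) atTop (nhds (E x)) :=
      (hEcont.tendsto x).comp hvtend
    have hle : E x ≤ c := by
      have hbound : ∀ k : ℕ, E (v (φ k)) ≤ c + 1/(k+1) := by
        intro k
        refine le_trans (hvE (φ k)) ?_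
        have h1k : (1:ℝ)/(φ k+1) ≤ 1/(k+1) := by
          apply one_div_le_one_div_of_le (by positivity)
          have hk : k ≤ φ k := hφmono.le_apply
          have : (k:ℝ) ≤ (φ k : ℝ) := Nat.cast_le.mpr hk
          linarith
        linarith
      have hlim2 : Tendsto (fun k : ℕ => c + 1/(k+1) : ℕ → ℝ) atTop (nhds (c + 0)) :=
        tendsto_const_nhds.add tendsto_one_div_add_atTop_nhds_zero_nat
      rw [add_zero] at hlim2
      exact le_of_tendsto_of_tendsto' hEx hlim2 hbound
    exact le_antisymm hle (hcle x hx𝒩)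
  have hE'x : E' x = 0 := by
    have h1' : Tendsto (fun k => E' (v (φ k))) atTop (nhds (E' x)) :=
      (hE'cont.tendsto x).comp hvtend
    have h2' : Tendsto (fun k => E' (v (φ k))) atTop (nhds 0) :=
      hE'0.comp hφmono.tendsto_atTop
    exact tendsto_nhds_unique h1' h2'
  obtain ⟨-, hrx, hxR, -⟩ := h𝒩facts x hx𝒩
  exact ⟨x, hx𝒩, hExc, hE'x, hrx.le, hxR.le⟩

end aux

/-- Multiplicity: pairwise distinct ground states on finitely many
Nehari-type sets associated with pairwise separated annular regions. -/
theorem nehari_multiplicity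
    {H : Type*} [NormedAddCommGroup H] [InnerProductSpace ℝ H] [CompleteSpace H]
    (E : H → ℝ) (E' : H → H) (E'' : H → H → H → ℝ)
    (hE : ContDiff ℝ 2 E)
    (hgrad : ∀ u, HasGradientAt E (E' u) u)
    (hE'' : ∀ u z y, Tendsto (fun t : ℝ => (1 / t) * ⟪E' (u + t • y) - E' u, z⟫)
      (nhdsWithin 0 (Ioi 0)) (nhds (E'' u z y)))
    (K : Set H) (hKne : (K \ {0}).Nonempty) (hKclosed : IsClosed K)
    (hKsmul : ∀ c : ℝ, 0 ≤ c → ∀ u ∈ K, c • u ∈ K)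
    (hKadd : ∀ u ∈ K, ∀ v ∈ K, u + v ∈ K)
    (hN : ∀ u ∈ K, u - E' u ∈ K)
    (m : ℕ) (hm : 0 < m)
    (r R : Fin m → ℝ)
    (hr : ∀ i, 0 < r i) (hrR : ∀ i, r i < R i)
    (hsep : ∀ i j, i < j → R i < r j)
    (s : Fin m → H → ℝ)
    -- condition (h1) for each pair (rᵢ, Rᵢ)
    (h1 : ∀ i, ∀ u ∈ K \ {0}, s i u ∈ Ioo (r i / ‖u‖) (R i / ‖u‖) ∧
      (∀ τ ∈ Ico (r i / ‖u‖) (s i u), 0 < ⟪E' (τ • u), u⟫) ∧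
      (∀ τ ∈ Ioc (s i u) (R i / ‖u‖), ⟪E' (τ • u), u⟫ < 0))
    (𝒩 : Fin m → Set H)
    (h𝒩 : ∀ i, 𝒩 i = {w | ∃ u ∈ K \ {0}, w = s i u • u})
    (h𝒩closed : ∀ i, IsClosed (𝒩 i))
    -- (h2) for each 𝒩ᵢ
    (h2 : ∀ i, BddBelow (E '' 𝒩 i))
    -- (h3) for each 𝒩ᵢ
    (C₁ : Fin m → ℝ) (hC₁ : ∀ i, 0 < C₁ i)
    (h3 : ∀ i, ∀ u ∈ 𝒩 i, ∀ w₁ w₂ : H, ‖w₁‖ = 1 → ‖w₂‖ = 1 → |E'' u w₁ w₂| ≤ C₁ i)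
    -- (h4) for each 𝒩ᵢ
    (C₂ : Fin m → ℝ) (hC₂ : ∀ i, 0 < C₂ i)
    (h4 : ∀ i, ∀ u ∈ 𝒩 i, C₂ i ≤ |E'' u u u|)
    -- N is completely continuous
    (hNcont : Continuous (fun u : H => u - E' u))
    (hNcompact : ∀ B : Set H, Bornology.IsBounded B →
      IsCompact (closure ((fun u : H => u - E' u) '' B))) :
    ∃ us : Fin m → H,
      (∀ i, us i ∈ 𝒩 i ∧ E (us i) = sInf (E '' 𝒩 i) ∧ E' (us i) = 0 ∧
        r i ≤ ‖us i‖ ∧ ‖us i‖ ≤ R i) ∧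
      Function.Injective us := by
  have hmins : ∀ i : Fin m, ∃ v ∈ 𝒩 i, E v = sInf (E '' 𝒩 i) ∧ E' v = 0 ∧
      r i ≤ ‖v‖ ∧ ‖v‖ ≤ R i := fun i =>
    nehari_single E E' E'' hE hgrad hE'' K hKne hKsmul hKadd hN (r i) (R i) (hr i) (hrR i)
      (s i) (h1 i) (𝒩 i) (h𝒩 i) (h𝒩closed i) (h2 i) (C₁ i) (hC₁ i) (h3 i) (C₂ i) (hC₂ i)
      (h4 i) hNcompact
  choose us hus1 hus2 hus3 hus4 hus5 using hmins
  refine ⟨us, fun i => ⟨hus1 i, hus2 i, hus3 i, hus4 i, hus5 i⟩, ?_⟩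
  intro i j hij
  by_contra hne
  rcases lt_trichotomy i j with hlt | heq | hgt
  · have hsep' := hsep i j hlt
    have ha : ‖us i‖ ≤ R i := hus5 i
    have hb : r j ≤ ‖us j‖ := hus4 j
    rw [hij] at ha
    linarith
  · exact hne heq
  · have hsep' := hsep j i hgt
    have ha : ‖us j‖ ≤ R j := hus5 j
    have hb : r i ≤ ‖us i‖ := hus4 i
    rw [← hij] at ha
    linarith
end

section
/- (Harnack-type inequality.) Let u : [0,1] → ℝ be twice continuously differentiable with u(0) = 0, u(t) = u(1−t) for all t ∈ [0,1], u''(t) ≤ 0 on [0,1], and u'' nonincreasing on [0,1/2] (equivalently, −u'' is nonnegative on [0,1] and nondecreasing on [0,1/2]). Then u(t) ≥ t(1−2t) · (∫₀¹ u'(s)² ds)^{1/2} for all t ∈ [0,1/2]. -/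
open Set

/-- Harnack-type inequality: for a symmetric, concave `C²` function
on `[0,1]` vanishing at the endpoints, with `u''` nonincreasing on `[0,1/2]`, one has
`u(t) ≥ t(1-2t)·‖u‖_{H¹₀}` on `[0,1/2]`. -/
theorem harnack_type_inequality
    (u u' u'' : ℝ → ℝ)
    (hu' : ∀ t ∈ Icc (0:ℝ) 1, HasDerivAt u (u' t) t)
    (hu'' : ∀ t ∈ Icc (0:ℝ) 1, HasDerivAt u' (u'' t) t)
    (hu''cont : ContinuousOn u'' (Icc (0:ℝ) 1))
    (hu0 : u 0 = 0)
    (hsymm : ∀ t ∈ Icc (0:ℝ) 1, u t = u (1 - t))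
    (hconc : ∀ t ∈ Icc (0:ℝ) 1, u'' t ≤ 0)
    (hmono : AntitoneOn u'' (Icc (0:ℝ) (1/2))) :
    ∀ t ∈ Icc (0:ℝ) (1/2),
      t * (1 - 2 * t) * Real.sqrt (∫ s in (0:ℝ)..1, u' s ^ 2) ≤ u t := by
  have hu'cont : ContinuousOn u' (Icc 0 1) := fun t ht =>
    (hu'' t ht).continuousAt.continuousWithinAt
  -- symmetry of the derivative
  have hkey : ∀ t ∈ Icc (0:ℝ) 1, u' t = - u' (1 - t) := by
    intro t ht
    have ht' : (1 - t) ∈ Icc (0:ℝ) 1 := ⟨by linarith [ht.2], by linarith [ht.1]⟩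
    have h1 : HasDerivWithinAt u (u' t) (Icc 0 1) t := (hu' t ht).hasDerivWithinAt
    have h2 : HasDerivAt (fun s => u (1 - s)) (u' (1 - t) * (-1)) t :=
      HasDerivAt.comp t (hu' (1 - t) ht') ((hasDerivAt_id t).const_sub 1)
    have hU : UniqueDiffWithinAt ℝ (Icc (0:ℝ) 1) t := (uniqueDiffOn_Icc one_pos) t ht
    have e1 : derivWithin u (Icc (0:ℝ) 1) t = u' t := h1.derivWithin hU
    have e2 : derivWithin (fun s => u (1 - s)) (Icc (0:ℝ) 1) t = u' (1 - t) * (-1) :=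
      h2.hasDerivWithinAt.derivWithin hU
    have e3 : derivWithin u (Icc (0:ℝ) 1) t
        = derivWithin (fun s => u (1 - s)) (Icc (0:ℝ) 1) t :=
      derivWithin_congr (fun s hs => hsymm s hs) (hsymm t ht)
    rw [e1, e2] at e3
    linarith
  have hhalf : u' (1/2) = 0 := by
    have := hkey (1/2) (by norm_num)
    norm_num at this
    linarith
  have hone : u' 1 = - u' 0 := by
    have := hkey 1 (by norm_num)
    norm_num at this
    exact this
  -- u' is antitone on [0,1]
  have hanti : AntitoneOn u' (Icc (0:ℝ) 1) := by
    apply antitoneOn_of_deriv_nonpos (convex_Icc 0 1) hu'cont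
    · intro x hx
      exact ((hu'' x (interior_subset hx)).differentiableAt).differentiableWithinAt
    · intro x hx
      rw [(hu'' x (interior_subset hx)).deriv]
      exact hconc x (interior_subset hx)
  have h0 : 0 ≤ u' 0 := by
    have := hanti (by norm_num : (0:ℝ) ∈ Icc (0:ℝ) 1) (by norm_num : (1/2:ℝ) ∈ Icc (0:ℝ) 1)
      (by norm_num)
    rw [hhalf] at this
    exact this
  -- bound on the integral
  have hbound : ∀ s ∈ Icc (0:ℝ) 1, u' s ^ 2 ≤ u' 0 ^ 2 := by
    intro s hs
    have h1 : u' s ≤ u' 0 := hanti (by norm_num) hs hs.1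
    have h2 : u' 1 ≤ u' s := hanti hs (by norm_num) hs.2
    rw [hone] at h2
    exact sq_le_sq' h2 h1
  have hIcc : uIcc (0:ℝ) 1 = Icc (0:ℝ) 1 := uIcc_of_le (by norm_num)
  have hint2 : IntervalIntegrable (fun s => u' s ^ 2) MeasureTheory.volume 0 1 := by
    apply ContinuousOn.intervalIntegrable
    rw [hIcc]
    exact hu'cont.pow 2
  have hint : (∫ s in (0:ℝ)..1, u' s ^ 2) ≤ u' 0 ^ 2 := by
    have hconst : (∫ _ in (0:ℝ)..1, u' 0 ^ 2) = u' 0 ^ 2 := by simp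
    rw [← hconst]
    exact intervalIntegral.integral_mono_on (by norm_num) hint2 intervalIntegrable_const hbound
  have hsqrt : Real.sqrt (∫ s in (0:ℝ)..1, u' s ^ 2) ≤ u' 0 := by
    calc Real.sqrt (∫ s in (0:ℝ)..1, u' s ^ 2) ≤ Real.sqrt (u' 0 ^ 2) :=
          Real.sqrt_le_sqrt hint
      _ = u' 0 := by rw [Real.sqrt_sq h0]
  -- u' is concave on [0,1/2]
  have hsub : Icc (0:ℝ) (1/2) ⊆ Icc (0:ℝ) 1 := Icc_subset_Icc le_rfl (by norm_num)
  have hsubint : interior (Icc (0:ℝ) (1/2)) ⊆ Icc (0:ℝ) 1 := fun x hx => by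
    rw [interior_Icc] at hx
    exact ⟨hx.1.le, by linarith [hx.2]⟩
  have hconcave : ConcaveOn ℝ (Icc (0:ℝ) (1/2)) u' := by
    apply AntitoneOn.concaveOn_of_deriv (convex_Icc _ _) (hu'cont.mono hsub)
    · intro x hx
      exact ((hu'' x (hsubint hx)).differentiableAt).differentiableWithinAt
    · intro x hx y hy hxy
      rw [(hu'' x (hsubint hx)).deriv, (hu'' y (hsubint hy)).deriv]
      exact hmono (interior_subset hx) (interior_subset hy) hxy
  have hlow : ∀ s ∈ Icc (0:ℝ) (1/2), (1 - 2*s) * u' 0 ≤ u' s := by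
    intro s hs
    have h := hconcave.2 (show (0:ℝ) ∈ Icc (0:ℝ) (1/2) by norm_num)
      (show (1/2:ℝ) ∈ Icc (0:ℝ) (1/2) by norm_num)
      (show (0:ℝ) ≤ 1 - 2*s by linarith [hs.2])
      (show (0:ℝ) ≤ 2*s by linarith [hs.1])
      (by ring)
    simp only [smul_eq_mul] at h
    rw [hhalf] at h
    have hx : (1 - 2*s) * 0 + 2*s * (1/2) = s := by ring
    rw [hx] at h
    linarith
  -- conclude
  intro t ht
  have ht1 : t ∈ Icc (0:ℝ) 1 := ⟨ht.1, by linarith [ht.2]⟩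
  have hsubt : Icc (0:ℝ) t ⊆ Icc (0:ℝ) 1 := Icc_subset_Icc le_rfl ht1.2
  have hIt : uIcc (0:ℝ) t = Icc (0:ℝ) t := uIcc_of_le ht.1
  have hftc : (∫ s in (0:ℝ)..t, u' s) = u t - u 0 := by
    apply intervalIntegral.integral_eq_sub_of_hasDerivAt
    · intro s hs
      rw [hIt] at hs
      exact hu' s (hsubt hs)
    · apply ContinuousOn.intervalIntegrable
      rw [hIt]
      exact hu'cont.mono hsubt
  have hg : ∀ s : ℝ, HasDerivAt (fun s => (s - s^2) * u' 0) ((1 - 2*s) * u' 0) s := by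
    intro s
    have h := ((hasDerivAt_id s).sub (hasDerivAt_pow 2 s)).mul_const (u' 0)
    have e : (1 - 2*s) * u' 0 = (1 - ((2:ℕ):ℝ) * s ^ (2 - 1)) * u' 0 := by norm_num
    rw [e]
    exact h
  have hcomp : (∫ s in (0:ℝ)..t, (1 - 2*s) * u' 0) = (t - t^2) * u' 0 := by
    rw [intervalIntegral.integral_eq_sub_of_hasDerivAt (fun s _ => hg s)
      (by apply Continuous.intervalIntegrable; fun_prop)]
    ring
  have hmonoint : (∫ s in (0:ℝ)..t, (1 - 2*s) * u' 0) ≤ ∫ s in (0:ℝ)..t, u' s := by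
    apply intervalIntegral.integral_mono_on ht.1
    · apply Continuous.intervalIntegrable; fun_prop
    · apply ContinuousOn.intervalIntegrable
      rw [hIt]
      exact hu'cont.mono hsubt
    · intro s hs
      exact hlow s ⟨hs.1, le_trans hs.2 ht.2⟩
  have hnn : 0 ≤ t * (1 - 2*t) := mul_nonneg ht.1 (by linarith [ht.2])
  calc t * (1 - 2 * t) * Real.sqrt (∫ s in (0:ℝ)..1, u' s ^ 2)
      ≤ t * (1 - 2*t) * u' 0 := mul_le_mul_of_nonneg_left hsqrt hnn
    _ ≤ (t - t^2) * u' 0 := by nlinarith [ht.1, ht.2, h0, sq_nonneg t]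
    _ = ∫ s in (0:ℝ)..t, (1 - 2*s) * u' 0 := hcomp.symm
    _ ≤ ∫ s in (0:ℝ)..t, u' s := hmonoint
    _ = u t := by rw [hftc, hu0, sub_zero]
end

section
/- (Invariance of the cone.) Let u ∈ K and define w(t) = ∫₀¹ G(t,s) f(u(s)) g(s) ds for t ∈ [0,1]. Then w is continuously differentiable on [0,1], w(0) = w(1) = 0, w(t) = w(1−t) for all t ∈ [0,1], w is nondecreasing on [0,1/2], and w(t) ≥ φ(t) · (∫₀¹ w'(s)² ds)^{1/2} for all t ∈ [0,1/2]; that is, w ∈ K. -/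
open Set

/-- `φ(t) = t(1-2t)`. -/
noncomputable def phi (t : ℝ) : ℝ := t * (1 - 2 * t)

/-- The `H¹₀` (energetic) norm `‖u‖ = (∫₀¹ u'(t)² dt)^{1/2}`. -/
noncomputable def normH (u : ℝ → ℝ) : ℝ := Real.sqrt (∫ t in (0:ℝ)..1, deriv u t ^ 2)

/-- Membership in the cone `K`: continuously differentiable on `[0,1]`, vanishing at the
endpoints, symmetric about `1/2`, nondecreasing on `[0,1/2]`, and satisfying the Harnack
inequality `u(t) ≥ φ(t)‖u‖` on `[0,1/2]`. -/
def memK (u : ℝ → ℝ) : Prop :=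
  (∀ t ∈ Icc (0:ℝ) 1, DifferentiableAt ℝ u t) ∧
  ContinuousOn (deriv u) (Icc (0:ℝ) 1) ∧
  u 0 = 0 ∧ u 1 = 0 ∧
  (∀ t ∈ Icc (0:ℝ) 1, u t = u (1 - t)) ∧
  MonotoneOn u (Icc (0:ℝ) (1/2)) ∧
  (∀ t ∈ Icc (0:ℝ) (1/2), phi t * normH u ≤ u t)

/-- Green's function of `-u''` with Dirichlet boundary conditions on `[0,1]`. -/
noncomputable def G (t s : ℝ) : ℝ := if s ≤ t then s * (1 - t) else t * (1 - s)

open MeasureTheory intervalIntegral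

lemma G_eq (t s : ℝ) : G t s = min t s - t * s := by
  unfold G
  rcases le_or_gt s t with h | h
  · rw [if_pos h, min_eq_right h]; ring
  · rw [if_neg (not_le.mpr h), min_eq_left h.le]; ring

lemma G_cont (t : ℝ) : Continuous (fun s => G t s) := by
  have : (fun s => G t s) = fun s => min t s - t * s := funext (G_eq t)
  rw [this]
  exact (continuous_const.min continuous_id).sub (continuous_const.mul continuous_id)

lemma G_symm (t s : ℝ) : G (1 - t) (1 - s) = G t s := by
  unfold G
  rcases lt_trichotomy s t with h | h | h
  · rw [if_pos h.le, if_neg (by linarith)]; ring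
  · subst h; rw [if_pos le_rfl, if_pos le_rfl]; ring
  · rw [if_neg (by linarith : ¬ s ≤ t), if_pos (by linarith)]; ring

lemma aux_int {h : ℝ → ℝ} (hInt : IntegrableOn h (Ioc (0:ℝ) 1)) {k : ℝ → ℝ}
    (hk : Continuous k) : IntegrableOn (fun s => k s * h s) (Ioc (0:ℝ) 1) := by
  obtain ⟨C, hC⟩ := (isCompact_Icc (a := (0:ℝ)) (b := 1)).exists_bound_of_continuousOn
    hk.continuousOn
  refine Integrable.mono' (g := fun s => C * |h s|) (hInt.norm.const_mul C)
    (hk.aestronglyMeasurable.mul hInt.aestronglyMeasurable) ?_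
  filter_upwards [ae_restrict_mem measurableSet_Ioc] with s hs
  rw [Real.norm_eq_abs, abs_mul]
  have h1 : |k s| ≤ C := hC s (Ioc_subset_Icc_self hs)
  have := abs_nonneg (h s)
  nlinarith [abs_nonneg (k s)]

lemma hasDerivAt_green {h : ℝ → ℝ} (hInt : IntegrableOn h (Ioc (0:ℝ) 1)) (t₀ : ℝ) :
    HasDerivAt (fun t => ∫ s in (0:ℝ)..1, G t s * h s)
      (∫ s in Ioc (0:ℝ) 1, ((if t₀ < s then 1 else 0) - s) * h s) t₀ := by
  have hμ : (volume.restrict (Ioc (0:ℝ) 1)) {t₀} = 0 :=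
    le_antisymm ((Measure.restrict_apply_le _ _).trans (by simp)) zero_le
  have hne : ∀ᵐ s ∂(volume.restrict (Ioc (0:ℝ) 1)), s ≠ t₀ := by
    rw [ae_iff]
    convert hμ using 2
    ext s; simp
  have key := _root_.hasDerivAt_integral_of_dominated_loc_of_lip
    (μ := volume.restrict (Ioc (0:ℝ) 1))
    (F := fun t s => G t s * h s)
    (F' := fun s => ((if t₀ < s then 1 else 0) - s) * h s)
    (x₀ := t₀) (bound := fun s => 2 * |h s|) (s := Metric.ball t₀ 1) (Metric.ball_mem_nhds t₀ one_pos)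
    ?_ ?_ ?_ ?_ ?_ ?_
  · have := key.2
    have heq : (fun t => ∫ s in (0:ℝ)..1, G t s * h s)
        = fun t => ∫ s in Ioc (0:ℝ) 1, G t s * h s := by
      funext t; exact intervalIntegral.integral_of_le zero_le_one
    rw [heq]
    exact this
  · filter_upwards with t
    exact ((G_cont t).aestronglyMeasurable).mul hInt.aestronglyMeasurable
  · exact aux_int hInt (G_cont t₀)
  · refine AEStronglyMeasurable.mul ?_ hInt.aestronglyMeasurable
    refine Measurable.aestronglyMeasurable ?_
    exact (Measurable.ite measurableSet_Ioi measurable_const measurable_const).sub measurable_id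
  · filter_upwards [ae_restrict_mem measurableSet_Ioc] with s hs
    rw [lipschitzOnWith_iff_dist_le_mul]
    intro x _ y _
    rw [Real.dist_eq, Real.dist_eq]
    have hc : ((Real.nnabs (2 * |h s|)) : ℝ) = 2 * |h s| := by
      rw [Real.coe_nnabs, abs_of_nonneg (by positivity)]
    rw [hc]
    have h1 : G x s * h s - G y s * h s = (G x s - G y s) * h s := by ring
    rw [h1, abs_mul]
    have h2 : |G x s - G y s| ≤ 2 * |x - y| := by
      rw [G_eq, G_eq]
      have h3 : |min x s - min y s| ≤ |x - y| := by
        rcases le_total x s with hx | hx <;> rcases le_total y s with hy | hy <;>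
          simp [min_eq_left, min_eq_right, hx, hy, abs_le] <;>
          cases' abs_le.1 (le_refl |x - y|) with _ _ <;>
          rw [abs_sub_comm] at * <;> constructor <;>
          cases' (abs_le.1 (le_refl |y - x|)) with h4 h5 <;> linarith [abs_nonneg (y - x),
            neg_abs_le (y - x), le_abs_self (y - x), neg_abs_le (x - y), le_abs_self (x - y)]
      have h4 : |x * s - y * s| ≤ |x - y| := by
        have : x * s - y * s = (x - y) * s := by ring
        rw [this, abs_mul]
        have : |s| ≤ 1 := by rw [abs_le]; constructor <;> [linarith [hs.1.le]; exact hs.2]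
        nlinarith [abs_nonneg (x - y)]
      calc |min x s - x * s - (min y s - y * s)|
          ≤ |min x s - min y s| + |x * s - y * s| := by
            have : min x s - x * s - (min y s - y * s) = (min x s - min y s) - (x * s - y * s) := by
              ring
            rw [this]; exact abs_sub _ _
        _ ≤ 2 * |x - y| := by linarith
    nlinarith [abs_nonneg (h s), abs_nonneg (x - y)]
  · exact hInt.norm.const_mul 2
  · filter_upwards [ae_restrict_mem measurableSet_Ioc, hne] with s hs hsne
    rcases lt_or_gt_of_ne hsne.symm with hlt | hgt
    · -- t₀ < s : near t₀, G t s = t * (1 - s)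
      have hev : (fun t => G t s * h s) =ᶠ[nhds t₀] fun t => ((1 - s) * h s) * t := by
        filter_upwards [Iio_mem_nhds hlt] with t ht
        unfold G
        rw [if_neg (not_le.mpr ht)]
        ring
      have hd : HasDerivAt (fun t => ((1 - s) * h s) * t) ((1 - s) * h s) t₀ := by
        simpa using (hasDerivAt_id t₀).const_mul ((1 - s) * h s)
      have h2 : HasDerivAt (fun t => G t s * h s) ((1 - s) * h s) t₀ :=
        hd.congr_of_eventuallyEq hev
      rw [if_pos hlt]
      exact h2
    · -- s < t₀ : near t₀, G t s = s * (1 - t)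
      have hev : (fun t => G t s * h s) =ᶠ[nhds t₀] fun t => s * h s - (s * h s) * t := by
        filter_upwards [Ioi_mem_nhds hgt] with t ht
        unfold G
        rw [if_pos (le_of_lt ht)]
        ring
      have hd : HasDerivAt (fun t => s * h s - (s * h s) * t) (-(s * h s)) t₀ := by
        simpa using ((hasDerivAt_id t₀).const_mul (s * h s)).const_sub (s * h s)
      have h2 : HasDerivAt (fun t => G t s * h s) (-(s * h s)) t₀ :=
        hd.congr_of_eventuallyEq hev
      rw [if_neg (not_lt.mpr hgt.le)]
      simpa [neg_mul, zero_sub] using h2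

/-- Invariance of the cone `K` under `N(u)(t) = ∫₀¹ G(t,s)f(u(s))g(s) ds`. -/
theorem cone_invariance
    (f : ℝ → ℝ) (hf : ContDiff ℝ 1 f)
    (hfmono : MonotoneOn f (Ici (0:ℝ)))
    (hf0 : 0 ≤ f 0) (hfpos : ∀ t : ℝ, 0 < t → 0 < f t)
    (g : ℝ → ℝ) (hgnonneg : ∀ t ∈ Icc (0:ℝ) 1, 0 ≤ g t)
    (hgbdd : ∃ M : ℝ, ∀ t ∈ Icc (0:ℝ) 1, g t ≤ M)
    (hgmeas : Measurable g)
    (hgmono : MonotoneOn g (Icc (0:ℝ) (1/2)))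
    (hgsymm : ∀ t ∈ Icc (0:ℝ) (1/2), g t = g (1 - t))
    (u : ℝ → ℝ) (hu : memK u) :
    memK (fun t => ∫ s in (0:ℝ)..1, G t s * f (u s) * g s) := by
  obtain ⟨hud, hud', hu0, hu1, husym, humono, huharn⟩ := hu
  set w : ℝ → ℝ := fun t => ∫ s in (0:ℝ)..1, G t s * f (u s) * g s with hwdef
  set h : ℝ → ℝ := fun s => f (u s) * g s with hhdef
  have hsub : Icc (0:ℝ) (1/2) ⊆ Icc (0:ℝ) 1 := Icc_subset_Icc le_rfl (by norm_num)
  have hwfun : w = fun t => ∫ s in (0:ℝ)..1, G t s * h s := by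
    funext t
    exact intervalIntegral.integral_congr fun s _ => (mul_assoc _ _ _)
  have hucont : ContinuousOn u (Icc 0 1) :=
    fun t ht => (hud t ht).continuousAt.continuousWithinAt
  have hun : ∀ s ∈ Icc (0:ℝ) 1, 0 ≤ u s := by
    intro s hs
    rcases le_total s (1/2) with h1 | h1
    · have h2 := huharn s ⟨hs.1, h1⟩
      have h3 : 0 ≤ phi s := by unfold phi; nlinarith [hs.1]
      have h4 : 0 ≤ normH u := Real.sqrt_nonneg _
      nlinarith
    · have hs' : 1 - s ∈ Icc (0:ℝ) (1/2) := ⟨by linarith [hs.2], by linarith⟩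
      have h2 := huharn (1 - s) hs'
      have h3 : 0 ≤ phi (1 - s) := by unfold phi; nlinarith [hs.2]
      have h4 : 0 ≤ normH u := Real.sqrt_nonneg _
      have h5 := husym s hs
      nlinarith
  have hfu : ∀ s ∈ Icc (0:ℝ) 1, 0 ≤ f (u s) := fun s hs =>
    hf0.trans (hfmono (mem_Ici.mpr le_rfl) (mem_Ici.mpr (hun s hs)) (hun s hs))
  have hh_nonneg : ∀ s ∈ Icc (0:ℝ) 1, 0 ≤ h s := fun s hs =>
    mul_nonneg (hfu s hs) (hgnonneg s hs)
  have hh_symm : ∀ s ∈ Icc (0:ℝ) 1, h (1 - s) = h s := by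
    intro s hs
    have hus : u (1 - s) = u s := (husym s hs).symm
    have hgs : g (1 - s) = g s := by
      rcases le_total s (1/2) with h1 | h1
      · exact (hgsymm s ⟨hs.1, h1⟩).symm
      · have := hgsymm (1 - s) ⟨by linarith [hs.2], by linarith⟩
        simpa using this
    simp only [hhdef, hus, hgs]
  have hh_mono : MonotoneOn h (Icc (0:ℝ) (1/2)) := by
    intro x hx y hy hxy
    have h1 : f (u x) ≤ f (u y) :=
      hfmono (mem_Ici.mpr (hun x (hsub hx))) (mem_Ici.mpr (hun y (hsub hy)))
        (humono hx hy hxy)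
    have h2 : g x ≤ g y := hgmono hx hy hxy
    exact mul_le_mul h1 h2 (hgnonneg x (hsub hx)) (hfu y (hsub hy))
  -- integrability
  have hfc : ContinuousOn (fun s => f (u s)) (Icc (0:ℝ) 1) :=
    hf.continuous.comp_continuousOn hucont
  have hInt : IntegrableOn h (Ioc (0:ℝ) 1) := by
    obtain ⟨C, hC⟩ := isCompact_Icc.exists_bound_of_continuousOn hfc
    obtain ⟨M, hM⟩ := hgbdd
    have haesm : AEStronglyMeasurable h (volume.restrict (Ioc (0:ℝ) 1)) := by
      refine AEStronglyMeasurable.mul ?_ hgmeas.aestronglyMeasurable.restrict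
      exact ((hfc.mono Ioc_subset_Icc_self).aestronglyMeasurable measurableSet_Ioc)
    refine ⟨haesm, ?_⟩
    refine MeasureTheory.HasFiniteIntegral.restrict_of_bounded
      (C := C * max M 0) (by simp) ?_
    filter_upwards [ae_restrict_mem measurableSet_Ioc] with s hs
    have hs' : s ∈ Icc (0:ℝ) 1 := Ioc_subset_Icc_self hs
    have h1 : ‖f (u s)‖ ≤ C := hC _ hs'
    have h2 : |g s| ≤ max M 0 := by
      rw [abs_of_nonneg (hgnonneg s hs')]
      exact le_max_of_le_left (hM s hs')
    rw [Real.norm_eq_abs, hhdef]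
    simp only
    rw [abs_mul]
    have := abs_nonneg (g s)
    have := abs_nonneg (f (u s))
    rw [Real.norm_eq_abs] at h1
    nlinarith
  have hII : ∀ a b : ℝ, a ∈ Icc (0:ℝ) 1 → b ∈ Icc (0:ℝ) 1 →
      IntervalIntegrable h volume a b := by
    intro a b ha hb
    rw [intervalIntegrable_iff]
    refine hInt.mono_set ?_
    rw [uIoc_eq_union]
    rintro x (hx | hx)
    · exact ⟨lt_of_le_of_lt ha.1 hx.1, hx.2.trans hb.2⟩
    · exact ⟨lt_of_le_of_lt hb.1 hx.1, hx.2.trans ha.2⟩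
  have hIIk : ∀ (k : ℝ → ℝ), Continuous k → ∀ a b : ℝ, a ∈ Icc (0:ℝ) 1 → b ∈ Icc (0:ℝ) 1 →
      IntervalIntegrable (fun s => k s * h s) volume a b := by
    intro k hk a b ha hb
    rw [intervalIntegrable_iff]
    refine (aux_int hInt hk).mono_set ?_
    rw [uIoc_eq_union]
    rintro x (hx | hx)
    · exact ⟨lt_of_le_of_lt ha.1 hx.1, hx.2.trans hb.2⟩
    · exact ⟨lt_of_le_of_lt hb.1 hx.1, hx.2.trans ha.2⟩
  -- derivative
  have hder : ∀ t : ℝ, HasDerivAt w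
      (∫ s in Ioc (0:ℝ) 1, ((if t < s then 1 else 0) - s) * h s) t := by
    intro t
    rw [hwfun]
    exact hasDerivAt_green hInt t
  have hhalfmem : (1/2 : ℝ) ∈ Icc (0:ℝ) 1 := by norm_num
  have hD_eq : ∀ t ∈ Icc (0:ℝ) 1,
      deriv w t = (∫ s in t..1, h s) - ∫ s in (0:ℝ)..1, s * h s := by
    intro t ht
    rw [(hder t).deriv]
    have hi1 : IntegrableOn (fun s => (if t < s then (1:ℝ) else 0) * h s) (Ioc (0:ℝ) 1) := by
      refine Integrable.mono' hInt.norm ?_ ?_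
      · refine AEStronglyMeasurable.mul ?_ hInt.aestronglyMeasurable
        exact ((Measurable.ite measurableSet_Ioi measurable_const
          measurable_const).aestronglyMeasurable)
      · filter_upwards with s
        rw [Real.norm_eq_abs, Real.norm_eq_abs, abs_mul]
        split <;> simp [abs_nonneg]
    have hi2 : IntegrableOn (fun s => s * h s) (Ioc (0:ℝ) 1) := aux_int hInt continuous_id
    have hsplit : (fun s => ((if t < s then (1:ℝ) else 0) - s) * h s)
        = fun s => (if t < s then (1:ℝ) else 0) * h s - s * h s := by
      funext s; ring
    rw [hsplit, MeasureTheory.integral_sub hi1 hi2]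
    congr 1
    · have hind : (fun s => (if t < s then (1:ℝ) else 0) * h s) = (Ioi t).indicator h := by
        funext s
        by_cases hc : t < s
        · simp [hc, indicator_of_mem, mem_Ioi.mpr hc]
        · simp [hc, indicator_of_notMem, hc]
      rw [hind, MeasureTheory.integral_indicator measurableSet_Ioi,
        Measure.restrict_restrict measurableSet_Ioi]
      have hset : Ioi t ∩ Ioc (0:ℝ) 1 = Ioc t 1 := by
        ext x
        simp only [mem_inter_iff, mem_Ioi, mem_Ioc]
        exact ⟨fun ⟨h1, _, h3⟩ => ⟨h1, h3⟩, fun ⟨h1, h3⟩ => ⟨h1, lt_of_le_of_lt ht.1 h1, h3⟩⟩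
      rw [hset, ← intervalIntegral.integral_of_le ht.2]
    · exact (intervalIntegral.integral_of_le zero_le_one).symm
  -- symmetry identities
  have hhalf : ∫ s in (0:ℝ)..(1/2), h s = ∫ s in (1/2:ℝ)..1, h s := by
    have h1 : ∫ s in (0:ℝ)..(1/2 : ℝ), h (1 - s) = ∫ s in (1/2:ℝ)..1, h s := by
      have := intervalIntegral.integral_comp_sub_left (a := (0:ℝ)) (b := (1/2:ℝ)) h 1
      norm_num at this
      convert this using 2 <;> norm_num
    rw [← h1]
    refine intervalIntegral.integral_congr fun s hs => ?_
    rw [uIcc_of_le (by norm_num : (0:ℝ) ≤ 1/2)] at hs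
    exact (hh_symm s (hsub hs)).symm
  have hT : ∫ s in (0:ℝ)..1, h s = 2 * ∫ s in (0:ℝ)..(1/2), h s := by
    have := intervalIntegral.integral_add_adjacent_intervals
      (hII 0 (1/2) (by norm_num) hhalfmem) (hII (1/2) 1 hhalfmem (by norm_num))
    rw [← this, ← hhalf]; ring
  have hCS : ∫ s in (0:ℝ)..1, s * h s = ∫ s in (0:ℝ)..(1/2), h s := by
    have h1 : ∫ s in (0:ℝ)..1, (1 - s) * h (1 - s) = ∫ s in (0:ℝ)..1, s * h s := by
      have := intervalIntegral.integral_comp_sub_left (a := (0:ℝ)) (b := (1:ℝ))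
        (fun s => s * h s) 1
      norm_num at this
      convert this using 2 <;> norm_num
    have h2 : ∫ s in (0:ℝ)..1, (1 - s) * h (1 - s) = ∫ s in (0:ℝ)..1, (1 - s) * h s := by
      refine intervalIntegral.integral_congr fun s hs => ?_
      rw [uIcc_of_le zero_le_one] at hs
      rw [hh_symm s hs]
    have h3 : ∫ s in (0:ℝ)..1, (1 - s) * h s
        = (∫ s in (0:ℝ)..1, h s) - ∫ s in (0:ℝ)..1, s * h s := by
      rw [← intervalIntegral.integral_sub (hII 0 1 (by norm_num) (by norm_num))
        (hIIk (fun s => s) (by exact continuous_id) 0 1 (by norm_num) (by norm_num))]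
      refine intervalIntegral.integral_congr fun s hs => ?_
      ring
    rw [h2, h3] at h1
    rw [hT] at h1
    linarith
  have hderiv_formula : ∀ t ∈ Icc (0:ℝ) 1, deriv w t = ∫ s in t..(1/2 : ℝ), h s := by
    intro t ht
    rw [hD_eq t ht, hCS]
    have hadd := intervalIntegral.integral_add_adjacent_intervals
      (hII t (1/2) ht hhalfmem) (hII (1/2) 1 hhalfmem (by norm_num))
    rw [← hadd, ← hhalf]
    ring
  have hIcc : IntegrableOn h (Icc (0:ℝ) 1) := by
    rwa [integrableOn_Icc_iff_integrableOn_Ioc]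
  have hcontprim : ContinuousOn (fun t => ∫ s in (0:ℝ)..t, h s) (Icc (0:ℝ) 1) := by
    have := intervalIntegral.continuousOn_primitive_interval (a := (0:ℝ)) (b := 1)
      (μ := volume) (f := h) (by rwa [uIcc_of_le zero_le_one])
    rwa [uIcc_of_le zero_le_one] at this
  have hcder : ContinuousOn (deriv w) (Icc (0:ℝ) 1) := by
    refine ContinuousOn.congr (f := fun t => (∫ s in (0:ℝ)..(1/2:ℝ), h s)
      - ∫ s in (0:ℝ)..t, h s) (continuousOn_const.sub hcontprim) ?_
    intro t ht
    rw [hderiv_formula t ht]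
    have hadd := intervalIntegral.integral_add_adjacent_intervals
      (hII 0 t (by norm_num) ht) (hII t (1/2) ht hhalfmem)
    simp only
    rw [← hadd]
    ring
  refine ⟨fun t _ => (hder t).differentiableAt, hcder, ?_, ?_, ?_, ?_, ?_⟩
  · -- w 0 = 0
    show w 0 = 0
    rw [hwfun]
    simp only
    rw [show (∫ s in (0:ℝ)..1, G 0 s * h s) = ∫ s in (0:ℝ)..1, (0:ℝ) from ?_,
      intervalIntegral.integral_zero]
    refine intervalIntegral.integral_congr fun s hs => ?_
    rw [uIcc_of_le zero_le_one] at hs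
    unfold G
    rcases le_or_gt s 0 with hc | hc
    · rw [if_pos hc]
      have : s = 0 := le_antisymm hc hs.1
      rw [this]; ring
    · rw [if_neg (not_le.mpr hc)]; ring
  · -- w 1 = 0
    show w 1 = 0
    rw [hwfun]
    simp only
    rw [show (∫ s in (0:ℝ)..1, G 1 s * h s) = ∫ s in (0:ℝ)..1, (0:ℝ) from ?_,
      intervalIntegral.integral_zero]
    refine intervalIntegral.integral_congr fun s hs => ?_
    rw [uIcc_of_le zero_le_one] at hs
    unfold G
    rw [if_pos hs.2]
    ring
  · -- symmetry
    intro t ht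
    show w t = w (1 - t)
    rw [hwfun]
    simp only
    have h1 : ∫ s in (0:ℝ)..1, G (1-t) (1-s) * h (1-s) = ∫ s in (0:ℝ)..1, G (1-t) s * h s := by
      have := intervalIntegral.integral_comp_sub_left (a := (0:ℝ)) (b := (1:ℝ))
        (fun s => G (1-t) s * h s) 1
      norm_num at this ⊢
      convert this using 2 <;> norm_num
    rw [← h1]
    refine intervalIntegral.integral_congr fun s hs => ?_
    rw [uIcc_of_le zero_le_one] at hs
    rw [G_symm, hh_symm s hs]
  · -- monotone
    refine monotoneOn_of_deriv_nonneg (convex_Icc _ _) ?_ ?_ ?_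
    · intro t ht
      exact (hder t).differentiableAt.continuousAt.continuousWithinAt
    · intro t _
      exact (hder t).differentiableAt.differentiableWithinAt
    · intro t ht
      rw [interior_Icc] at ht
      have ht1 : t ∈ Icc (0:ℝ) 1 := ⟨ht.1.le, by linarith [ht.2]⟩
      rw [hderiv_formula t ht1]
      refine intervalIntegral.integral_nonneg ht.2.le fun s hs => ?_
      exact hh_nonneg s ⟨ht.1.le.trans hs.1, le_trans hs.2 (by norm_num)⟩
  · -- Harnack
    intro t ht
    show phi t * normH w ≤ w t
    have ht1 : t ∈ Icc (0:ℝ) 1 := hsub ht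
    set S := ∫ s in (0:ℝ)..(1/2:ℝ), h s with hSdef
    have hS0 : 0 ≤ S := intervalIntegral.integral_nonneg (by norm_num)
      fun s hs => hh_nonneg s (hsub hs)
    have hnorm : normH w ≤ S := by
      have hbound : ∀ r ∈ Icc (0:ℝ) 1, (deriv w r)^2 ≤ S^2 := by
        intro r hr
        rw [hderiv_formula r hr]
        rcases le_total r (1/2) with h1 | h1
        · have hlow : 0 ≤ ∫ s in r..(1/2:ℝ), h s :=
            intervalIntegral.integral_nonneg h1 fun s hs =>
              hh_nonneg s ⟨hr.1.trans hs.1, hs.2.trans (by norm_num)⟩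
          have hup : (∫ s in r..(1/2:ℝ), h s) ≤ S := by
            have hadd := intervalIntegral.integral_add_adjacent_intervals
              (hII 0 r (by norm_num) hr) (hII r (1/2) hr hhalfmem)
            have h0r : 0 ≤ ∫ s in (0:ℝ)..r, h s :=
              intervalIntegral.integral_nonneg hr.1 fun s hs =>
                hh_nonneg s ⟨hs.1, hs.2.trans hr.2⟩
            linarith [hadd, h0r, hSdef]
          nlinarith
        · have heq : (∫ s in r..(1/2:ℝ), h s) = - ∫ s in (1/2:ℝ)..r, h s :=
            intervalIntegral.integral_symm _ _
          have hlow : 0 ≤ ∫ s in (1/2:ℝ)..r, h s :=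
            intervalIntegral.integral_nonneg h1 fun s hs =>
              hh_nonneg s ⟨le_trans (by norm_num) hs.1, hs.2.trans hr.2⟩
          have hup : (∫ s in (1/2:ℝ)..r, h s) ≤ S := by
            have hadd := intervalIntegral.integral_add_adjacent_intervals
              (hII (1/2) r hhalfmem hr) (hII r 1 hr (by norm_num))
            have hr1 : 0 ≤ ∫ s in r..(1:ℝ), h s :=
              intervalIntegral.integral_nonneg hr.2 fun s hs =>
                hh_nonneg s ⟨le_trans hr.1 hs.1, hs.2⟩
            linarith [hadd, hr1, hhalf]
          rw [heq]; nlinarith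
      have hint2 : IntervalIntegrable (fun r => (deriv w r)^2) volume 0 1 := by
        apply ContinuousOn.intervalIntegrable
        rw [uIcc_of_le zero_le_one]
        exact hcder.pow 2
      have hmono := intervalIntegral.integral_mono_on zero_le_one hint2
        intervalIntegrable_const hbound
      show Real.sqrt (∫ r in (0:ℝ)..1, (deriv w r)^2) ≤ S
      calc Real.sqrt (∫ r in (0:ℝ)..1, (deriv w r)^2) ≤ Real.sqrt (S^2) := by
            apply Real.sqrt_le_sqrt
            simpa using hmono
        _ = S := Real.sqrt_sq hS0
    have hfold : w t = ∫ s in (0:ℝ)..(1/2:ℝ), min t s * h s := by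
      rw [hwfun]
      simp only
      have hsplit := intervalIntegral.integral_add_adjacent_intervals
        (hIIk (fun s => G t s) (G_cont t) 0 (1/2) (by norm_num) hhalfmem)
        (hIIk (fun s => G t s) (G_cont t) (1/2) 1 hhalfmem (by norm_num))
      rw [← hsplit]
      have h1 : ∫ s in (1/2:ℝ)..1, G t s * h s
          = ∫ s in (0:ℝ)..(1/2:ℝ), G t (1-s) * h (1-s) := by
        have := intervalIntegral.integral_comp_sub_left (a := (0:ℝ)) (b := (1/2:ℝ))
          (fun s => G t s * h s) 1
        norm_num at this ⊢
        rw [this]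
      have h2 : ∫ s in (0:ℝ)..(1/2:ℝ), G t (1-s) * h (1-s)
          = ∫ s in (0:ℝ)..(1/2:ℝ), G t (1-s) * h s := by
        refine intervalIntegral.integral_congr fun s hs => ?_
        rw [uIcc_of_le (by norm_num : (0:ℝ) ≤ 1/2)] at hs
        rw [hh_symm s (hsub hs)]
      rw [h1, h2]
      have h3 := intervalIntegral.integral_add
        (hIIk (fun s => G t s) (G_cont t) 0 (1/2) (by norm_num) hhalfmem)
        (hIIk (fun s => G t (1-s)) ((G_cont t).comp (continuous_const.sub continuous_id))
          0 (1/2) (by norm_num) hhalfmem)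
      rw [← h3]
      refine intervalIntegral.integral_congr fun s hs => ?_
      rw [uIcc_of_le (by norm_num : (0:ℝ) ≤ 1/2)] at hs
      have hG2 : G t (1 - s) = t * s := by
        unfold G
        split_ifs with hc
        · have hs2 : s = 1/2 := by
            have := ht.2
            have := hs.2
            linarith
          have ht2 : t = 1/2 := by
            have := ht.2
            linarith [hs.2]
          rw [hs2, ht2]; norm_num
        · ring
      have hG1 := G_eq t s
      rw [hG2, hG1]
      ring
    set s₀ := phi t with hs₀def
    have hphit : s₀ = t * (1 - 2*t) := rfl
    have hs₀0 : 0 ≤ s₀ := by rw [hphit]; nlinarith [ht.1, ht.2]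
    have hs₀t : s₀ ≤ t := by rw [hphit]; nlinarith [ht.1, ht.2]
    have hs₀mem : s₀ ∈ Icc (0:ℝ) (1/2) := ⟨hs₀0, hs₀t.trans ht.2⟩
    have hψcont : Continuous (fun s : ℝ => min t s - s₀) :=
      (continuous_const.min continuous_id).sub continuous_const
    have hmincont : Continuous (fun s : ℝ => min t s) := continuous_const.min continuous_id
    have hI1 : (∫ s in (0:ℝ)..s₀, (min t s - s₀) * h s₀)
        ≤ ∫ s in (0:ℝ)..s₀, (min t s - s₀) * h s := by
      refine intervalIntegral.integral_mono_on hs₀0 ?_ ?_ ?_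
      · exact (hψcont.mul continuous_const).intervalIntegrable _ _
      · exact hIIk _ hψcont 0 s₀ (by norm_num) (hsub hs₀mem)
      · intro s hs
        have hsmem : s ∈ Icc (0:ℝ) (1/2) := ⟨hs.1, hs.2.trans hs₀mem.2⟩
        have h1 : min t s = s := min_eq_right (hs.2.trans hs₀t)
        have h2 : h s ≤ h s₀ := hh_mono hsmem hs₀mem hs.2
        rw [h1]
        nlinarith [hs.2]
    have hI2 : (∫ s in s₀..(1/2:ℝ), (min t s - s₀) * h s₀)
        ≤ ∫ s in s₀..(1/2:ℝ), (min t s - s₀) * h s := by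
      refine intervalIntegral.integral_mono_on hs₀mem.2 ?_ ?_ ?_
      · exact (hψcont.mul continuous_const).intervalIntegrable _ _
      · exact hIIk _ hψcont s₀ (1/2) (hsub hs₀mem) hhalfmem
      · intro s hs
        have hsmem : s ∈ Icc (0:ℝ) (1/2) := ⟨hs₀0.trans hs.1, hs.2⟩
        have h2 : h s₀ ≤ h s := hh_mono hs₀mem hsmem hs.1
        have h3 : 0 ≤ min t s - s₀ := by
          rcases le_total s t with hc | hc
          · rw [min_eq_right hc]; linarith [hs.1]
          · rw [min_eq_left hc]; linarith [hs₀t]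
        have h4 : 0 ≤ h s₀ := hh_nonneg s₀ (hsub hs₀mem)
        nlinarith
    have hsum : (∫ s in (0:ℝ)..s₀, (min t s - s₀) * h s₀)
        + (∫ s in s₀..(1/2:ℝ), (min t s - s₀) * h s₀) = (t^2/2) * h s₀ := by
      rw [intervalIntegral.integral_add_adjacent_intervals (f := fun s => (min t s - s₀) * h s₀)
        ((hψcont.mul continuous_const).intervalIntegrable _ _)
        ((hψcont.mul continuous_const).intervalIntegrable _ _)]
      rw [intervalIntegral.integral_mul_const]
      congr 1
      have e0 : (∫ s in (0:ℝ)..(1/2:ℝ), (min t s - s₀))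
          = (∫ s in (0:ℝ)..(1/2:ℝ), min t s) - s₀ * (1/2) := by
        rw [intervalIntegral.integral_sub (hmincont.intervalIntegrable _ _)
          intervalIntegrable_const]
        rw [intervalIntegral.integral_const]
        simp [smul_eq_mul]
        ring
      have e1 : (∫ s in (0:ℝ)..t, min t s) = t^2/2 := by
        rw [show (∫ s in (0:ℝ)..t, min t s) = ∫ s in (0:ℝ)..t, s from
          intervalIntegral.integral_congr fun s hs => by
            rw [uIcc_of_le ht.1] at hs; exact min_eq_right hs.2]
        rw [integral_id]
        ring
      have e2 : (∫ s in t..(1/2:ℝ), min t s) = (1/2 - t) * t := by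
        rw [show (∫ s in t..(1/2:ℝ), min t s) = ∫ s in t..(1/2:ℝ), t from
          intervalIntegral.integral_congr fun s hs => by
            rw [uIcc_of_le ht.2] at hs; exact min_eq_left hs.1]
        rw [intervalIntegral.integral_const]
        simp
      have e3 := intervalIntegral.integral_add_adjacent_intervals
        (hmincont.intervalIntegrable (μ := volume) 0 t)
        (hmincont.intervalIntegrable (μ := volume) t (1/2))
      rw [e0, ← e3, e1, e2, hphit]
      ring
    have hsum2 : (∫ s in (0:ℝ)..s₀, (min t s - s₀) * h s)
        + (∫ s in s₀..(1/2:ℝ), (min t s - s₀) * h s)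
        = (∫ s in (0:ℝ)..(1/2:ℝ), min t s * h s) - s₀ * S := by
      rw [intervalIntegral.integral_add_adjacent_intervals
        (hIIk _ hψcont 0 s₀ (by norm_num) (hsub hs₀mem))
        (hIIk _ hψcont s₀ (1/2) (hsub hs₀mem) hhalfmem)]
      have e4 : (∫ s in (0:ℝ)..(1/2:ℝ), (min t s - s₀) * h s)
          = (∫ s in (0:ℝ)..(1/2:ℝ), min t s * h s) - ∫ s in (0:ℝ)..(1/2:ℝ), s₀ * h s := by
        rw [← intervalIntegral.integral_sub
          (hIIk _ hmincont 0 (1/2) (by norm_num) hhalfmem)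
          (hIIk _ continuous_const 0 (1/2) (by norm_num) hhalfmem)]
        refine intervalIntegral.integral_congr fun s _ => ?_
        ring
      rw [e4, intervalIntegral.integral_const_mul]
    have h4 : 0 ≤ h s₀ := hh_nonneg s₀ (hsub hs₀mem)
    have hkey : s₀ * S ≤ ∫ s in (0:ℝ)..(1/2:ℝ), min t s * h s := by
      have h5 : 0 ≤ (t^2/2) * h s₀ := mul_nonneg (by positivity) h4
      linarith [hI1, hI2, hsum, hsum2, h5]
    rw [hfold]
    calc phi t * normH w ≤ phi t * S := mul_le_mul_of_nonneg_left hnorm hs₀0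
      _ ≤ _ := hkey
end

section
/- Let r > 0, Ã = (∫₀¹ g(t)² dt)^{1/2} > 0, and assume f(r)/r < π/Ã. Then for every v ∈ K with ‖v‖ = 1 one has ∫₀¹ f(r v(t)) g(t) v(t) dt < r. -/
set_option maxHeartbeats 1000000


open Set intervalIntegral MeasureTheory Real

lemma cs_integral {a b : ℝ} (hab : a ≤ b) {F G : ℝ → ℝ}
    (hF2 : IntervalIntegrable (fun t => F t ^ 2) volume a b)
    (hG2 : IntervalIntegrable (fun t => G t ^ 2) volume a b)
    (hFG : IntervalIntegrable (fun t => F t * G t) volume a b) :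
    (∫ t in a..b, F t * G t) ≤
      Real.sqrt (∫ t in a..b, F t ^ 2) * Real.sqrt (∫ t in a..b, G t ^ 2) := by
  set A := ∫ t in a..b, F t ^ 2 with hA
  set B := ∫ t in a..b, G t ^ 2 with hB
  set C := ∫ t in a..b, F t * G t with hC
  have hA0 : 0 ≤ A := intervalIntegral.integral_nonneg hab (fun t _ => sq_nonneg _)
  have hB0 : 0 ≤ B := intervalIntegral.integral_nonneg hab (fun t _ => sq_nonneg _)
  have key : ∀ x : ℝ, 0 ≤ B * (x * x) + (-2 * C) * x + A := by
    intro x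
    have hint : IntervalIntegrable (fun t => (x * G t - F t) ^ 2) volume a b := by
      have : (fun t => (x * G t - F t) ^ 2) =
          fun t => (x ^ 2) * (G t ^ 2) - (2 * x) * (F t * G t) + F t ^ 2 := by
        funext t; ring
      rw [this]
      exact ((hG2.const_mul _).sub (hFG.const_mul _)).add hF2
    have h0 : 0 ≤ ∫ t in a..b, (x * G t - F t) ^ 2 :=
      intervalIntegral.integral_nonneg hab (fun t _ => sq_nonneg _)
    have heq : (∫ t in a..b, (x * G t - F t) ^ 2) = B * (x * x) + (-2 * C) * x + A := by
      have : (fun t => (x * G t - F t) ^ 2) =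
          fun t => (x ^ 2) * (G t ^ 2) - (2 * x) * (F t * G t) + F t ^ 2 := by
        funext t; ring
      rw [this]
      rw [intervalIntegral.integral_add ((hG2.const_mul _).sub (hFG.const_mul _)) hF2,
        intervalIntegral.integral_sub (hG2.const_mul _) (hFG.const_mul _),
        intervalIntegral.integral_const_mul, intervalIntegral.integral_const_mul]
      ring
    linarith [heq ▸ h0]
  have hd := discrim_le_zero key
  rw [discrim] at hd
  have hC2 : C ^ 2 ≤ A * B := by nlinarith
  calc C ≤ |C| := le_abs_self C
    _ = Real.sqrt (C ^ 2) := (Real.sqrt_sq_eq_abs C).symm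
    _ ≤ Real.sqrt (A * B) := Real.sqrt_le_sqrt hC2
    _ = Real.sqrt A * Real.sqrt B := Real.sqrt_mul hA0 _


lemma poincare {v : ℝ → ℝ}
    (hd : ∀ t ∈ Icc (0:ℝ) 1, DifferentiableAt ℝ v t)
    (hc : ContinuousOn (deriv v) (Icc (0:ℝ) 1))
    (h0 : v 0 = 0) (h1 : v 1 = 0) :
    Real.pi ^ 2 * ∫ t in (0:ℝ)..1, v t ^ 2 ≤ ∫ t in (0:ℝ)..1, deriv v t ^ 2 := by
  have pi_pos := Real.pi_pos
  have hvcont : ContinuousOn v (Icc (0:ℝ) 1) :=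
    fun t ht => (hd t ht).continuousAt.continuousWithinAt
  obtain ⟨C, hC⟩ := isCompact_Icc.exists_bound_of_continuousOn hc
  have hC0 : 0 ≤ C := le_trans (norm_nonneg _) (hC 0 (by constructor <;> norm_num))
  have hlip : ∀ x ∈ Icc (0:ℝ) 1, ∀ y ∈ Icc (0:ℝ) 1, |v y - v x| ≤ C * |y - x| := by
    intro x hx y hy
    exact Convex.norm_image_sub_le_of_norm_deriv_le hd hC (convex_Icc _ _) hx hy
  have hv0 : ∀ t ∈ Icc (0:ℝ) 1, |v t| ≤ C * t := by
    intro t ht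
    have := hlip 0 (by constructor <;> norm_num) t ht
    rw [h0] at this; simpa [abs_of_nonneg ht.1] using this
  have hv1 : ∀ t ∈ Icc (0:ℝ) 1, |v t| ≤ C * (1 - t) := by
    intro t ht
    have := hlip 1 (by constructor <;> norm_num) t ht
    rw [h1] at this
    have h2 : |t - 1| = 1 - t := by rw [abs_sub_comm]; exact abs_of_nonneg (by linarith [ht.2])
    simpa [h2] using this
  have hv2int : ∀ a b, a ∈ Icc (0:ℝ) 1 → b ∈ Icc (0:ℝ) 1 →
      IntervalIntegrable (fun t => v t ^ 2) volume a b := by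
    intro a b ha hb
    exact ((hvcont.mono (uIcc_subset_Icc ha hb)).pow 2).intervalIntegrable
  have hdv2int : ∀ a b, a ∈ Icc (0:ℝ) 1 → b ∈ Icc (0:ℝ) 1 →
      IntervalIntegrable (fun t => deriv v t ^ 2) volume a b := by
    intro a b ha hb
    exact ((hc.mono (uIcc_subset_Icc ha hb)).pow 2).intervalIntegrable
  set D : ℝ := 2 * Real.pi ^ 2 * C ^ 2 + Real.pi * C ^ 2 with hD
  have hD0 : 0 ≤ D := by positivity
  have claim : ∀ ε : ℝ, 0 < ε → ε ≤ 1/2 →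
      Real.pi ^ 2 * (∫ t in (0:ℝ)..1, v t ^ 2) ≤ (∫ t in (0:ℝ)..1, deriv v t ^ 2) + ε * D := by
    intro ε hε hε2
    have hεmem : ε ∈ Icc (0:ℝ) 1 := ⟨le_of_lt hε, by linarith⟩
    have hε1mem : (1 - ε) ∈ Icc (0:ℝ) 1 := ⟨by linarith, by linarith⟩
    have h0mem : (0:ℝ) ∈ Icc (0:ℝ) 1 := by constructor <;> norm_num
    have h1mem : (1:ℝ) ∈ Icc (0:ℝ) 1 := by constructor <;> norm_num
    have hεle : ε ≤ 1 - ε := by linarith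
    set c : ℝ → ℝ := fun t => Real.pi * Real.cos (Real.pi * t) / Real.sin (Real.pi * t)
      with hc_def
    set F : ℝ → ℝ := fun t => v t ^ 2 * c t with hF_def
    set Fd : ℝ → ℝ := fun t => 2 * v t * deriv v t * c t -
      v t ^ 2 * (Real.pi ^ 2 / Real.sin (Real.pi * t) ^ 2) with hFd_def
    have hsinpos : ∀ t ∈ Icc ε (1 - ε), 0 < Real.sin (Real.pi * t) := by
      intro t ht
      apply Real.sin_pos_of_pos_of_lt_pi
      · nlinarith [ht.1]
      · nlinarith [ht.2]
    have hFderiv : ∀ t ∈ Icc ε (1 - ε), HasDerivAt F (Fd t) t := by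
      intro t ht
      have htI : t ∈ Icc (0:ℝ) 1 := ⟨le_trans hεmem.1 ht.1, le_trans ht.2 hε1mem.2⟩
      have hsne : Real.sin (Real.pi * t) ≠ 0 := ne_of_gt (hsinpos t ht)
      have h2 := Real.sin_sq_add_cos_sq (Real.pi * t)
      have hlin : HasDerivAt (fun x : ℝ => Real.pi * x) Real.pi t := by
        simpa using (hasDerivAt_id t).const_mul Real.pi
      have hsin : HasDerivAt (fun x : ℝ => Real.sin (Real.pi * x))
          (Real.cos (Real.pi * t) * Real.pi) t :=
        (Real.hasDerivAt_sin (Real.pi * t)).comp t hlin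
      have hcos : HasDerivAt (fun x : ℝ => Real.cos (Real.pi * x))
          (-Real.sin (Real.pi * t) * Real.pi) t :=
        (Real.hasDerivAt_cos (Real.pi * t)).comp t hlin
      have hcd : HasDerivAt c (-(Real.pi ^ 2 / Real.sin (Real.pi * t) ^ 2)) t := by
        have h := ((hcos.const_mul Real.pi).fun_div hsin hsne)
        refine h.congr_deriv ?_
        rw [show Real.pi * (-Real.sin (Real.pi*t) * Real.pi) * Real.sin (Real.pi*t) -
            Real.pi * Real.cos (Real.pi*t) * (Real.cos (Real.pi*t) * Real.pi)
            = -(Real.pi^2) from by linear_combination (-(Real.pi^2)) * h2, neg_div]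
      have hv : HasDerivAt v (deriv v t) t := (hd t htI).hasDerivAt
      have hsq : HasDerivAt (fun x => v x ^ 2) (2 * v t * deriv v t) t := by
        have := hv.fun_pow 2
        simpa [mul_comm, mul_assoc] using this
      have := hsq.fun_mul hcd
      refine this.congr_deriv ?_
      simp only [hFd_def]
      ring
    have hpoint : ∀ t ∈ Icc ε (1 - ε),
        Fd t ≤ deriv v t ^ 2 - Real.pi ^ 2 * v t ^ 2 := by
      intro t ht
      have hs := hsinpos t ht
      have hsne : Real.sin (Real.pi * t) ≠ 0 := ne_of_gt hs
      have h2 := Real.sin_sq_add_cos_sq (Real.pi * t)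
      have hcc : c t ^ 2 + Real.pi ^ 2 = Real.pi ^ 2 / Real.sin (Real.pi * t) ^ 2 := by
        simp only [hc_def]
        field_simp
        linear_combination h2
      have key : deriv v t ^ 2 - Real.pi ^ 2 * v t ^ 2 - Fd t
          = (deriv v t - v t * c t) ^ 2 := by
        simp only [hFd_def]
        linear_combination (-(v t ^ 2)) * hcc
      nlinarith [sq_nonneg (deriv v t - v t * c t), key]
    have hccont : ContinuousOn c (Icc ε (1 - ε)) := by
      apply ContinuousOn.div
      · exact (continuous_const.mul
          (Real.continuous_cos.comp (continuous_const.mul continuous_id))).continuousOn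
      · exact (Real.continuous_sin.comp (continuous_const.mul continuous_id)).continuousOn
      · exact fun t ht => ne_of_gt (hsinpos t ht)
    have hsub : Icc ε (1-ε) ⊆ Icc (0:ℝ) 1 := Icc_subset_Icc hεmem.1 hε1mem.2
    have hFdint : IntervalIntegrable Fd volume ε (1 - ε) := by
      apply ContinuousOn.intervalIntegrable
      rw [uIcc_of_le hεle]
      apply ContinuousOn.sub
      · exact (((continuousOn_const.mul (hvcont.mono hsub)).mul
          (hc.mono hsub)).mul hccont)
      · apply ContinuousOn.mul ((hvcont.mono hsub).pow 2)
        apply ContinuousOn.div continuousOn_const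
        · exact ((Real.continuous_sin.comp
            (continuous_const.mul continuous_id)).continuousOn.pow 2)
        · exact fun t ht => pow_ne_zero _ (ne_of_gt (hsinpos t ht))
    have hftc : ∫ t in ε..(1 - ε), Fd t = F (1 - ε) - F ε := by
      apply integral_eq_sub_of_hasDerivAt
      · intro t ht; rw [uIcc_of_le hεle] at ht; exact hFderiv t ht
      · exact hFdint
    have hrhsint : IntervalIntegrable (fun t => deriv v t ^ 2 - Real.pi ^ 2 * v t ^ 2)
        volume ε (1 - ε) :=
      (hdv2int ε (1-ε) hεmem hε1mem).sub ((hv2int ε (1-ε) hεmem hε1mem).const_mul _)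
    have hmono : F (1 - ε) - F ε ≤
        (∫ t in ε..(1-ε), deriv v t ^ 2) - Real.pi ^ 2 * ∫ t in ε..(1-ε), v t ^ 2 := by
      rw [← hftc]
      have := integral_mono_on hεle hFdint hrhsint hpoint
      rwa [integral_sub (hdv2int ε (1-ε) hεmem hε1mem)
        ((hv2int ε (1-ε) hεmem hε1mem).const_mul _), intervalIntegral.integral_const_mul] at this
    have hsinlb : 2 * ε ≤ Real.sin (Real.pi * ε) := by
      have h := Real.mul_le_sin (x := Real.pi * ε) (by positivity) (by nlinarith)
      have h2 : 2 / Real.pi * (Real.pi * ε) = 2 * ε := by field_simp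
      linarith [h2 ▸ h]
    have hsp : 0 < Real.sin (Real.pi * ε) := lt_of_lt_of_le (by linarith) hsinlb
    have hcos01 : 0 ≤ Real.cos (Real.pi * ε) ∧ Real.cos (Real.pi * ε) ≤ 1 := by
      refine ⟨Real.cos_nonneg_of_mem_Icc ⟨by nlinarith, by nlinarith⟩, Real.cos_le_one _⟩
    have hcbound : 0 ≤ c ε ∧ c ε ≤ Real.pi / (2 * ε) := by
      constructor
      · exact div_nonneg (by nlinarith [hcos01.1]) (le_of_lt hsp)
      · rw [hc_def]
        rw [div_le_div_iff₀ hsp (by linarith)]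
        nlinarith [mul_le_mul_of_nonneg_left hsinlb (le_of_lt pi_pos),
          mul_le_mul_of_nonneg_right hcos01.2 (by positivity : (0:ℝ) ≤ 2*ε)]
    have hvε : v ε ^ 2 ≤ C ^ 2 * ε ^ 2 := by
      have h := hv0 ε hεmem
      have h2 : v ε ^ 2 ≤ (C * ε) ^ 2 := by
        rw [← sq_abs]; exact pow_le_pow_left₀ (abs_nonneg _) h 2
      linarith [h2, show (C*ε)^2 = C^2*ε^2 from by ring]
    have hvε1 : v (1 - ε) ^ 2 ≤ C ^ 2 * ε ^ 2 := by
      have h := hv1 (1 - ε) hε1mem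
      have h2 : v (1-ε) ^ 2 ≤ (C * (1 - (1 - ε))) ^ 2 := by
        rw [← sq_abs]; exact pow_le_pow_left₀ (abs_nonneg _) h 2
      nlinarith [h2]
    have hFεub : F ε ≤ Real.pi / 2 * C ^ 2 * ε := by
      have h1 : F ε ≤ (C ^ 2 * ε ^ 2) * (Real.pi / (2 * ε)) :=
        mul_le_mul hvε hcbound.2 hcbound.1 (by positivity)
      have h2 : (C ^ 2 * ε ^ 2) * (Real.pi / (2 * ε)) = Real.pi / 2 * C ^ 2 * ε := by
        field_simp
      linarith [h2 ▸ h1]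
    have hFε1lb : -(Real.pi / 2 * C ^ 2 * ε) ≤ F (1 - ε) := by
      have hπ1ε : Real.pi * (1 - ε) = Real.pi - Real.pi * ε := by ring
      have hcval : c (1 - ε) = -(Real.pi * Real.cos (Real.pi * ε) / Real.sin (Real.pi * ε)) := by
        simp only [hc_def, hπ1ε, Real.sin_pi_sub, Real.cos_pi_sub]
        ring
      have hclb : -(Real.pi / (2 * ε)) ≤ c (1 - ε) := by
        rw [hcval, neg_le_neg_iff, div_le_div_iff₀ hsp (by linarith)]
        nlinarith [mul_le_mul_of_nonneg_left hsinlb (le_of_lt pi_pos),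
          mul_le_mul_of_nonneg_right hcos01.2 (by positivity : (0:ℝ) ≤ 2*ε)]
      have key : F (1 - ε) ≥ (C ^ 2 * ε ^ 2) * (-(Real.pi / (2 * ε))) := by
        simp only [hF_def]
        rcases le_or_gt (c (1 - ε)) 0 with hle | hlt
        · calc (C ^ 2 * ε ^ 2) * (-(Real.pi / (2 * ε))) ≤ v (1-ε)^2 * (-(Real.pi / (2 * ε))) := by
                exact mul_le_mul_of_nonpos_right hvε1 (neg_nonpos.mpr (by positivity))
              _ ≤ v (1-ε)^2 * c (1-ε) := by
                apply mul_le_mul_of_nonneg_left hclb (sq_nonneg _)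
        · nlinarith [sq_nonneg (v (1-ε)), hlt, hε]
      have h2 : (C ^ 2 * ε ^ 2) * (-(Real.pi / (2 * ε))) = -(Real.pi / 2 * C ^ 2 * ε) := by
        field_simp
      linarith [h2 ▸ key]
    -- split the integrals over [0,1]
    have hsplit : ∀ (w : ℝ → ℝ), (∀ a b, a ∈ Icc (0:ℝ) 1 → b ∈ Icc (0:ℝ) 1 →
        IntervalIntegrable w volume a b) →
        (∫ t in (0:ℝ)..1, w t) = (∫ t in (0:ℝ)..ε, w t) + (∫ t in ε..(1-ε), w t)
          + (∫ t in (1-ε)..1, w t) := by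
      intro w hw
      rw [integral_add_adjacent_intervals (hw 0 ε h0mem hεmem) (hw ε (1-ε) hεmem hε1mem),
        integral_add_adjacent_intervals (hw 0 (1-ε) h0mem hε1mem) (hw (1-ε) 1 hε1mem h1mem)]
    have hbv : ∀ a b, 0 ≤ a → a ≤ b → b ≤ 1 → (∫ t in a..b, v t ^ 2) ≤ (b - a) * C ^ 2 := by
      intro a b ha hab hb1
      have h := intervalIntegral.norm_integral_le_of_norm_le_const
        (C := C ^ 2) (f := fun t => v t ^ 2) (a := a) (b := b) ?_
      · rw [Real.norm_eq_abs] at h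
        have : |b - a| = b - a := abs_of_nonneg (by linarith)
        calc (∫ t in a..b, v t ^ 2) ≤ |∫ t in a..b, v t ^ 2| := le_abs_self _
          _ ≤ C ^ 2 * |b - a| := h
          _ = (b - a) * C ^ 2 := by rw [this]; ring
      · intro x hx
        rw [uIoc_of_le hab] at hx
        have hxI : x ∈ Icc (0:ℝ) 1 := ⟨le_trans ha (le_of_lt hx.1), le_trans hx.2 hb1⟩
        have hvx := hv0 x hxI
        have h4 : |v x| ≤ C := le_trans hvx (by nlinarith [hxI.2, hC0])
        rw [Real.norm_eq_abs, abs_of_nonneg (sq_nonneg _)]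
        have h5 := pow_le_pow_left₀ (abs_nonneg (v x)) h4 2
        calc (fun t => v t ^ 2) x = v x ^ 2 := rfl
          _ = |v x| ^ 2 := (sq_abs _).symm
          _ ≤ C ^ 2 := h5
    have hbv0ε : (∫ t in (0:ℝ)..ε, v t ^ 2) ≤ ε * C ^ 2 := by
      have := hbv 0 ε le_rfl (le_of_lt hε) (by linarith)
      simpa using this
    have hbv1ε : (∫ t in (1-ε)..1, v t ^ 2) ≤ ε * C ^ 2 := by
      have := hbv (1-ε) 1 (by linarith) (by linarith) le_rfl
      have h2 : (1 : ℝ) - (1 - ε) = ε := by ring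
      rw [h2] at this; exact this
    have hdvnn : ∀ a b, a ∈ Icc (0:ℝ) 1 → b ∈ Icc (0:ℝ) 1 → a ≤ b →
        0 ≤ ∫ t in a..b, deriv v t ^ 2 := by
      intro a b _ _ hab
      exact intervalIntegral.integral_nonneg hab (fun t _ => sq_nonneg _)
    have hsplitv := hsplit _ hv2int
    have hsplitdv := hsplit _ hdv2int
    have hdvmid : (∫ t in ε..(1-ε), deriv v t ^ 2) ≤ ∫ t in (0:ℝ)..1, deriv v t ^ 2 := by
      rw [hsplitdv]
      have h1 := hdvnn 0 ε h0mem hεmem (le_of_lt hε)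
      have h2 := hdvnn (1-ε) 1 hε1mem h1mem (by linarith)
      linarith
    rw [hsplitv]
    have hmid : Real.pi ^ 2 * (∫ t in ε..(1-ε), v t ^ 2) ≤
        (∫ t in (0:ℝ)..1, deriv v t ^ 2) + Real.pi * C ^ 2 * ε := by
      have : F (1 - ε) - F ε ≥ -(Real.pi * C ^ 2 * ε) := by
        have := hFεub; have := hFε1lb; linarith
      linarith [hmono, hdvmid]
    have hpisq : (0:ℝ) < Real.pi ^ 2 := by positivity
    calc Real.pi ^ 2 * ((∫ t in (0:ℝ)..ε, v t ^ 2) + (∫ t in ε..(1-ε), v t ^ 2)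
          + (∫ t in (1-ε)..1, v t ^ 2))
        ≤ Real.pi ^ 2 * (ε * C ^ 2) + Real.pi ^ 2 * (∫ t in ε..(1-ε), v t ^ 2)
          + Real.pi ^ 2 * (ε * C ^ 2) := by nlinarith [hbv0ε, hbv1ε]
      _ ≤ (∫ t in (0:ℝ)..1, deriv v t ^ 2) + ε * D := by
          rw [hD]; nlinarith [hmid]
  -- conclude by letting ε → 0
  apply le_of_forall_pos_le_add
  intro δ hδ
  set ε : ℝ := min (1/2) (δ / (D + 1)) with hε_def
  have hεpos : 0 < ε := lt_min (by norm_num) (by positivity)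
  have hεhalf : ε ≤ 1/2 := min_le_left _ _
  have h := claim ε hεpos hεhalf
  have : ε * D ≤ δ := by
    have h1 : ε ≤ δ / (D + 1) := min_le_right _ _
    have h2 : ε * D ≤ (δ / (D + 1)) * D :=
      mul_le_mul_of_nonneg_right h1 hD0
    have h3 : (δ / (D + 1)) * D ≤ δ := by
      rw [div_mul_eq_mul_div, div_le_iff₀ (by linarith)]
      nlinarith
    exact h2.trans h3
  linarith


theorem main_test
    (f : ℝ → ℝ) (hf : ContDiff ℝ 1 f)
    (hfmono : MonotoneOn f (Ici (0:ℝ)))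
    (hf0 : 0 ≤ f 0) (hfpos : ∀ t : ℝ, 0 < t → 0 < f t)
    (g : ℝ → ℝ) (hgnonneg : ∀ t ∈ Icc (0:ℝ) 1, 0 ≤ g t)
    (hgbdd : ∃ M : ℝ, ∀ t ∈ Icc (0:ℝ) 1, g t ≤ M)
    (hgmeas : Measurable g)
    (r : ℝ) (hr : 0 < r)
    (Atil : ℝ) (hAtil : Atil = Real.sqrt (∫ t in (0:ℝ)..1, g t ^ 2)) (hApos : 0 < Atil)
    (hH1 : f r / r < Real.pi / Atil)
    (v : ℝ → ℝ)
    (hd : ∀ t ∈ Icc (0:ℝ) 1, DifferentiableAt ℝ v t)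
    (hdc : ContinuousOn (deriv v) (Icc (0:ℝ) 1))
    (h0 : v 0 = 0) (h1 : v 1 = 0)
    (hsym : ∀ t ∈ Icc (0:ℝ) 1, v t = v (1 - t))
    (hmono : MonotoneOn v (Icc (0:ℝ) (1/2)))
    (hharn : ∀ t ∈ Icc (0:ℝ) (1/2), t * (1 - 2*t) ≤ v t)
    (hn : (∫ t in (0:ℝ)..1, deriv v t ^ 2) = 1) :
    (∫ t in (0:ℝ)..1, f (r * v t) * g t * v t) < r := by
  have pi_pos := Real.pi_pos
  have hvcont : ContinuousOn v (Icc (0:ℝ) 1) :=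
    fun t ht => (hd t ht).continuousAt.continuousWithinAt
  obtain ⟨M, hM⟩ := hgbdd
  have h0I : (0:ℝ) ∈ Icc (0:ℝ) 1 := by constructor <;> norm_num
  have h1I : (1:ℝ) ∈ Icc (0:ℝ) 1 := by constructor <;> norm_num
  have hhalfI : (1/2:ℝ) ∈ Icc (0:ℝ) 1 := by constructor <;> norm_num
  have hM0 : 0 ≤ M := le_trans (hgnonneg 0 h0I) (hM 0 h0I)
  -- v nonneg
  have hvnn2 : ∀ t ∈ Icc (0:ℝ) (1/2), 0 ≤ v t := by
    intro t ht
    have := hharn t ht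
    nlinarith [ht.1, ht.2]
  have hvnn : ∀ t ∈ Icc (0:ℝ) 1, 0 ≤ v t := by
    intro t ht
    rcases le_or_gt t (1/2) with h | h
    · exact hvnn2 t ⟨ht.1, h⟩
    · rw [hsym t ht]
      exact hvnn2 (1 - t) ⟨by linarith [ht.2], by linarith⟩
  -- v ≤ 1
  have hdvint : ∀ a b, a ∈ Icc (0:ℝ) 1 → b ∈ Icc (0:ℝ) 1 →
      IntervalIntegrable (deriv v) volume a b :=
    fun a b ha hb => ((hdc.mono (uIcc_subset_Icc ha hb))).intervalIntegrable
  have hdv2int : ∀ a b, a ∈ Icc (0:ℝ) 1 → b ∈ Icc (0:ℝ) 1 →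
      IntervalIntegrable (fun t => deriv v t ^ 2) volume a b :=
    fun a b ha hb => ((hdc.mono (uIcc_subset_Icc ha hb)).pow 2).intervalIntegrable
  have hv2int : IntervalIntegrable (fun t => v t ^ 2) volume 0 1 := by
    apply ContinuousOn.intervalIntegrable
    rw [uIcc_of_le (by norm_num : (0:ℝ) ≤ 1)]
    exact hvcont.pow 2
  have hdvhalf : (∫ t in (0:ℝ)..(1/2), deriv v t ^ 2) ≤ 1 := by
    have hsplit := integral_add_adjacent_intervals (hdv2int 0 (1/2) h0I hhalfI)
      (hdv2int (1/2) 1 hhalfI h1I)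
    have hnn : 0 ≤ ∫ t in (1/2:ℝ)..1, deriv v t ^ 2 :=
      intervalIntegral.integral_nonneg (by norm_num) (fun t _ => sq_nonneg _)
    linarith [hn, hsplit, hnn]
  have hvhalf : v (1/2) ≤ 1 := by
    have hftc : (∫ t in (0:ℝ)..(1/2), deriv v t) = v (1/2) - v 0 := by
      apply integral_eq_sub_of_hasDerivAt
      · intro t ht
        rw [uIcc_of_le (by norm_num : (0:ℝ) ≤ 1/2)] at ht
        exact (hd t ⟨ht.1, le_trans ht.2 (by norm_num)⟩).hasDerivAt
      · exact hdvint 0 (1/2) h0I hhalfI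
    have hcs := cs_integral (a := 0) (b := 1/2) (by norm_num)
      (F := deriv v) (G := fun _ => (1:ℝ))
      (hdv2int 0 (1/2) h0I hhalfI)
      (by simpa using intervalIntegrable_const (μ := volume) (a := (0:ℝ)) (b := 1/2) (c := (1:ℝ)))
      (by simpa using hdvint 0 (1/2) h0I hhalfI)
    simp only [mul_one, one_pow] at hcs
    have h12 : (∫ _t in (0:ℝ)..(1/2), (1:ℝ)) = 1/2 := by simp
    rw [h12] at hcs
    have hs1 : Real.sqrt (∫ t in (0:ℝ)..(1/2), deriv v t ^ 2) ≤ 1 :=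
      le_trans (Real.sqrt_le_sqrt hdvhalf) (le_of_eq Real.sqrt_one)
    have hs2 : Real.sqrt (1/2 : ℝ) ≤ 1 :=
      le_trans (Real.sqrt_le_sqrt (by norm_num)) (le_of_eq Real.sqrt_one)
    have := hftc
    rw [h0, sub_zero] at this
    rw [← this]
    calc (∫ t in (0:ℝ)..(1/2), deriv v t)
        ≤ Real.sqrt (∫ t in (0:ℝ)..(1/2), deriv v t ^ 2) * Real.sqrt (1/2) := hcs
      _ ≤ 1 * 1 := by
          apply mul_le_mul hs1 hs2 (Real.sqrt_nonneg _) (by norm_num)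
      _ = 1 := by norm_num
  have hvle : ∀ t ∈ Icc (0:ℝ) 1, v t ≤ 1 := by
    intro t ht
    rcases le_or_gt t (1/2) with h | h
    · exact le_trans (hmono ⟨ht.1, h⟩ ⟨by norm_num, le_refl _⟩ h) hvhalf
    · rw [hsym t ht]
      refine le_trans (hmono ⟨by linarith [ht.2], by linarith⟩
        ⟨by norm_num, le_refl _⟩ (by linarith)) hvhalf
  -- integrability of products with g
  have hmeasIoc : MeasurableSet (Ioc (0:ℝ) 1) := measurableSet_Ioc
  have hIocsub : Ioc (0:ℝ) 1 ⊆ Icc 0 1 := Ioc_subset_Icc_self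
  have hconst_int : ∀ B : ℝ, IntegrableOn (fun _ : ℝ => B) (Ioc (0:ℝ) 1) volume := by
    intro B
    apply (integrableOn_const_iff).mpr
    right
    rw [Real.volume_Ioc]
    exact ENNReal.ofReal_lt_top
  have hint : ∀ (φ : ℝ → ℝ) (B : ℝ), ContinuousOn φ (Icc (0:ℝ) 1) →
      (∀ t ∈ Icc (0:ℝ) 1, |φ t| ≤ B) →
      IntervalIntegrable (fun t => g t * φ t) volume 0 1 := by
    intro φ B hφ hB
    rw [intervalIntegrable_iff_integrableOn_Ioc_of_le (by norm_num)]
    apply Integrable.mono' (hconst_int (M * B))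
    · exact (hgmeas.aestronglyMeasurable.restrict).mul
        ((hφ.mono hIocsub).aestronglyMeasurable hmeasIoc)
    · filter_upwards [ae_restrict_mem hmeasIoc] with x hx
      have hxI := hIocsub hx
      rw [Real.norm_eq_abs, abs_mul, abs_of_nonneg (hgnonneg x hxI)]
      have h1 := hM x hxI
      have h2 := hB x hxI
      have h3 := hgnonneg x hxI
      have h4 : 0 ≤ B := le_trans (abs_nonneg _) h2
      nlinarith [abs_nonneg (φ x)]
  have hgv_int : IntervalIntegrable (fun t => g t * v t) volume 0 1 :=
    hint v 1 hvcont (fun t ht => abs_le.mpr ⟨by linarith [hvnn t ht], hvle t ht⟩)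
  have hfr0 : 0 < f r := hfpos r hr
  have hfrv_nn : ∀ t ∈ Icc (0:ℝ) 1, 0 ≤ f (r * v t) := by
    intro t ht
    refine le_trans hf0 (hfmono (mem_Ici.mpr le_rfl)
      (mem_Ici.mpr (mul_nonneg hr.le (hvnn t ht))) (mul_nonneg hr.le (hvnn t ht)))
  have hfrv_le : ∀ t ∈ Icc (0:ℝ) 1, f (r * v t) ≤ f r := by
    intro t ht
    refine hfmono (mem_Ici.mpr (mul_nonneg hr.le (hvnn t ht))) (mem_Ici.mpr hr.le) ?_
    nlinarith [hvle t ht, hvnn t ht]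
  have hφcont : ContinuousOn (fun t => f (r * v t) * v t) (Icc (0:ℝ) 1) :=
    (hf.continuous.comp_continuousOn (continuousOn_const.mul hvcont)).mul hvcont
  have hmain_int : IntervalIntegrable (fun t => g t * (f (r * v t) * v t)) volume 0 1 := by
    apply hint _ (f r) hφcont
    intro t ht
    rw [abs_of_nonneg (mul_nonneg (hfrv_nn t ht) (hvnn t ht))]
    nlinarith [hfrv_le t ht, hvnn t ht, hvle t ht, hfrv_nn t ht]
  have hg2_int : IntervalIntegrable (fun t => g t ^ 2) volume 0 1 := by
    rw [intervalIntegrable_iff_integrableOn_Ioc_of_le (by norm_num)]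
    apply Integrable.mono' (hconst_int (M ^ 2))
    · exact ((hgmeas.pow_const 2).aestronglyMeasurable.restrict)
    · filter_upwards [ae_restrict_mem hmeasIoc] with x hx
      have hxI := hIocsub hx
      rw [Real.norm_eq_abs, abs_of_nonneg (sq_nonneg _)]
      nlinarith [hgnonneg x hxI, hM x hxI]
  -- main chain
  have hrw : (fun t => f (r * v t) * g t * v t) = fun t => g t * (f (r * v t) * v t) := by
    funext t; ring
  rw [hrw]
  have hstep1 : (∫ t in (0:ℝ)..1, g t * (f (r * v t) * v t))
      ≤ ∫ t in (0:ℝ)..1, f r * (g t * v t) := by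
    apply integral_mono_on (by norm_num) hmain_int (hgv_int.const_mul (f r))
    intro t ht
    have h1 := hfrv_le t ht
    have h2 := hgnonneg t ht
    have h3 := hvnn t ht
    nlinarith [mul_nonneg (mul_nonneg (sub_nonneg.mpr h1) h2) h3]
  rw [intervalIntegral.integral_const_mul] at hstep1
  have hcs := cs_integral (a := 0) (b := 1) (by norm_num) hg2_int
    (by rw [intervalIntegrable_iff_integrableOn_Ioc_of_le (by norm_num)] at hv2int ⊢; exact hv2int)
    hgv_int
  have hpoin : Real.pi ^ 2 * ∫ t in (0:ℝ)..1, v t ^ 2 ≤ ∫ t in (0:ℝ)..1, deriv v t ^ 2 :=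
    poincare hd hdc h0 h1
  rw [hn] at hpoin
  have hv2nn : 0 ≤ ∫ t in (0:ℝ)..1, v t ^ 2 :=
    intervalIntegral.integral_nonneg (by norm_num) (fun t _ => sq_nonneg _)
  have hsv : Real.sqrt (∫ t in (0:ℝ)..1, v t ^ 2) ≤ 1 / Real.pi := by
    have h1 : (∫ t in (0:ℝ)..1, v t ^ 2) ≤ (1 / Real.pi) ^ 2 := by
      rw [div_pow, one_pow]
      rw [le_div_iff₀ (by positivity)]
      linarith [hpoin]
    calc Real.sqrt (∫ t in (0:ℝ)..1, v t ^ 2) ≤ Real.sqrt ((1/Real.pi)^2) :=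
          Real.sqrt_le_sqrt h1
      _ = 1 / Real.pi := Real.sqrt_sq (by positivity)
  have hchain : (∫ t in (0:ℝ)..1, g t * v t) ≤ Atil * (1 / Real.pi) := by
    calc (∫ t in (0:ℝ)..1, g t * v t)
        ≤ Real.sqrt (∫ t in (0:ℝ)..1, g t ^ 2) * Real.sqrt (∫ t in (0:ℝ)..1, v t ^ 2) := hcs
      _ = Atil * Real.sqrt (∫ t in (0:ℝ)..1, v t ^ 2) := by rw [hAtil]
      _ ≤ Atil * (1 / Real.pi) := by
          exact mul_le_mul_of_nonneg_left hsv (by rw [hAtil]; exact Real.sqrt_nonneg _)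
  have hfinal : f r * (Atil * (1 / Real.pi)) < r := by
    have h5 : f r * Atil < Real.pi * r := by
      have := (div_lt_div_iff₀ hr hApos).mp hH1
      linarith
    rw [show f r * (Atil * (1/Real.pi)) = (f r * Atil) / Real.pi from by ring]
    rw [div_lt_iff₀ pi_pos]
    linarith
  calc (∫ t in (0:ℝ)..1, g t * (f (r * v t) * v t))
      ≤ f r * ∫ t in (0:ℝ)..1, g t * v t := hstep1
    _ ≤ f r * (Atil * (1 / Real.pi)) := mul_le_mul_of_nonneg_left hchain hfr0.le
    _ < r := hfinal


/-- Lower estimate at radius `r`: under `f(r)/r < π/Ã`, the fibering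
derivative is positive at the inner radius. -/
theorem fibering_positive_at_r
    (f : ℝ → ℝ) (hf : ContDiff ℝ 1 f)
    (hfmono : MonotoneOn f (Ici (0:ℝ)))
    (hf0 : 0 ≤ f 0) (hfpos : ∀ t : ℝ, 0 < t → 0 < f t)
    (g : ℝ → ℝ) (hgnonneg : ∀ t ∈ Icc (0:ℝ) 1, 0 ≤ g t)
    (hgbdd : ∃ M : ℝ, ∀ t ∈ Icc (0:ℝ) 1, g t ≤ M)
    (hgmeas : Measurable g)
    (hgmono : MonotoneOn g (Icc (0:ℝ) (1/2)))
    (hgsymm : ∀ t ∈ Icc (0:ℝ) (1/2), g t = g (1 - t))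
    (r : ℝ) (hr : 0 < r)
    (Atil : ℝ) (hAtil : Atil = Real.sqrt (∫ t in (0:ℝ)..1, g t ^ 2)) (hApos : 0 < Atil)
    (hH1 : f r / r < Real.pi / Atil) :
    ∀ v : ℝ → ℝ, memK v → normH v = 1 →
      (∫ t in (0:ℝ)..1, f (r * v t) * g t * v t) < r := by
  intro v hv hnv
  obtain ⟨hd, hdc, h0, h1, hsym, hmono, hharn⟩ := hv
  have hnn : 0 ≤ ∫ t in (0:ℝ)..1, deriv v t ^ 2 :=
    intervalIntegral.integral_nonneg (by norm_num) (fun t _ => sq_nonneg _)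
  have hnv' : Real.sqrt (∫ t in (0:ℝ)..1, deriv v t ^ 2) = 1 := hnv
  have hn : (∫ t in (0:ℝ)..1, deriv v t ^ 2) = 1 := by
    have hsq := Real.sq_sqrt hnn
    rw [hnv'] at hsq
    simpa using hsq.symm
  have hharn' : ∀ t ∈ Icc (0:ℝ) (1/2), t * (1 - 2*t) ≤ v t := by
    intro t ht
    have h := hharn t ht
    rw [hnv, mul_one] at h
    simpa [phi] using h
  exact main_test f hf hfmono hf0 hfpos g hgnonneg hgbdd hgmeas r hr Atil hAtil hApos hH1
    v hd hdc h0 h1 hsym hmono hharn' hn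
end
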